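/- arXiv:1801.04485 — 5 statements merged into one kernel-verified Lean document; each statement's English description precedes it below -/
import Mathlib

section
/- For every fixed x > 0 and all n, m ≥ 1, the persistence probabilities satisfy the supermultiplicativity estimate P_x(T_0 > n+m) ≥ P_x(T_0 > n)·P_x(X_n ≥ x)·P_x(T_0 > m). -/
open MeasureTheory ProbabilityTheory Filter Set Real
open scoped ENNReal NNReal

noncomputable section


lemma integrable_of_bound {α : Type*} [MeasurableSpace α] (ν : Measure α) [IsFiniteMeasure ν]
    (C : ℝ) {f : α → ℝ} (hf : Measurable f) (h : ∀ x, |f x| ≤ C) : Integrable f ν :=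
  Integrable.mono' (integrable_const C) hf.aestronglyMeasurable
    (Filter.Eventually.of_forall fun x => by simpa [Real.norm_eq_abs] using h x)

lemma harris_one (ν : Measure ℝ) [IsProbabilityMeasure ν] {f g : ℝ → ℝ}
    (hf : Measurable f) (hg : Measurable g) (hfm : Monotone f) (hgm : Monotone g)
    (hf1 : ∀ x, |f x| ≤ 1) (hg1 : ∀ x, |g x| ≤ 1) :
    (∫ x, f x ∂ν) * ∫ x, g x ∂ν ≤ ∫ x, f x * g x ∂ν := by
  have habs : ∀ (F G : ℝ → ℝ), (∀ x, |F x| ≤ 1) → (∀ x, |G x| ≤ 1) → ∀ u v : ℝ,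
      |F u * G v| ≤ 1 := by
    intro F G hF1 hG1 u v
    calc |F u * G v| = |F u| * |G v| := abs_mul _ _
    _ ≤ 1 * 1 := mul_le_mul (hF1 _) (hG1 _) (abs_nonneg _) zero_le_one
    _ = 1 := one_mul 1
  have key : (0:ℝ) ≤ ∫ z : ℝ × ℝ, (f z.1 - f z.2) * (g z.1 - g z.2) ∂(ν.prod ν) := by
    refine integral_nonneg fun z => ?_
    rcases le_total z.2 z.1 with h | h
    · exact mul_nonneg (sub_nonneg.2 (hfm h)) (sub_nonneg.2 (hgm h))
    · rw [← neg_sub (f z.2), ← neg_sub (g z.2), neg_mul_neg]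
      exact mul_nonneg (sub_nonneg.2 (hfm h)) (sub_nonneg.2 (hgm h))
  have hfst : ∫ z : ℝ × ℝ, f z.1 * g z.1 ∂(ν.prod ν) = ∫ x, f x * g x ∂ν := by
    have h := integral_map (f := fun x => f x * g x)
      (measurable_fst.aemeasurable : AEMeasurable (Prod.fst) (ν.prod ν))
      (hf.mul hg).aestronglyMeasurable
    rw [Measure.map_fst_prod] at h
    simpa using h.symm
  have hsnd : ∫ z : ℝ × ℝ, f z.2 * g z.2 ∂(ν.prod ν) = ∫ x, f x * g x ∂ν := by
    have h := integral_map (f := fun x => f x * g x)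
      (measurable_snd.aemeasurable : AEMeasurable (Prod.snd) (ν.prod ν))
      (hf.mul hg).aestronglyMeasurable
    rw [Measure.map_snd_prod] at h
    simpa using h.symm
  have I1 : Integrable (fun z : ℝ × ℝ => f z.1 * g z.1 + f z.2 * g z.2) (ν.prod ν) := by
    refine integrable_of_bound _ 2
      (((hf.comp measurable_fst).mul (hg.comp measurable_fst)).add
        ((hf.comp measurable_snd).mul (hg.comp measurable_snd))) fun z => ?_
    calc |f z.1 * g z.1 + f z.2 * g z.2| ≤ |f z.1 * g z.1| + |f z.2 * g z.2| := abs_add_le _ _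
    _ ≤ 1 + 1 := add_le_add (habs f g hf1 hg1 _ _) (habs f g hf1 hg1 _ _)
    _ = 2 := by norm_num
  have I2 : Integrable (fun z : ℝ × ℝ => f z.1 * g z.2 + g z.1 * f z.2) (ν.prod ν) := by
    refine integrable_of_bound _ 2
      (((hf.comp measurable_fst).mul (hg.comp measurable_snd)).add
        ((hg.comp measurable_fst).mul (hf.comp measurable_snd))) fun z => ?_
    calc |f z.1 * g z.2 + g z.1 * f z.2| ≤ |f z.1 * g z.2| + |g z.1 * f z.2| := abs_add_le _ _
    _ ≤ 1 + 1 := add_le_add (habs f g hf1 hg1 _ _) (habs g f hg1 hf1 _ _)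
    _ = 2 := by norm_num
  have Ia : Integrable (fun z : ℝ × ℝ => f z.1 * g z.1) (ν.prod ν) :=
    integrable_of_bound _ 1 ((hf.comp measurable_fst).mul (hg.comp measurable_fst))
      fun z => habs f g hf1 hg1 _ _
  have Ib : Integrable (fun z : ℝ × ℝ => f z.2 * g z.2) (ν.prod ν) :=
    integrable_of_bound _ 1 ((hf.comp measurable_snd).mul (hg.comp measurable_snd))
      fun z => habs f g hf1 hg1 _ _
  have Ic : Integrable (fun z : ℝ × ℝ => f z.1 * g z.2) (ν.prod ν) :=
    integrable_of_bound _ 1 ((hf.comp measurable_fst).mul (hg.comp measurable_snd))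
      fun z => habs f g hf1 hg1 _ _
  have Id : Integrable (fun z : ℝ × ℝ => g z.1 * f z.2) (ν.prod ν) :=
    integrable_of_bound _ 1 ((hg.comp measurable_fst).mul (hf.comp measurable_snd))
      fun z => habs g f hg1 hf1 _ _
  have expand : ∫ z : ℝ × ℝ, (f z.1 - f z.2) * (g z.1 - g z.2) ∂(ν.prod ν)
      = (∫ x, f x * g x ∂ν) + (∫ x, f x * g x ∂ν)
        - ((∫ x, f x ∂ν) * (∫ x, g x ∂ν) + (∫ x, f x ∂ν) * (∫ x, g x ∂ν)) := by
    have h1 : (fun z : ℝ × ℝ => (f z.1 - f z.2) * (g z.1 - g z.2))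
        = fun z : ℝ × ℝ => (f z.1 * g z.1 + f z.2 * g z.2) - (f z.1 * g z.2 + g z.1 * f z.2) := by
      funext z; ring
    rw [h1, integral_sub I1 I2, integral_add Ia Ib, integral_add Ic Id,
      hfst, hsnd, integral_prod_mul f g, integral_prod_mul g f]
    ring
  rw [expand] at key
  linarith

lemma harris_pi : ∀ (n : ℕ) (μ : Fin n → Measure ℝ), (∀ i, IsProbabilityMeasure (μ i)) →
    ∀ (f g : (Fin n → ℝ) → ℝ), Measurable f → Measurable g → Monotone f → Monotone g →
    (∀ v, |f v| ≤ 1) → (∀ v, |g v| ≤ 1) →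
    (∫ v, f v ∂Measure.pi μ) * ∫ v, g v ∂Measure.pi μ ≤ ∫ v, f v * g v ∂Measure.pi μ := by
  intro n
  induction n with
  | zero =>
    intro μ hd f g _ _ _ _ _ _
    haveI := hd
    haveI : IsProbabilityMeasure (Measure.pi μ) := inferInstance
    simp only [integral_unique, measure_univ, ENNReal.toReal_one, probReal_univ, one_smul]
    exact le_refl _
  | succ n ih =>
    intro μ hd f g hf hg hfm hgm hf1 hg1
    haveI := hd
    set ν : Fin n → Measure ℝ := fun j => μ ((0 : Fin (n+1)).succAbove j) with hν
    haveI : ∀ j, IsProbabilityMeasure (ν j) := fun j => hd _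
    set e := MeasurableEquiv.piFinSuccAbove (fun _ : Fin (n+1) => ℝ) 0 with he
    have hmp : MeasurePreserving e (Measure.pi μ) ((μ 0).prod (Measure.pi ν)) :=
      measurePreserving_piFinSuccAbove μ 0
    have hint : ∀ (h : (Fin (n+1) → ℝ) → ℝ),
        ∫ z, h (e.symm z) ∂((μ 0).prod (Measure.pi ν)) = ∫ v, h v ∂Measure.pi μ :=
      fun h => (hmp.symm e).integral_comp' h
    -- e.symm as insertNth
    have hesymm : ∀ (t : ℝ) (y : Fin n → ℝ), e.symm (t, y) = Fin.cons t y := by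
      intro t y
      show (Fin.insertNthEquiv (fun _ : Fin (n+1) => ℝ) 0) (t, y) = Fin.cons t y
      simp [Fin.insertNthEquiv, Fin.insertNth_zero']
    have hconsm : Measurable (fun z : ℝ × (Fin n → ℝ) => (Fin.cons z.1 z.2 : Fin (n+1) → ℝ)) := by
      rw [measurable_pi_iff]
      intro j
      induction j using Fin.cases with
      | zero => simpa using measurable_fst
      | succ k =>
        have hk : Measurable fun z : ℝ × (Fin n → ℝ) => z.2 k :=
          (measurable_pi_apply k).comp measurable_snd
        simpa using hk
    have hconsmono : ∀ (t t' : ℝ) (y y' : Fin n → ℝ), t ≤ t' → y ≤ y' →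
        (Fin.cons t y : Fin (n+1) → ℝ) ≤ Fin.cons t' y' := by
      intro t t' y y' ht hy j
      induction j using Fin.cases with
      | zero => simpa using ht
      | succ k => simpa using hy k
    haveI : IsProbabilityMeasure (μ 0) := hd 0
    haveI : IsProbabilityMeasure (Measure.pi ν) := inferInstance
    have hrw : ∀ h : (Fin (n+1) → ℝ) → ℝ,
        (fun z : ℝ × (Fin n → ℝ) => h (e.symm z)) = fun z => h (Fin.cons z.1 z.2) := by
      intro h; funext z
      cases z with
      | mk t y => exact congrArg h (hesymm t y)
    have hsec : ∀ (h : (Fin (n+1) → ℝ) → ℝ), Measurable h → ∀ t : ℝ,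
        Measurable (fun y : Fin n → ℝ => h (Fin.cons t y)) := by
      intro h hh t
      exact (hh.comp hconsm).comp measurable_prodMk_left
    have hImeas : ∀ (h : (Fin (n+1) → ℝ) → ℝ), Measurable h →
        Measurable (fun t => ∫ y, h (Fin.cons t y) ∂Measure.pi ν) := by
      intro h hh
      exact ((hh.comp hconsm).stronglyMeasurable.integral_prod_right').measurable
    have hIbd : ∀ (h : (Fin (n+1) → ℝ) → ℝ), (∀ v, |h v| ≤ 1) → ∀ t : ℝ,
        |∫ y, h (Fin.cons t y) ∂Measure.pi ν| ≤ 1 := by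
      intro h hh t
      have := norm_integral_le_of_norm_le_const (μ := Measure.pi ν) (C := 1)
        (f := fun y => h (Fin.cons t y))
        (Filter.Eventually.of_forall fun y => by simpa [Real.norm_eq_abs] using hh _)
      simpa [Real.norm_eq_abs, measure_univ] using this
    have hsecint : ∀ (h : (Fin (n+1) → ℝ) → ℝ), Measurable h → (∀ v, |h v| ≤ 1) → ∀ t : ℝ,
        Integrable (fun y => h (Fin.cons t y)) (Measure.pi ν) := by
      intro h hh h1 t
      exact integrable_of_bound _ 1 (hsec h hh t) fun y => h1 _
    have hImono : ∀ (h : (Fin (n+1) → ℝ) → ℝ), Measurable h → Monotone h → (∀ v, |h v| ≤ 1) →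
        Monotone (fun t => ∫ y, h (Fin.cons t y) ∂Measure.pi ν) := by
      intro h hh hm h1 t t' htt
      exact integral_mono (hsecint h hh h1 t) (hsecint h hh h1 t')
        (fun y => hm (hconsmono t t' y y htt le_rfl))
    have hIprod : ∀ (h : (Fin (n+1) → ℝ) → ℝ), Measurable h → (∀ v, |h v| ≤ 1) →
        Integrable (fun z : ℝ × (Fin n → ℝ) => h (Fin.cons z.1 z.2))
          ((μ 0).prod (Measure.pi ν)) := by
      intro h hh h1
      exact integrable_of_bound _ 1 (hh.comp hconsm) fun z => h1 _
    have hfub : ∀ (h : (Fin (n+1) → ℝ) → ℝ), Measurable h → (∀ v, |h v| ≤ 1) →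
        ∫ v, h v ∂Measure.pi μ = ∫ t, ∫ y, h (Fin.cons t y) ∂Measure.pi ν ∂(μ 0) := by
      intro h hh h1
      rw [← hint h, hrw h]
      exact integral_prod _ (hIprod h hh h1)
    have hfg : Measurable (fun v => f v * g v) := hf.mul hg
    have hfg1 : ∀ v, |f v * g v| ≤ 1 := by
      intro v
      calc |f v * g v| = |f v| * |g v| := abs_mul _ _
      _ ≤ 1 * 1 := mul_le_mul (hf1 _) (hg1 _) (abs_nonneg _) zero_le_one
      _ = 1 := one_mul 1
    set F : ℝ → ℝ := fun t => ∫ y, f (Fin.cons t y) ∂Measure.pi ν with hFdef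
    set G : ℝ → ℝ := fun t => ∫ y, g (Fin.cons t y) ∂Measure.pi ν with hGdef
    have step1 : (∫ t, F t ∂(μ 0)) * ∫ t, G t ∂(μ 0) ≤ ∫ t, F t * G t ∂(μ 0) :=
      harris_one (μ 0) (hImeas f hf) (hImeas g hg)
        (hImono f hf hfm hf1) (hImono g hg hgm hg1) (hIbd f hf1) (hIbd g hg1)
    have step2 : ∫ t, F t * G t ∂(μ 0)
        ≤ ∫ t, ∫ y, f (Fin.cons t y) * g (Fin.cons t y) ∂Measure.pi ν ∂(μ 0) := by
      refine integral_mono ?_ ?_ ?_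
      · refine integrable_of_bound _ 1 ((hImeas f hf).mul (hImeas g hg)) fun t => ?_
        calc |F t * G t| = |F t| * |G t| := abs_mul _ _
        _ ≤ 1 * 1 := mul_le_mul (hIbd f hf1 t) (hIbd g hg1 t) (abs_nonneg _) zero_le_one
        _ = 1 := one_mul 1
      · exact integrable_of_bound _ 1 (hImeas _ hfg) (hIbd _ hfg1)
      · intro t
        exact ih ν (fun j => hd _) (fun y => f (Fin.cons t y)) (fun y => g (Fin.cons t y))
          (hsec f hf t) (hsec g hg t)
          (fun y y' hy => hfm (hconsmono t t y y' le_rfl hy))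
          (fun y y' hy => hgm (hconsmono t t y y' le_rfl hy))
          (fun y => hf1 _) (fun y => hg1 _)
    calc (∫ v, f v ∂Measure.pi μ) * ∫ v, g v ∂Measure.pi μ
        = (∫ t, F t ∂(μ 0)) * ∫ t, G t ∂(μ 0) := by
          rw [hfub f hf hf1, hfub g hg hg1]
      _ ≤ ∫ t, ∫ y, f (Fin.cons t y) * g (Fin.cons t y) ∂Measure.pi ν ∂(μ 0) :=
          le_trans step1 step2
      _ = ∫ v, f v * g v ∂Measure.pi μ := (hfub _ hfg hfg1).symm

lemma harris_set {n : ℕ} (μ : Fin n → Measure ℝ) (hd : ∀ i, IsProbabilityMeasure (μ i))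
    {A B : Set (Fin n → ℝ)} (hA : MeasurableSet A) (hB : MeasurableSet B)
    (hAup : ∀ v w, v ≤ w → v ∈ A → w ∈ A) (hBup : ∀ v w, v ≤ w → v ∈ B → w ∈ B) :
    Measure.pi μ A * Measure.pi μ B ≤ Measure.pi μ (A ∩ B) := by
  haveI := hd
  haveI : IsProbabilityMeasure (Measure.pi μ) := inferInstance
  set f : (Fin n → ℝ) → ℝ := A.indicator (fun _ => (1:ℝ)) with hf
  set g : (Fin n → ℝ) → ℝ := B.indicator (fun _ => (1:ℝ)) with hg
  have hmono : ∀ (S : Set (Fin n → ℝ)), (∀ v w, v ≤ w → v ∈ S → w ∈ S) →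
      Monotone (S.indicator (fun _ => (1:ℝ))) := by
    intro S hS v w hvw
    by_cases hv : v ∈ S
    · simp [Set.indicator_of_mem hv, Set.indicator_of_mem (hS v w hvw hv)]
    · simp only [Set.indicator_of_notMem hv]
      by_cases hw : w ∈ S <;> simp [Set.indicator_apply, hw]
  have hbd : ∀ (S : Set (Fin n → ℝ)) (v), |S.indicator (fun _ => (1:ℝ)) v| ≤ 1 := by
    intro S v
    by_cases hv : v ∈ S <;> simp [Set.indicator_apply, hv]
  have hprod : ∀ v, f v * g v = (A ∩ B).indicator (fun _ => (1:ℝ)) v := by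
    intro v
    by_cases hv : v ∈ A <;> by_cases hw : v ∈ B <;>
      simp [hf, hg, Set.indicator_apply, hv, hw, Set.mem_inter_iff]
  have hint : ∀ (S : Set (Fin n → ℝ)), MeasurableSet S →
      ∫ v, S.indicator (fun _ => (1:ℝ)) v ∂Measure.pi μ = (Measure.pi μ S).toReal := by
    intro S hS
    rw [integral_indicator hS]
    simp
    rfl
  have key := harris_pi n μ hd f g
    ((measurable_const (a := (1:ℝ))).indicator hA) ((measurable_const (a := (1:ℝ))).indicator hB)
    (hmono A hAup) (hmono B hBup) (hbd A) (hbd B)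
  rw [hint A hA, hint B hB] at key
  have key2 : (Measure.pi μ A).toReal * (Measure.pi μ B).toReal
      ≤ (Measure.pi μ (A ∩ B)).toReal := by
    calc (Measure.pi μ A).toReal * (Measure.pi μ B).toReal
        ≤ ∫ v, f v * g v ∂Measure.pi μ := key
      _ = (Measure.pi μ (A ∩ B)).toReal := by
          rw [show (fun v => f v * g v) = (A ∩ B).indicator (fun _ => (1:ℝ)) from funext hprod]
          exact hint _ (hA.inter hB)
  rw [← ENNReal.toReal_le_toReal (by finiteness) (by finiteness), ENNReal.toReal_mul]
  exact key2

lemma map_tuple {Ω : Type*} [MeasurableSpace Ω] (P : Measure Ω) [IsProbabilityMeasure P]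
    (ξ : ℕ → Ω → ℝ) (hmeas : ∀ n, Measurable (ξ n))
    (hindep : iIndepFun ξ P) (n0 N : ℕ) :
    Measure.map (fun ω (i : Fin N) => ξ (n0 + i) ω) P
      = Measure.pi (fun i : Fin N => Measure.map (ξ (n0 + i)) P) := by
  haveI : ∀ i : Fin N, IsProbabilityMeasure (Measure.map (ξ (n0 + i)) P) :=
    fun i => Measure.isProbabilityMeasure_map (hmeas _).aemeasurable
  have hVmeas : Measurable (fun ω (i : Fin N) => ξ (n0 + i) ω) :=
    measurable_pi_iff.2 fun i => hmeas _
  refine (Measure.pi_eq fun s hs => ?_).symm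
  rw [Measure.map_apply hVmeas (MeasurableSet.univ_pi hs)]
  have hpre : (fun ω (i : Fin N) => ξ (n0 + i) ω) ⁻¹' (Set.pi univ s)
      = ⋂ i : Fin N, ξ (n0 + i) ⁻¹' s i := by
    ext ω; simp [Set.mem_pi]
  rw [hpre]
  -- use independence over the finset (range N).map (addLeft n0)
  set emb : ℕ ↪ ℕ := ⟨fun i => n0 + i, fun a b h => Nat.add_left_cancel h⟩ with hemb
  set S : Finset ℕ := (Finset.range N).map emb with hS
  set sets : ℕ → Set ℝ := fun j => if h : n0 ≤ j ∧ j - n0 < N then s ⟨j - n0, h.2⟩ else univ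
    with hsets
  have hsets_meas : ∀ j, j ∈ S → MeasurableSet (sets j) := by
    intro j _
    rw [hsets]
    by_cases h : n0 ≤ j ∧ j - n0 < N
    · simp only [dif_pos h]; exact hs _
    · simp only [dif_neg h]; exact MeasurableSet.univ
  have hsets_eq : ∀ i : Fin N, sets (n0 + i) = s i := by
    intro i
    have hi := i.isLt
    have h : n0 ≤ n0 + (i : ℕ) ∧ (n0 + (i : ℕ)) - n0 < N := ⟨by omega, by omega⟩
    rw [hsets]
    simp only [dif_pos h]
    have heq : (⟨n0 + (i : ℕ) - n0, h.2⟩ : Fin N) = i := Fin.ext (by simp)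
    rw [heq]
  have hiInter : (⋂ i : Fin N, ξ (n0 + i) ⁻¹' s i) = ⋂ j ∈ S, ξ j ⁻¹' sets j := by
    ext ω
    simp only [Set.mem_iInter, Set.mem_preimage, hS, Finset.mem_map, Finset.mem_range]
    constructor
    · rintro h j ⟨i, hi, rfl⟩
      have := h ⟨i, hi⟩
      rw [← hsets_eq ⟨i, hi⟩] at this
      exact this
    · intro h i
      have := h (n0 + i) ⟨i, i.isLt, rfl⟩
      rw [hsets_eq i] at this
      exact this
  rw [hiInter, hindep.measure_inter_preimage_eq_mul S hsets_meas, hS, Finset.prod_map]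
  rw [← Fin.prod_univ_eq_prod_range (fun i => P (ξ (emb i) ⁻¹' sets (emb i))) N]
  refine Finset.prod_congr rfl fun i _ => ?_
  have : emb (i : ℕ) = n0 + (i : ℕ) := rfl
  rw [this, hsets_eq i, Measure.map_apply (hmeas _) (hs i)]

namespace AR1

variable {Ω : Type*} [MeasurableSpace Ω]

/-- AR(1) chain with start `x₀`; the innovation used in the step from time `n`
to `n+1` is `ξ n` (so `ξ 0` plays the role of `ξ_1` of the paper). -/
def X (a : ℝ) (ξ : ℕ → Ω → ℝ) (x₀ : Ω → ℝ) : ℕ → Ω → ℝ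
  | 0 => x₀
  | n + 1 => fun ω => a * X a ξ x₀ n ω + ξ n ω

/-- The event `{T_M > n}`: the chain stays strictly above `M` at all times `1,…,n`. -/
def stayAbove (a : ℝ) (ξ : ℕ → Ω → ℝ) (x₀ : Ω → ℝ) (M : ℝ) (n : ℕ) : Set Ω :=
  {ω | ∀ k, 1 ≤ k → k ≤ n → M < X a ξ x₀ k ω}

/-- deterministic chain driven by a sequence `u`. -/
def ch (a x : ℝ) (u : ℕ → ℝ) : ℕ → ℝ
  | 0 => x
  | k + 1 => a * ch a x u k + u k

lemma ch_congr {a x : ℝ} {u u' : ℕ → ℝ} : ∀ {k : ℕ}, (∀ i, i < k → u i = u' i) →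
    ch a x u k = ch a x u' k
  | 0, _ => rfl
  | k + 1, h => by
    rw [ch, ch, ch_congr (fun i hi => h i (Nat.lt_succ_of_lt hi)), h k (Nat.lt_succ_self k)]

lemma ch_mono {a x : ℝ} (ha : 0 ≤ a) {u u' : ℕ → ℝ} (h : ∀ i, u i ≤ u' i) :
    ∀ k, ch a x u k ≤ ch a x u' k
  | 0 => le_refl x
  | k + 1 => by
    rw [ch, ch]
    exact add_le_add (mul_le_mul_of_nonneg_left (ch_mono ha h k) ha) (h k)

lemma X_eq_ch {a x : ℝ} {ξ : ℕ → Ω → ℝ} {ω : Ω} :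
    ∀ k, X a ξ (fun _ => x) k ω = ch a x (fun i => ξ i ω) k
  | 0 => rfl
  | k + 1 => by show a * X a ξ (fun _ => x) k ω + ξ k ω = _; rw [ch, X_eq_ch k]

lemma ch_measurable (a x : ℝ) : ∀ k, Measurable (fun u : ℕ → ℝ => ch a x u k)
  | 0 => measurable_const
  | k + 1 => (measurable_const.mul (ch_measurable a x k)).add (measurable_pi_apply k)

/-- embedding of a finite vector into a sequence (extending by `0`). -/
def emb (N : ℕ) (v : Fin N → ℝ) : ℕ → ℝ := fun i => if h : i < N then v ⟨i, h⟩ else 0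

lemma emb_measurable (N : ℕ) : Measurable (emb N) := by
  rw [measurable_pi_iff]
  intro i
  by_cases h : i < N
  · simpa [emb, h] using measurable_pi_apply (⟨i, h⟩ : Fin N)
  · simpa [emb, h] using measurable_const

lemma emb_mono {N : ℕ} {v w : Fin N → ℝ} (h : v ≤ w) : emb N v ≤ emb N w := by
  intro i
  unfold emb
  by_cases hi : i < N
  · simpa [hi] using h ⟨i, hi⟩
  · simp [hi]

lemma emb_eval {N : ℕ} (v : Fin N → ℝ) {i : ℕ} (h : i < N) : emb N v i = v ⟨i, h⟩ := by
  simp [emb, h]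


/-- supermultiplicativity of the persistence probabilities:
`P_x(T_0 > n+m) ≥ P_x(T_0 > n) · P_x(X_n ≥ x) · P_x(T_0 > m)` for `x > 0`, `n, m ≥ 1`. -/
theorem ar1_supermultiplicativity
    (P : Measure Ω) [IsProbabilityMeasure P]
    (ξ : ℕ → Ω → ℝ) (hmeas : ∀ n, Measurable (ξ n))
    (hindep : iIndepFun ξ P)
    (hident : ∀ n, Measure.map (ξ n) P = Measure.map (ξ 0) P)
    (a : ℝ) (ha : a ∈ Set.Ioo (0 : ℝ) 1) :
    ∀ x : ℝ, 0 < x → ∀ n m : ℕ, 1 ≤ n → 1 ≤ m →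
      P (stayAbove a ξ (fun _ => x) 0 n) * P {ω | x ≤ X a ξ (fun _ => x) n ω} *
          P (stayAbove a ξ (fun _ => x) 0 m) ≤
        P (stayAbove a ξ (fun _ => x) 0 (n + m)) := by
  intro x hx n m hn hm
  obtain ⟨ha0, ha1⟩ := ha
  set μ0 : Measure ℝ := Measure.map (ξ 0) P with hμ0
  haveI : IsProbabilityMeasure μ0 := Measure.isProbabilityMeasure_map (hmeas 0).aemeasurable
  have hμ' : ∀ n0 N : ℕ, Measure.map (fun ω (i : Fin N) => ξ (n0 + i) ω) P
      = Measure.pi (fun _ : Fin N => μ0) := by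
    intro n0 N
    rw [map_tuple P ξ hmeas hindep n0 N]
    exact congrArg Measure.pi (funext fun i => hident _)
  have hμ : ∀ N : ℕ, Measure.map (fun ω (i : Fin N) => ξ i ω) P
      = Measure.pi (fun _ : Fin N => μ0) := by
    intro N
    have h := hμ' 0 N
    simpa using h
  -- the monotone sets
  set A' : Set (Fin n → ℝ) := {v | ∀ k, 1 ≤ k → k ≤ n → 0 < ch a x (emb n v) k} with hA'
  set B' : Set (Fin n → ℝ) := {v | x ≤ ch a x (emb n v) n} with hB'
  set C' : Set (Fin m → ℝ) := {v | ∀ k, 1 ≤ k → k ≤ m → 0 < ch a x (emb m v) k} with hC'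
  have hchm : ∀ (N k : ℕ), Measurable fun v : Fin N → ℝ => ch a x (emb N v) k :=
    fun N k => (ch_measurable a x k).comp (emb_measurable N)
  have hstay_meas : ∀ N : ℕ,
      MeasurableSet {v : Fin N → ℝ | ∀ k, 1 ≤ k → k ≤ N → 0 < ch a x (emb N v) k} := by
    intro N
    have : {v : Fin N → ℝ | ∀ k, 1 ≤ k → k ≤ N → 0 < ch a x (emb N v) k}
        = ⋂ k ∈ Finset.Icc 1 N, {v : Fin N → ℝ | 0 < ch a x (emb N v) k} := by
      ext v
      simp [Finset.mem_Icc]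
    rw [this]
    exact MeasurableSet.biInter (Finset.Icc 1 N).countable_toSet
      fun k _ => measurableSet_lt measurable_const (hchm N k)
  have hA'meas : MeasurableSet A' := hstay_meas n
  have hB'meas : MeasurableSet B' := measurableSet_le measurable_const (hchm n n)
  have hC'meas : MeasurableSet C' := hstay_meas m
  have hA'up : ∀ v w, v ≤ w → v ∈ A' → w ∈ A' := fun v w hvw hv k h1 h2 =>
    lt_of_lt_of_le (hv k h1 h2) (ch_mono ha0.le (emb_mono hvw) k)
  have hB'up : ∀ v w, v ≤ w → v ∈ B' → w ∈ B' := fun v w hvw hv =>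
    le_trans hv (ch_mono ha0.le (emb_mono hvw) n)
  have hC'up : ∀ v w, v ≤ w → v ∈ C' → w ∈ C' := fun v w hvw hv k h1 h2 =>
    lt_of_lt_of_le (hv k h1 h2) (ch_mono ha0.le (emb_mono hvw) k)
  -- the random vectors
  set V : Ω → (Fin n → ℝ) := fun ω i => ξ i ω with hV
  set W : Ω → (Fin m → ℝ) := fun ω i => ξ (n + i) ω with hW
  have hVmeas : Measurable V := measurable_pi_iff.2 fun i => hmeas i
  have hWmeas : Measurable W := measurable_pi_iff.2 fun i => hmeas _
  -- identification of chains
  have hchV : ∀ (ω : Ω) (k : ℕ), k ≤ n → ch a x (emb n (V ω)) k = X a ξ (fun _ => x) k ω := by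
    intro ω k hk
    rw [X_eq_ch k]
    exact ch_congr fun i hi => emb_eval (V ω) (lt_of_lt_of_le hi hk)
  have hchW : ∀ (ω : Ω) (k : ℕ), k ≤ m →
      ch a x (emb m (W ω)) k = ch a x (fun i => ξ (n + i) ω) k := by
    intro ω k hk
    exact ch_congr fun i hi => emb_eval (W ω) (lt_of_lt_of_le hi hk)
  have hApre : V ⁻¹' A' = stayAbove a ξ (fun _ => x) 0 n := by
    ext ω
    simp only [Set.mem_preimage, stayAbove, Set.mem_setOf_eq, hA']
    exact forall_congr' fun k => forall_congr' fun h1 => forall_congr' fun h2 => by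
      rw [hchV ω k h2]
  have hBpre : V ⁻¹' B' = {ω | x ≤ X a ξ (fun _ => x) n ω} := by
    ext ω
    simp only [Set.mem_preimage, Set.mem_setOf_eq, hB']
    rw [hchV ω n le_rfl]
  -- the law identities
  have hPA : ∀ (S : Set (Fin n → ℝ)), MeasurableSet S →
      P (V ⁻¹' S) = Measure.pi (fun _ : Fin n => μ0) S := by
    intro S hS
    rw [← hμ n, Measure.map_apply hVmeas hS]
  have hPW : ∀ (S : Set (Fin m → ℝ)), MeasurableSet S →
      P (W ⁻¹' S) = Measure.pi (fun _ : Fin m => μ0) S := by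
    intro S hS
    rw [← hμ' n m, Measure.map_apply hWmeas hS]
  -- Harris step
  have hAB : P (V ⁻¹' A') * P (V ⁻¹' B') ≤ P (V ⁻¹' (A' ∩ B')) := by
    rw [hPA A' hA'meas, hPA B' hB'meas, Set.preimage_inter, ← Set.preimage_inter,
      hPA _ (hA'meas.inter hB'meas)]
    exact harris_set _ (fun _ => inferInstance) hA'meas hB'meas hA'up hB'up
  -- identical distribution of the shifted block
  have hCid : P (W ⁻¹' C') = P (stayAbove a ξ (fun _ => x) 0 m) := by
    have hm1 : Measurable (fun ω (i : Fin m) => ξ (i : ℕ) ω) := measurable_pi_iff.2 fun i => hmeas _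
    have h1 : P ((fun ω (i : Fin m) => ξ (i : ℕ) ω) ⁻¹' C') = Measure.pi (fun _ : Fin m => μ0) C' := by
      rw [← hμ m]
      exact (Measure.map_apply hm1 hC'meas).symm
    have h2 : (fun ω (i : Fin m) => ξ i ω) ⁻¹' C' = stayAbove a ξ (fun _ => x) 0 m := by
      ext ω
      simp only [Set.mem_preimage, stayAbove, Set.mem_setOf_eq, hC']
      exact forall_congr' fun k => forall_congr' fun h1 => forall_congr' fun h2 => by
        rw [show ch a x (emb m (fun i : Fin m => ξ i ω)) k = X a ξ (fun _ => x) k ω by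
          rw [X_eq_ch k]
          exact ch_congr fun i hi => emb_eval _ (lt_of_lt_of_le hi h2)]
    rw [hPW C' hC'meas, ← h1, h2]
  -- independence
  have hind : IndepFun V W P := by
    have hdisj : Disjoint (Finset.range n) (Finset.Ico n (n + m)) := by
      simp only [Finset.disjoint_left, Finset.mem_range, Finset.mem_Ico]
      omega
    have h := hindep.indepFun_finset (Finset.range n) (Finset.Ico n (n + m)) hdisj hmeas
    have hφ : Measurable (fun (u : ↥(Finset.range n) → ℝ) (i : Fin n) =>
        u ⟨(i : ℕ), Finset.mem_range.2 i.isLt⟩) :=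
      measurable_pi_iff.2 fun i => measurable_pi_apply _
    have hψ : Measurable (fun (u : ↥(Finset.Ico n (n + m)) → ℝ) (i : Fin m) =>
        u ⟨n + (i : ℕ), Finset.mem_Ico.2 ⟨Nat.le_add_right n i, by omega⟩⟩) :=
      measurable_pi_iff.2 fun i => measurable_pi_apply _
    have := h.comp hφ hψ
    exact this
  have hsplit : P (V ⁻¹' (A' ∩ B') ∩ W ⁻¹' C')
      = P (V ⁻¹' (A' ∩ B')) * P (W ⁻¹' C') :=
    hind.measure_inter_preimage_eq_mul _ _ (hA'meas.inter hB'meas) hC'meas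
  -- the pathwise inclusion
  have hincl : V ⁻¹' (A' ∩ B') ∩ W ⁻¹' C' ⊆ stayAbove a ξ (fun _ => x) 0 (n + m) := by
    rintro ω ⟨hVmem, hWmem⟩
    rw [Set.mem_preimage] at hVmem hWmem
    obtain ⟨hAmem, hBmem⟩ := hVmem
    have hXA : ∀ k, 1 ≤ k → k ≤ n → 0 < X a ξ (fun _ => x) k ω := by
      intro k h1 h2
      rw [← hchV ω k h2]
      exact hAmem k h1 h2
    have hXB : x ≤ X a ξ (fun _ => x) n ω := by
      rw [← hchV ω n le_rfl]
      exact hBmem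
    have hXC : ∀ k, 1 ≤ k → k ≤ m → 0 < ch a x (fun i => ξ (n + i) ω) k := by
      intro k h1 h2
      rw [← hchW ω k h2]
      exact hWmem k h1 h2
    have hdom : ∀ j, ch a x (fun i => ξ (n + i) ω) j ≤ X a ξ (fun _ => x) (n + j) ω := by
      intro j
      induction j with
      | zero => exact hXB
      | succ j ihj =>
        show a * ch a x (fun i => ξ (n + i) ω) j + ξ (n + j) ω ≤ _
        have : X a ξ (fun _ => x) (n + (j + 1)) ω
            = a * X a ξ (fun _ => x) (n + j) ω + ξ (n + j) ω := rfl
        rw [this]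
        exact add_le_add (mul_le_mul_of_nonneg_left ihj ha0.le) le_rfl
    intro k h1 h2
    by_cases hk : k ≤ n
    · exact hXA k h1 hk
    · have hkn : k = n + (k - n) := by omega
      calc (0:ℝ) < ch a x (fun i => ξ (n + i) ω) (k - n) := hXC (k - n) (by omega) (by omega)
        _ ≤ X a ξ (fun _ => x) (n + (k - n)) ω := hdom (k - n)
        _ = X a ξ (fun _ => x) k ω := by rw [← hkn]
  -- put everything together
  calc P (stayAbove a ξ (fun _ => x) 0 n) * P {ω | x ≤ X a ξ (fun _ => x) n ω} *
        P (stayAbove a ξ (fun _ => x) 0 m)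
      = P (V ⁻¹' A') * P (V ⁻¹' B') * P (W ⁻¹' C') := by rw [hApre, hBpre, hCid]
    _ ≤ P (V ⁻¹' (A' ∩ B')) * P (W ⁻¹' C') := mul_le_mul_left hAB _
    _ = P (V ⁻¹' (A' ∩ B') ∩ W ⁻¹' C') := hsplit.symm
    _ ≤ P (stayAbove a ξ (fun _ => x) 0 (n + m)) := measure_mono hincl


end AR1
end
end

section
/- Assume the innovations are almost surely bounded above with essential supremum R > 0 (i.e. P(ξ_1 ≤ R) = 1 and P(ξ_1 > R−ε) > 0 for all ε > 0), that P(ξ_1 < 0) > 0, and that P(ξ_1 ≤ −a·R_*) + P(ξ_1 = R) < 1, where R_* := R/(1−a). Then there exist δ > 0 and a constant c > 0 such that for every x ∈ [R_*−δ, R_*] and every n ≥ 1: P_{R_*}(T_0 > n) ≤ c·P_x(T_0 > n). In particular, for any probability measure ν on (0,R_*] with ν([R_*−δ, R_*]) > 0 there is a constant c_2 > 0 with P_ν(T_0 > n) ≥ c_2·P_x(T_0 > n) for all n ≥ 1 and all x ∈ (0, R_*]. -/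
open MeasureTheory ProbabilityTheory Filter Set Real
open scoped ENNReal NNReal

set_option linter.unusedSectionVars false

noncomputable section

namespace AR1

variable {Ω : Type*} [MeasurableSpace Ω]

/-- Chain built from a finite vector of innovations (innovation `v k` is used
in the step from time `k` to `k+1`; out-of-range innovations count as `0`). -/
def cw (a x : ℝ) (n : ℕ) (v : Fin n → ℝ) : ℕ → ℝ
  | 0 => x
  | k + 1 => a * cw a x n v k + if h : k < n then v ⟨k, h⟩ else 0

/-- Vector-level survival event. -/
def SSet (a x : ℝ) (n : ℕ) : Set (Fin n → ℝ) :=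
  {v | ∀ k, 1 ≤ k → k ≤ n → 0 < cw a x n v k}

lemma measurable_cw (a x : ℝ) (n : ℕ) (k : ℕ) :
    Measurable fun v : Fin n → ℝ => cw a x n v k := by
  induction k with
  | zero => exact measurable_const
  | succ k ih =>
    show Measurable fun v : Fin n → ℝ =>
      a * cw a x n v k + if h : k < n then v ⟨k, h⟩ else 0
    by_cases h : k < n
    · simp only [dif_pos h]
      exact (ih.const_mul a).add (measurable_pi_apply _)
    · simp only [dif_neg h]
      exact (ih.const_mul a).add measurable_const

lemma measurableSet_SSet (a x : ℝ) (n : ℕ) : MeasurableSet (SSet a x n) := by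
  have : SSet a x n =
      ⋂ (k : ℕ), ⋂ (_ : 1 ≤ k), ⋂ (_ : k ≤ n), {v | 0 < cw a x n v k} := by
    ext v; simp [SSet]
  rw [this]
  exact MeasurableSet.iInter fun k => MeasurableSet.iInter fun _ =>
    MeasurableSet.iInter fun _ =>
      measurableSet_lt measurable_const (measurable_cw a x n k)

lemma cw_mono_start (a : ℝ) (ha : 0 < a) {x y : ℝ} (hxy : x ≤ y) (n : ℕ)
    (v : Fin n → ℝ) : ∀ k, cw a x n v k ≤ cw a y n v k := by
  intro k
  induction k with
  | zero => exact hxy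
  | succ k ih =>
    show a * cw a x n v k + _ ≤ a * cw a y n v k + _
    have h2 := mul_le_mul_of_nonneg_left ih ha.le
    exact add_le_add h2 le_rfl

lemma SSet_mono_start (a : ℝ) (ha : 0 < a) {x y : ℝ} (hxy : x ≤ y) (n : ℕ) :
    SSet a x n ⊆ SSet a y n := by
  intro v hv k hk1 hkn
  exact lt_of_lt_of_le (hv k hk1 hkn) (cw_mono_start a ha hxy n v k)

lemma cw_trunc (a x : ℝ) {m M : ℕ} (h : m ≤ M) (v : Fin M → ℝ) :
    ∀ k, k ≤ m → cw a x M v k = cw a x m (fun i => v (Fin.castLE h i)) k := by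
  intro k
  induction k with
  | zero => intro _; rfl
  | succ k ih =>
    intro hk
    have hkm : k < m := hk
    have hkM : k < M := lt_of_lt_of_le hkm h
    show a * cw a x M v k + _ = a * cw a x m _ k + _
    rw [dif_pos hkM, dif_pos hkm, ih hkm.le]
    rfl

lemma X_eq_cw (a : ℝ) (ξ : ℕ → Ω → ℝ) (x : ℝ) (n : ℕ) (ω : Ω) :
    ∀ k, k ≤ n → X a ξ (fun _ => x) k ω = cw a x n (fun i : Fin n => ξ i ω) k := by
  intro k
  induction k with
  | zero => intro _; rfl
  | succ k ih =>
    intro hk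
    have hkn : k < n := hk
    show a * X a ξ (fun _ => x) k ω + ξ k ω = a * cw a x n _ k + _
    rw [dif_pos hkn, ih hkn.le]

lemma stay_eq (a : ℝ) (ξ : ℕ → Ω → ℝ) (x : ℝ) (n : ℕ) :
    stayAbove a ξ (fun _ => x) 0 n =
      (fun ω (i : Fin n) => ξ i ω) ⁻¹' SSet a x n := by
  ext ω
  constructor
  · intro hω k hk1 hkn
    rw [← X_eq_cw a ξ x n ω k hkn]
    exact hω k hk1 hkn
  · intro hω k hk1 hkn
    have := hω k hk1 hkn
    rwa [← X_eq_cw a ξ x n ω k hkn] at this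


/-! ### Product-measure machinery -/

/-- A set specified by: the first `m` coordinates lie in `S`, and each coordinate
`i ≥ m` lies in `C i`. -/
def blockSet (m M : ℕ) (h : m ≤ M) (S : Set (Fin m → ℝ)) (C : ℕ → Set ℝ) :
    Set (Fin M → ℝ) :=
  {v | (fun i : Fin m => v (Fin.castLE h i)) ∈ S ∧
      ∀ i : Fin M, m ≤ (i : ℕ) → v i ∈ C (i : ℕ)}

lemma measurableSet_blockSet {m M : ℕ} (h : m ≤ M) {S : Set (Fin m → ℝ)}
    (hS : MeasurableSet S) {C : ℕ → Set ℝ} (hC : ∀ i, MeasurableSet (C i)) :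
    MeasurableSet (blockSet m M h S C) := by
  have h1 : MeasurableSet ((fun v : Fin M → ℝ => fun i : Fin m => v (Fin.castLE h i)) ⁻¹' S) := by
    exact (measurable_pi_lambda _ fun i => measurable_pi_apply _) hS
  have h2 : MeasurableSet (⋂ (i : Fin M), ⋂ (_ : m ≤ (i : ℕ)),
      (fun v : Fin M → ℝ => v i) ⁻¹' C (i : ℕ)) :=
    MeasurableSet.iInter fun i => MeasurableSet.iInter fun _ =>
      (measurable_pi_apply i) (hC _)
  have heq : blockSet m M h S C =
      ((fun v : Fin M → ℝ => fun i : Fin m => v (Fin.castLE h i)) ⁻¹' S) ∩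
      (⋂ (i : Fin M), ⋂ (_ : m ≤ (i : ℕ)), (fun v : Fin M → ℝ => v i) ⁻¹' C (i : ℕ)) := by
    ext v
    simp only [blockSet, Set.mem_setOf_eq, Set.mem_inter_iff, Set.mem_preimage,
      Set.mem_iInter]
  rw [heq]
  exact h1.inter h2

lemma blockSet_succ (m j : ℕ) (S : Set (Fin m → ℝ)) (C : ℕ → Set ℝ) :
    blockSet m (m + (j + 1)) (Nat.le_add_right _ _) S C
      = (MeasurableEquiv.piFinSuccAbove (fun _ : Fin ((m + j) + 1) => ℝ)
          (Fin.last (m + j))) ⁻¹'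
          ((C (m + j)) ×ˢ blockSet m (m + j) (Nat.le_add_right _ _) S C) := by
  have hsnd : ∀ v : Fin ((m + j) + 1) → ℝ,
      ((MeasurableEquiv.piFinSuccAbove (fun _ : Fin ((m + j) + 1) => ℝ)
        (Fin.last (m + j))) v).2 = fun i : Fin (m + j) => v i.castSucc := by
    intro v
    funext i
    show v ((Fin.last (m + j)).succAbove i) = v i.castSucc
    rw [Fin.succAbove_last_apply]
  ext v
  rw [Set.mem_preimage, Set.mem_prod, hsnd v]
  have hfst : ((MeasurableEquiv.piFinSuccAbove (fun _ : Fin ((m + j) + 1) => ℝ)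
      (Fin.last (m + j))) v).1 = v (Fin.last (m + j)) := rfl
  rw [hfst]
  simp only [blockSet, Set.mem_setOf_eq]
  have hfun : (fun i : Fin m => v ((Fin.castLE (Nat.le_add_right m j) i).castSucc))
      = (fun i : Fin m => v (Fin.castLE (Nat.le_add_right m (j + 1)) i)) :=
    funext fun i => congrArg v (Fin.ext rfl)
  constructor
  · rintro ⟨hS, hC⟩
    refine ⟨hC (Fin.last (m + j)) (by simp), ?_, ?_⟩
    · rw [hfun]; exact hS
    · intro i hi
      have := hC i.castSucc (by simpa using hi)
      simpa using this
  · rintro ⟨hlast, hS, hC⟩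
    constructor
    · rw [← hfun]; exact hS
    · intro i hi
      by_cases hlt : (i : ℕ) < m + j
      · have hieq : i = (⟨(i : ℕ), hlt⟩ : Fin (m + j)).castSucc := Fin.ext rfl
        rw [hieq]
        exact hC ⟨(i : ℕ), hlt⟩ hi
      · have hieq : i = Fin.last (m + j) := by
          apply Fin.ext
          have := i.isLt
          simp only [Fin.val_last]
          omega
        rw [hieq]
        exact hlast

lemma peel (μ : Measure ℝ) [IsProbabilityMeasure μ] (C : ℕ → Set ℝ)
    (hC : ∀ i, MeasurableSet (C i)) (m : ℕ) (S : Set (Fin m → ℝ))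
    (hS : MeasurableSet S) :
    ∀ j : ℕ,
      Measure.pi (fun _ : Fin (m + j) => μ)
          (blockSet m (m + j) (Nat.le_add_right m j) S C)
        = Measure.pi (fun _ : Fin m => μ) S * ∏ i ∈ Finset.Ico m (m + j), μ (C i) := by
  intro j
  induction j with
  | zero =>
    have hset : blockSet m (m + 0) (Nat.le_add_right m 0) S C = S := by
      ext v
      have hfun : (fun i : Fin m => v (Fin.castLE (Nat.le_add_right m 0) i)) = v :=
        funext fun i => congrArg v (Fin.ext rfl)
      simp only [blockSet, Set.mem_setOf_eq, hfun]
      constructor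
      · exact fun h => h.1
      · intro h
        refine ⟨h, fun i hi => absurd i.isLt (by omega)⟩
    rw [hset]
    simp
  | succ j ih =>
    show Measure.pi (fun _ : Fin ((m + j) + 1) => μ)
        (blockSet m (m + (j + 1)) (Nat.le_add_right m (j + 1)) S C)
      = Measure.pi (fun _ : Fin m => μ) S * ∏ i ∈ Finset.Ico m ((m + j) + 1), μ (C i)
    rw [blockSet_succ m j S C]
    rw [(measurePreserving_piFinSuccAbove (fun _ : Fin ((m + j) + 1) => μ)
        (Fin.last (m + j))).measure_preimage
      (((hC (m + j)).prod
        (measurableSet_blockSet (Nat.le_add_right m j) hS hC)).nullMeasurableSet)]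
    rw [Measure.prod_prod, ih, Finset.prod_Ico_succ_top (Nat.le_add_right m j)]
    ring

/-- Splitting off the first coordinate. -/
lemma split_first (μ : Measure ℝ) [IsProbabilityMeasure μ] (n : ℕ)
    (B : Set ℝ) (hB : MeasurableSet B) (S : Set (Fin n → ℝ)) (hS : MeasurableSet S) :
    Measure.pi (fun _ : Fin (n + 1) => μ)
        {v | v 0 ∈ B ∧ (fun i : Fin n => v i.succ) ∈ S}
      = μ B * Measure.pi (fun _ : Fin n => μ) S := by
  have happ : ∀ v : Fin (n + 1) → ℝ,
      (MeasurableEquiv.piFinSuccAbove (fun _ : Fin (n + 1) => ℝ) 0) v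
        = (v 0, fun i : Fin n => v i.succ) := by
    intro v
    ext
    · rfl
    · simp only [MeasurableEquiv.piFinSuccAbove, Fin.removeNth]
      rfl
  have hset : {v : Fin (n + 1) → ℝ | v 0 ∈ B ∧ (fun i : Fin n => v i.succ) ∈ S}
      = (MeasurableEquiv.piFinSuccAbove (fun _ : Fin (n + 1) => ℝ) 0) ⁻¹' (B ×ˢ S) := by
    ext v
    simp only [Set.mem_setOf_eq, Set.mem_preimage, happ, Set.mem_prod]
  rw [hset,
    (measurePreserving_piFinSuccAbove (fun _ : Fin (n + 1) => μ) 0).measure_preimage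
      ((hB.prod hS).nullMeasurableSet),
    Measure.prod_prod]

/-- The joint law of `(ξ 0, …, ξ (n-1))` is the iid product measure. -/
lemma map_eq_pi (P : Measure Ω) [IsProbabilityMeasure P]
    (ξ : ℕ → Ω → ℝ) (hmeas : ∀ n, Measurable (ξ n))
    (hindep : iIndepFun ξ P)
    (hident : ∀ n, Measure.map (ξ n) P = Measure.map (ξ 0) P) (n : ℕ) :
    Measure.map (fun ω (i : Fin n) => ξ i ω) P
      = Measure.pi (fun _ : Fin n => Measure.map (ξ 0) P) := by
  have hprob : IsProbabilityMeasure (Measure.map (ξ 0) P) :=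
    Measure.isProbabilityMeasure_map (hmeas 0).aemeasurable
  have hV : Measurable (fun ω (i : Fin n) => ξ i ω) :=
    measurable_pi_lambda _ fun i => hmeas i
  refine (Measure.pi_eq fun s hs => ?_).symm
  rw [Measure.map_apply hV (MeasurableSet.univ_pi hs)]
  classical
  set sets : ℕ → Set ℝ := fun jj => if h : jj < n then s ⟨jj, h⟩ else Set.univ with hsets
  have hsets_meas : ∀ i : ℕ, MeasurableSet (sets i) := by
    intro i
    rw [hsets]
    by_cases h : i < n
    · simpa [dif_pos h] using hs _
    · simp [dif_neg h]
  have hsets_eq : ∀ i : Fin n, sets (i : ℕ) = s i := by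
    intro i
    rw [hsets]
    simp only [dif_pos i.isLt]
  have hpre : (fun ω (i : Fin n) => ξ i ω) ⁻¹' (Set.univ.pi s)
      = ⋂ jj ∈ Finset.image (fun i : Fin n => (i : ℕ)) Finset.univ, ξ jj ⁻¹' sets jj := by
    ext ω
    simp only [Set.mem_preimage, Set.mem_univ_pi, Set.mem_iInter, Finset.mem_image,
      Finset.mem_univ, true_and]
    constructor
    · rintro h jj ⟨i, rfl⟩
      rw [hsets_eq i]
      exact h i
    · intro h i
      rw [← hsets_eq i]
      exact h _ ⟨i, rfl⟩
  rw [hpre, hindep.measure_inter_preimage_eq_mul _ (fun i _ => hsets_meas i),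
    Finset.prod_image (fun i _ j _ hij => Fin.val_injective hij)]
  refine Finset.prod_congr rfl fun i _ => ?_
  rw [← Measure.map_apply (hmeas _) (by rw [hsets_eq i]; exact hs i), hident i, hsets_eq i]

lemma P_stay_eq (P : Measure Ω) [IsProbabilityMeasure P]
    (ξ : ℕ → Ω → ℝ) (hmeas : ∀ n, Measurable (ξ n))
    (hindep : iIndepFun ξ P)
    (hident : ∀ n, Measure.map (ξ n) P = Measure.map (ξ 0) P)
    (a x : ℝ) (n : ℕ) :
    P (stayAbove a ξ (fun _ => x) 0 n)
      = Measure.pi (fun _ : Fin n => Measure.map (ξ 0) P) (SSet a x n) := by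
  have hV : Measurable (fun ω (i : Fin n) => ξ i ω) :=
    measurable_pi_lambda _ fun i => hmeas i
  rw [stay_eq, ← Measure.map_apply hV (measurableSet_SSet a x n),
    map_eq_pi P ξ hmeas hindep hident n]


/-! ### Trajectory inclusions -/

/-- If the start is a sub-fixed point for the map `z ↦ a z + c`, then the event
where every innovation exceeds `c` is contained in the survival event. -/
lemma pi_Ioi_subset_SSet (a : ℝ) (ha : 0 < a) {y : ℝ} (hy : 0 < y) (c : ℝ)
    (hc : y ≤ a * y + c) (n : ℕ) :
    (Set.univ.pi fun _ : Fin n => Set.Ioi c) ⊆ SSet a y n := by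
  intro v hv
  have key : ∀ k, k ≤ n → y ≤ cw a y n v k := by
    intro k
    induction k with
    | zero => intro _; exact le_rfl
    | succ k ih =>
      intro hk
      have hkn : k < n := hk
      have h1 : y ≤ cw a y n v k := ih hkn.le
      have h2 : c < v ⟨k, hkn⟩ := hv ⟨k, hkn⟩ (Set.mem_univ _)
      show y ≤ a * cw a y n v k + _
      rw [dif_pos hkn]
      nlinarith
  intro k hk1 hkn
  exact lt_of_lt_of_le hy (key k hkn)

/-- Surviving `n` steps and then taking a positive innovation survives `n+1` steps. -/
lemma blockSet_top_subset (a : ℝ) (ha : 0 < a) {y : ℝ} (hy : 0 < y) {c : ℝ}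
    (hc : 0 ≤ c) (n : ℕ) :
    blockSet n (n + 1) (Nat.le_succ n) (SSet a y n) (fun _ => Set.Ioi c)
      ⊆ SSet a y (n + 1) := by
  rintro v ⟨hS, hC⟩ k hk1 hkn
  have htr : ∀ k', k' ≤ n → cw a y (n + 1) v k'
      = cw a y n (fun i => v (Fin.castLE (Nat.le_succ n) i)) k' :=
    cw_trunc a y (Nat.le_succ n) v
  by_cases hk : k ≤ n
  · rw [htr k hk]
    exact hS k hk1 hk
  · have hkeq : k = n + 1 := by omega
    subst hkeq
    have hcwn : 0 < cw a y (n + 1) v n := by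
      rcases Nat.eq_zero_or_pos n with h0 | h0
      · subst h0; exact hy
      · rw [htr n le_rfl]; exact hS n h0 le_rfl
    have hvn : c < v ⟨n, Nat.lt_succ_self n⟩ := hC ⟨n, Nat.lt_succ_self n⟩ le_rfl
    show 0 < a * cw a y (n + 1) v n + _
    rw [dif_pos (Nat.lt_succ_self n)]
    nlinarith

/-- Surviving `m` steps, then climbing with `k` innovations above `b` (reaching level
at least `L`), then taking an innovation above `-(a L)`, survives `m+k+1` steps. -/
lemma blockSet_climb_subset (a : ℝ) (ha : 0 < a) (ha1 : a < 1) {y : ℝ} (hy : 0 < y)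
    {b L : ℝ} (hb : 0 < b) (m k : ℕ) (hk : 1 ≤ k)
    (hbL : L ≤ b * (1 - a ^ k) / (1 - a)) (d : ℝ) :
    blockSet m (m + (k + 1)) (Nat.le_add_right _ _) (SSet a y m)
        (fun i => if i = m + k then Set.Ioc (-(a * L)) d else Set.Ioi b)
      ⊆ SSet a y (m + (k + 1)) := by
  have h1a : 0 < 1 - a := by linarith
  rintro v ⟨hS, hC⟩
  have hmM : m ≤ m + (k + 1) := Nat.le_add_right _ _
  have htr : ∀ k', k' ≤ m → cw a y (m + (k + 1)) v k'
      = cw a y m (fun i => v (Fin.castLE hmM i)) k' := cw_trunc a y hmM v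
  have hcwm : 0 < cw a y (m + (k + 1)) v m := by
    rcases Nat.eq_zero_or_pos m with h0 | h0
    · subst h0; exact hy
    · rw [htr m le_rfl]; exact hS m h0 le_rfl
  -- the climbing invariant
  have hclimb : ∀ i, 1 ≤ i → i ≤ k →
      b * (1 - a ^ i) / (1 - a) ≤ cw a y (m + (k + 1)) v (m + i) := by
    intro i
    induction i with
    | zero => omega
    | succ i ih =>
      intro _ hik
      have hcoord : b < v ⟨m + i, by omega⟩ := by
        have h := hC ⟨m + i, by omega⟩ (by simp only [Fin.val_mk]; omega)
        simp only [Fin.val_mk] at h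
        rw [if_neg (by omega : ¬ (m + i = m + k))] at h
        exact h
      have hguard : m + i < m + (k + 1) := by omega
      show b * (1 - a ^ (i + 1)) / (1 - a)
          ≤ a * cw a y (m + (k + 1)) v (m + i)
            + if h : m + i < m + (k + 1) then v ⟨m + i, h⟩ else 0
      rw [dif_pos hguard]
      rcases Nat.eq_zero_or_pos i with h0 | h0
      · subst h0
        have : b * (1 - a ^ 1) / (1 - a) = b := by
          field_simp
        rw [this]
        simp only [Nat.add_zero] at hcoord ⊢
        nlinarith
      · have hprev := ih h0 (by omega)
        have halg : a * (b * (1 - a ^ i) / (1 - a)) + b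
            = b * (1 - a ^ (i + 1)) / (1 - a) := by
          field_simp
          ring
        have h2 : a * (b * (1 - a ^ i) / (1 - a)) ≤ a * cw a y (m + (k + 1)) v (m + i) :=
          mul_le_mul_of_nonneg_left hprev ha.le
        nlinarith
  have hcwk : L ≤ cw a y (m + (k + 1)) v (m + k) :=
    le_trans hbL (hclimb k hk le_rfl)
  -- positivity along the way
  intro j hj1 hjM
  rcases le_or_gt j m with hjm | hjm
  · rw [htr j hjm]
    exact hS j hj1 hjm
  · rcases le_or_gt j (m + k) with hjk | hjk
    · obtain ⟨i, rfl⟩ : ∃ i, j = m + i := ⟨j - m, by omega⟩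
      have hi1 : 1 ≤ i := by omega
      have hik : i ≤ k := by omega
      have hpos : 0 < b * (1 - a ^ i) / (1 - a) := by
        have h2 : a ^ i < 1 := pow_lt_one₀ ha.le ha1 (by omega)
        have h3 : 0 < 1 - a ^ i := by linarith
        exact div_pos (mul_pos hb h3) h1a
      exact lt_of_lt_of_le hpos (hclimb i hi1 hik)
    · have hjeq : j = m + k + 1 := by omega
      subst hjeq
      have hcoord : -(a * L) < v ⟨m + k, by omega⟩ := by
        have h := hC ⟨m + k, by omega⟩ (by simp only [Fin.val_mk]; omega)
        simp only [Fin.val_mk, if_pos] at h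
        exact h.1
      have hguard : m + k < m + (k + 1) := by omega
      show 0 < a * cw a y (m + (k + 1)) v (m + k)
          + if h : m + k < m + (k + 1) then v ⟨m + k, h⟩ else 0
      rw [dif_pos hguard]
      nlinarith

/-- Shifting out the first innovation: if `v 0 ≤ (1-a) y - d` then the chain started
at `y - d` with the shifted innovations dominates the original chain (time-shifted). -/
lemma cw_shift_le (a : ℝ) (ha : 0 < a) (n : ℕ) (v : Fin (n + 1) → ℝ) (y d : ℝ)
    (hv0 : v 0 ≤ (1 - a) * y - d) :
    ∀ k, k ≤ n → cw a y (n + 1) v (k + 1) ≤ cw a (y - d) n (fun i => v i.succ) k := by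
  intro k
  induction k with
  | zero =>
    intro _
    show a * y + _ ≤ y - d
    rw [dif_pos (Nat.zero_lt_succ n)]
    have : v ⟨0, Nat.zero_lt_succ n⟩ = v 0 := congrArg v (Fin.ext rfl)
    rw [this]
    linarith
  | succ k ih =>
    intro hk
    have hkn : k < n := hk
    have hkn1 : k + 1 < n + 1 := by omega
    show a * cw a y (n + 1) v (k + 1) + _ ≤ a * cw a (y - d) n _ k + _
    rw [dif_pos hkn1, dif_pos hkn]
    have h1 := mul_le_mul_of_nonneg_left (ih hkn.le) ha.le
    have h2 : v ⟨k + 1, hkn1⟩ = (fun i : Fin n => v i.succ) ⟨k, hkn⟩ :=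
      congrArg v (Fin.ext rfl)
    rw [h2]
    exact add_le_add h1 le_rfl

lemma SSet_shift (a : ℝ) (ha : 0 < a) (n : ℕ) (v : Fin (n + 1) → ℝ) (y d : ℝ)
    (hv0 : v 0 ≤ (1 - a) * y - d) (hv : v ∈ SSet a y (n + 1)) :
    (fun i : Fin n => v i.succ) ∈ SSet a (y - d) n := by
  intro k hk1 hkn
  have h1 : 0 < cw a y (n + 1) v (k + 1) := hv (k + 1) (by omega) (by omega)
  exact lt_of_lt_of_le h1 (cw_shift_le a ha n v y d hv0 k hkn)


/-! ### The survival probability functional -/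

/-- Probability that the AR(1) chain started at `x`, with iid innovations of law `μ`,
stays positive for `n` steps. -/
def Fn (μ : Measure ℝ) (a x : ℝ) (n : ℕ) : ℝ≥0∞ :=
  Measure.pi (fun _ : Fin n => μ) (SSet a x n)

lemma Fn_le_one (μ : Measure ℝ) [IsProbabilityMeasure μ] (a x : ℝ) (n : ℕ) :
    Fn μ a x n ≤ 1 :=
  prob_le_one

lemma Fn_mono (μ : Measure ℝ) (a : ℝ) (ha : 0 < a) {x y : ℝ} (h : x ≤ y) (n : ℕ) :
    Fn μ a x n ≤ Fn μ a y n :=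
  measure_mono (SSet_mono_start a ha h n)

lemma Fn_anti (μ : Measure ℝ) [IsProbabilityMeasure μ] (a x : ℝ) :
    ∀ {n n' : ℕ}, n ≤ n' → Fn μ a x n' ≤ Fn μ a x n := by
  have hstep : ∀ nn, Fn μ a x (nn + 1) ≤ Fn μ a x nn := by
    intro n
    have hsub : SSet a x (n + 1)
        ⊆ blockSet n (n + 1) (Nat.le_add_right n 1) (SSet a x n) (fun _ => Set.univ) := by
      intro v hv
      refine ⟨?_, fun i _ => Set.mem_univ _⟩
      intro kk hk1 hkn
      rw [← cw_trunc a x (Nat.le_add_right n 1) v kk hkn]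
      exact hv kk hk1 (by omega)
    calc Fn μ a x (n + 1)
        ≤ Measure.pi (fun _ : Fin (n + 1) => μ)
            (blockSet n (n + 1) (Nat.le_add_right n 1) (SSet a x n) (fun _ => Set.univ)) :=
          measure_mono hsub
      _ = Fn μ a x n * ∏ i ∈ Finset.Ico n (n + 1), μ Set.univ :=
          peel μ (fun _ => Set.univ) (fun _ => MeasurableSet.univ) n _
            (measurableSet_SSet a x n) 1
      _ = Fn μ a x n := by simp
  intro n n' h
  exact antitone_nat_of_succ_le hstep h

/-- Staying within the absorbing top interval gives a lower bound. -/
lemma Fn_lower (μ : Measure ℝ) [IsProbabilityMeasure μ] (a : ℝ) (ha : 0 < a)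
    {y c : ℝ} (hy : 0 < y) (hc : y ≤ a * y + c) (n : ℕ) :
    μ (Set.Ioi c) ^ n ≤ Fn μ a y n := by
  have h1 : Measure.pi (fun _ : Fin n => μ) (Set.univ.pi fun _ => Set.Ioi c)
      = μ (Set.Ioi c) ^ n := by
    rw [Measure.pi_pi]
    simp
  rw [← h1]
  exact measure_mono (pi_Ioi_subset_SSet a ha hy c hc n)

/-- The deletion inequality: removing the first innovation. -/
lemma Fn_deletion (μ : Measure ℝ) [IsProbabilityMeasure μ] (a : ℝ) (ha0 : 0 < a)
    (Rs δ R : ℝ) (hRR : (1 - a) * Rs = R) (hμR : μ (Set.Ioi R) = 0) (n : ℕ) :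
    Fn μ a Rs (n + 1) ≤ Fn μ a (Rs - δ) n + μ (Set.Ioi (R - δ)) * Fn μ a Rs n := by
  have hcover : SSet a Rs (n + 1) ⊆
      ({v : Fin (n + 1) → ℝ | v 0 ∈ Set.Iic (R - δ)
          ∧ (fun i : Fin n => v i.succ) ∈ SSet a (Rs - δ) n}
        ∪ ({v : Fin (n + 1) → ℝ | v 0 ∈ Set.Ioi (R - δ)
            ∧ (fun i : Fin n => v i.succ) ∈ SSet a Rs n}
          ∪ {v : Fin (n + 1) → ℝ | v 0 ∈ Set.Ioi R
              ∧ (fun i : Fin n => v i.succ) ∈ (Set.univ : Set (Fin n → ℝ))})) := by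
    intro v hv
    rcases le_or_gt (v 0) (R - δ) with h0 | h0
    · left
      exact ⟨h0, SSet_shift a ha0 n v Rs δ (by rw [hRR]; linarith) hv⟩
    · rcases le_or_gt (v 0) R with h1 | h1
      · right; left
        refine ⟨h0, ?_⟩
        have h2 := SSet_shift a ha0 n v Rs 0 (by rw [hRR]; linarith) hv
        rwa [sub_zero] at h2
      · right; right
        exact ⟨h1, Set.mem_univ _⟩
  have e1 : Measure.pi (fun _ : Fin (n + 1) => μ)
      {v : Fin (n + 1) → ℝ | v 0 ∈ Set.Iic (R - δ)
        ∧ (fun i : Fin n => v i.succ) ∈ SSet a (Rs - δ) n}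
      = μ (Set.Iic (R - δ)) * Fn μ a (Rs - δ) n :=
    split_first μ n _ measurableSet_Iic _ (measurableSet_SSet a (Rs - δ) n)
  have e2 : Measure.pi (fun _ : Fin (n + 1) => μ)
      {v : Fin (n + 1) → ℝ | v 0 ∈ Set.Ioi (R - δ)
        ∧ (fun i : Fin n => v i.succ) ∈ SSet a Rs n}
      = μ (Set.Ioi (R - δ)) * Fn μ a Rs n :=
    split_first μ n _ measurableSet_Ioi _ (measurableSet_SSet a Rs n)
  have e3 : Measure.pi (fun _ : Fin (n + 1) => μ)
      {v : Fin (n + 1) → ℝ | v 0 ∈ Set.Ioi R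
        ∧ (fun i : Fin n => v i.succ) ∈ (Set.univ : Set (Fin n → ℝ))}
      = μ (Set.Ioi R) * Measure.pi (fun _ : Fin n => μ) Set.univ :=
    split_first μ n _ measurableSet_Ioi _ MeasurableSet.univ
  calc Fn μ a Rs (n + 1)
      ≤ Measure.pi (fun _ : Fin (n + 1) => μ) _ := measure_mono hcover
    _ ≤ Measure.pi (fun _ : Fin (n + 1) => μ)
          {v : Fin (n + 1) → ℝ | v 0 ∈ Set.Iic (R - δ)
            ∧ (fun i : Fin n => v i.succ) ∈ SSet a (Rs - δ) n}
        + (Measure.pi (fun _ : Fin (n + 1) => μ)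
            {v : Fin (n + 1) → ℝ | v 0 ∈ Set.Ioi (R - δ)
              ∧ (fun i : Fin n => v i.succ) ∈ SSet a Rs n}
          + Measure.pi (fun _ : Fin (n + 1) => μ)
              {v : Fin (n + 1) → ℝ | v 0 ∈ Set.Ioi R
                ∧ (fun i : Fin n => v i.succ) ∈ (Set.univ : Set (Fin n → ℝ))}) :=
        le_trans (measure_union_le _ _) (add_le_add_right (measure_union_le _ _) _)
    _ = μ (Set.Iic (R - δ)) * Fn μ a (Rs - δ) n
        + (μ (Set.Ioi (R - δ)) * Fn μ a Rs n + μ (Set.Ioi R) * Measure.pi (fun _ : Fin n => μ) Set.univ) := by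
        rw [e1, e2, e3]
    _ = μ (Set.Iic (R - δ)) * Fn μ a (Rs - δ) n + μ (Set.Ioi (R - δ)) * Fn μ a Rs n := by
        rw [hμR, zero_mul, add_zero]
    _ ≤ Fn μ a (Rs - δ) n + μ (Set.Ioi (R - δ)) * Fn μ a Rs n := by
        have : μ (Set.Iic (R - δ)) * Fn μ a (Rs - δ) n ≤ 1 * Fn μ a (Rs - δ) n :=
          mul_le_mul_left prob_le_one _
        rw [one_mul] at this
        exact add_le_add_left this _

/-- The ratio inequality: one extra step survives either by a top innovation, or after
climbing back to level `L` in `k` steps and using a moderate innovation. -/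
lemma Fn_ratio (μ : Measure ℝ) [IsProbabilityMeasure μ] (a : ℝ) (ha0 : 0 < a)
    (ha1 : a < 1) (Rs R δ γ L : ℝ) (hRs : 0 < Rs) (hδR : 0 < R - δ) (hγR : 0 < R - γ)
    (k : ℕ) (hk : 1 ≤ k) (hbL : L ≤ (R - γ) * (1 - a ^ k) / (1 - a)) (m : ℕ) :
    Fn μ a Rs (m + k) * μ (Set.Ioi (R - δ))
      + Fn μ a Rs m * (μ (Set.Ioi (R - γ)) ^ k * μ (Set.Ioc (-(a * L)) (R - δ)))
      ≤ Fn μ a Rs (m + k + 1) := by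
  classical
  set CE : ℕ → Set ℝ :=
    fun i => if i = m + k then Set.Ioc (-(a * L)) (R - δ) else Set.Ioi (R - γ) with hCE
  have hCEmeas : ∀ i, MeasurableSet (CE i) := by
    intro i
    rw [hCE]
    by_cases h : i = m + k
    · simp only [if_pos h]; exact measurableSet_Ioc
    · simp only [if_neg h]; exact measurableSet_Ioi
  -- the top event
  have hT := peel μ (fun _ => Set.Ioi (R - δ)) (fun _ => measurableSet_Ioi) (m + k)
    (SSet a Rs (m + k)) (measurableSet_SSet a Rs (m + k)) 1
  -- the climb event
  have hE := peel μ CE hCEmeas m (SSet a Rs m) (measurableSet_SSet a Rs m) (k + 1)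
  have hprodT : ∏ i ∈ Finset.Ico (m + k) ((m + k) + 1), μ (Set.Ioi (R - δ))
      = μ (Set.Ioi (R - δ)) := by
    rw [Nat.Ico_succ_singleton, Finset.prod_singleton]
  have hprodE : ∏ i ∈ Finset.Ico m (m + (k + 1)), μ (CE i)
      = μ (Set.Ioi (R - γ)) ^ k * μ (Set.Ioc (-(a * L)) (R - δ)) := by
    have h1 : m + (k + 1) = (m + k) + 1 := rfl
    rw [h1, Finset.prod_Ico_succ_top (Nat.le_add_right m k)]
    have h2 : ∀ i ∈ Finset.Ico m (m + k), μ (CE i) = μ (Set.Ioi (R - γ)) := by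
      intro i hi
      rw [Finset.mem_Ico] at hi
      rw [hCE]
      simp only [if_neg (by omega : ¬ i = m + k)]
    rw [Finset.prod_congr rfl h2, Finset.prod_const, Nat.card_Ico]
    have h3 : m + k - m = k := by omega
    rw [h3]
    congr 1
    rw [hCE]
    simp
  have hTsub : blockSet (m + k) ((m + k) + 1) (Nat.le_add_right (m + k) 1)
      (SSet a Rs (m + k)) (fun _ => Set.Ioi (R - δ)) ⊆ SSet a Rs ((m + k) + 1) :=
    blockSet_top_subset a ha0 hRs hδR.le (m + k)
  have hEsub : blockSet m (m + (k + 1)) (Nat.le_add_right m (k + 1))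
      (SSet a Rs m) CE ⊆ SSet a Rs (m + (k + 1)) := by
    rw [hCE]
    exact blockSet_climb_subset a ha0 ha1 hRs hγR m k hk hbL (R - δ)
  have hdisj : Disjoint
      (blockSet (m + k) ((m + k) + 1) (Nat.le_add_right (m + k) 1)
        (SSet a Rs (m + k)) (fun _ => Set.Ioi (R - δ)))
      (blockSet m (m + (k + 1)) (Nat.le_add_right m (k + 1)) (SSet a Rs m) CE) := by
    rw [Set.disjoint_left]
    rintro v ⟨_, hvT⟩ ⟨_, hvE⟩
    have h1 := hvT ⟨m + k, by omega⟩ (by simp only [Fin.val_mk]; omega)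
    have h2 := hvE ⟨m + k, by omega⟩ (by simp only [Fin.val_mk]; omega)
    simp only [Fin.val_mk] at h1 h2
    rw [hCE] at h2
    simp only [if_pos rfl] at h2
    have h3 : R - δ < v ⟨m + k, by omega⟩ := h1
    have h4 : v ⟨m + k, by omega⟩ ≤ R - δ := h2.2
    linarith
  calc Fn μ a Rs (m + k) * μ (Set.Ioi (R - δ))
      + Fn μ a Rs m * (μ (Set.Ioi (R - γ)) ^ k * μ (Set.Ioc (-(a * L)) (R - δ)))
      = Measure.pi (fun _ : Fin ((m + k) + 1) => μ)
          (blockSet (m + k) ((m + k) + 1) (Nat.le_add_right (m + k) 1)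
            (SSet a Rs (m + k)) (fun _ => Set.Ioi (R - δ)))
        + Measure.pi (fun _ : Fin (m + (k + 1)) => μ)
            (blockSet m (m + (k + 1)) (Nat.le_add_right m (k + 1)) (SSet a Rs m) CE) := by
        rw [hT, hE, hprodT, hprodE]
        rfl
    _ = Measure.pi (fun _ : Fin ((m + k) + 1) => μ)
          ((blockSet (m + k) ((m + k) + 1) (Nat.le_add_right (m + k) 1)
            (SSet a Rs (m + k)) (fun _ => Set.Ioi (R - δ)))
          ∪ (blockSet m (m + (k + 1)) (Nat.le_add_right m (k + 1)) (SSet a Rs m) CE)) := by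
        rw [measure_union hdisj
          (measurableSet_blockSet (Nat.le_add_right m (k + 1))
            (measurableSet_SSet a Rs m) hCEmeas)]
        rfl
    _ ≤ Measure.pi (fun _ : Fin ((m + k) + 1) => μ) (SSet a Rs ((m + k) + 1)) := by
        apply measure_mono
        intro v hv
        rcases hv with hv | hv
        · exact hTsub hv
        · exact hEsub hv
    _ = Fn μ a Rs (m + k + 1) := rfl

/-- comparison of persistence probabilities for bounded-above innovations
with essential supremum `R`: there are `δ > 0` and `c > 0` with
`P_{R_*}(T_0 > n) ≤ c · P_x(T_0 > n)` for `x ∈ [R_* − δ, R_*]`, `n ≥ 1`; in particular,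
for any probability measure `ν` on `(0, R_*]` charging `[R_* − δ, R_*]` there is `c₂ > 0`
with `P_ν(T_0 > n) ≥ c₂ · P_x(T_0 > n)` for all `n ≥ 1` and `x ∈ (0, R_*]`. -/
theorem ar1_condition_A2
    (P : Measure Ω) [IsProbabilityMeasure P]
    (ξ : ℕ → Ω → ℝ) (hmeas : ∀ n, Measurable (ξ n))
    (hindep : iIndepFun ξ P)
    (hident : ∀ n, Measure.map (ξ n) P = Measure.map (ξ 0) P)
    (a : ℝ) (ha : a ∈ Set.Ioo (0 : ℝ) 1)
    (R : ℝ) (hR : 0 < R)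
    (hbd : ∀ᵐ ω ∂P, ξ 0 ω ≤ R)
    (hess : ∀ ε : ℝ, 0 < ε → 0 < P {ω | R - ε < ξ 0 ω})
    (hneg : 0 < P {ω | ξ 0 ω < 0})
    (hcond : P {ω | ξ 0 ω ≤ -(a * (R / (1 - a)))} + P {ω | ξ 0 ω = R} < 1) :
    ∃ δ : ℝ, 0 < δ ∧ ∃ c : ℝ≥0, 0 < c ∧
      (∀ x ∈ Set.Icc (R / (1 - a) - δ) (R / (1 - a)), ∀ n : ℕ, 1 ≤ n →
        P (stayAbove a ξ (fun _ => R / (1 - a)) 0 n) ≤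
          (c : ℝ≥0∞) * P (stayAbove a ξ (fun _ => x) 0 n)) ∧
      (∀ ν : Measure ℝ, IsProbabilityMeasure ν →
        ν (Set.Ioc (0 : ℝ) (R / (1 - a)))ᶜ = 0 →
        0 < ν (Set.Icc (R / (1 - a) - δ) (R / (1 - a))) →
        ∃ c₂ : ℝ≥0, 0 < c₂ ∧
          ∀ n : ℕ, 1 ≤ n → ∀ x ∈ Set.Ioc (0 : ℝ) (R / (1 - a)),
            (c₂ : ℝ≥0∞) * P (stayAbove a ξ (fun _ => x) 0 n) ≤
              ∫⁻ y, P (stayAbove a ξ (fun _ => y) 0 n) ∂ν) := by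
  have ha0 : 0 < a := ha.1
  have ha1 : a < 1 := ha.2
  have h1a : 0 < 1 - a := by linarith
  set Rs : ℝ := R / (1 - a) with hRsdef
  have hRsp : 0 < Rs := div_pos hR h1a
  have hRR : (1 - a) * Rs = R := by
    rw [hRsdef]
    field_simp
  -- the innovation law
  set μ : Measure ℝ := Measure.map (ξ 0) P with hμdef
  have hprobμ : IsProbabilityMeasure μ := Measure.isProbabilityMeasure_map (hmeas 0).aemeasurable
  have hPF : ∀ (x : ℝ) (n : ℕ),
      P (stayAbove a ξ (fun _ => x) 0 n) = Fn μ a x n := fun x n =>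
    P_stay_eq P ξ hmeas hindep hident a x n
  -- basic facts about μ
  have hμIoiR : μ (Set.Ioi R) = 0 := by
    rw [hμdef, Measure.map_apply (hmeas 0) measurableSet_Ioi]
    have hseteq : ξ 0 ⁻¹' Set.Ioi R = {ω | ¬ ξ 0 ω ≤ R} := by
      ext ω; simp [not_le]
    rw [hseteq]
    exact ae_iff.mp hbd
  have hμIoi : ∀ ε : ℝ, 0 < ε → 0 < μ (Set.Ioi (R - ε)) := by
    intro ε hε
    rw [hμdef, Measure.map_apply (hmeas 0) measurableSet_Ioi]
    exact hess ε hε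
  have hμcond : μ (Set.Iic (-(a * Rs))) + μ {R} < 1 := by
    rw [hμdef, Measure.map_apply (hmeas 0) measurableSet_Iic,
      Measure.map_apply (hmeas 0) (measurableSet_singleton R)]
    exact hcond
  have hm₀ : 0 < μ (Set.Ioo (-(a * Rs)) R) := by
    by_contra hcontra
    have h0 : μ (Set.Ioo (-(a * Rs)) R) = 0 := by
      simpa using hcontra
    have hcover : (Set.univ : Set ℝ) ⊆
        Set.Iic (-(a * Rs)) ∪ (Set.Ioo (-(a * Rs)) R ∪ ({R} ∪ Set.Ioi R)) := by
      intro s _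
      rcases le_or_gt s (-(a * Rs)) with h1 | h1
      · exact Or.inl h1
      · rcases lt_trichotomy s R with h2 | h2 | h2
        · exact Or.inr (Or.inl ⟨h1, h2⟩)
        · exact Or.inr (Or.inr (Or.inl h2))
        · exact Or.inr (Or.inr (Or.inr h2))
    have h1 : (1 : ℝ≥0∞) ≤ μ (Set.Iic (-(a * Rs))) + μ {R} := by
      calc (1 : ℝ≥0∞) = μ Set.univ := measure_univ.symm
        _ ≤ μ (Set.Iic (-(a * Rs)) ∪ (Set.Ioo (-(a * Rs)) R ∪ ({R} ∪ Set.Ioi R))) :=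
            measure_mono hcover
        _ ≤ μ (Set.Iic (-(a * Rs))) + μ (Set.Ioo (-(a * Rs)) R ∪ ({R} ∪ Set.Ioi R)) :=
            measure_union_le _ _
        _ ≤ μ (Set.Iic (-(a * Rs))) + (μ (Set.Ioo (-(a * Rs)) R) + μ ({R} ∪ Set.Ioi R)) :=
            add_le_add_right (measure_union_le _ _) _
        _ ≤ μ (Set.Iic (-(a * Rs))) + (μ (Set.Ioo (-(a * Rs)) R) + (μ {R} + μ (Set.Ioi R))) :=
            add_le_add_right (add_le_add_right (measure_union_le _ _) _) _
        _ = μ (Set.Iic (-(a * Rs))) + μ {R} := by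
            rw [h0, hμIoiR, zero_add, add_zero]
    exact absurd (lt_of_lt_of_le hμcond h1) (lt_irrefl _)
  -- choice of δ
  set w : ℝ := min (R / 2) (Rs / 2) with hwdef
  have hw : 0 < w := lt_min (by linarith) (by linarith)
  set A : ℕ → Set ℝ :=
    fun j => Set.Ioc (-(a * (Rs - w / (j + 1)))) (R - w / (j + 1)) with hAdef
  have hAmono : Monotone A := by
    intro i j hij
    rw [hAdef]
    have hden : w / ((j : ℝ) + 1) ≤ w / ((i : ℝ) + 1) := by
      apply div_le_div_of_nonneg_left hw.le (by positivity)
      exact_mod_cast Nat.succ_le_succ hij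
    apply Set.Ioc_subset_Ioc
    · have : Rs - w / ((i : ℝ) + 1) ≤ Rs - w / ((j : ℝ) + 1) := by linarith
      nlinarith
    · linarith
  have hAcover : Set.Ioo (-(a * Rs)) R ⊆ ⋃ j, A j := by
    intro s hs
    have hs1 : -(a * Rs) < s := hs.1
    have hs2 : s < R := hs.2
    have hε1 : 0 < (s + a * Rs) / a := by
      apply div_pos (by linarith) ha0
    have hε2 : 0 < R - s := by linarith
    set ε : ℝ := min ((s + a * Rs) / a) (R - s) with hεdef
    have hε : 0 < ε := lt_min hε1 hε2
    obtain ⟨j, hj⟩ := exists_nat_one_div_lt (div_pos hε hw)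
    have huj : w / ((j : ℝ) + 1) < ε := by
      have h2 : w * (1 / ((j : ℝ) + 1)) < w * (ε / w) :=
        mul_lt_mul_of_pos_left hj hw
      rw [mul_div_assoc'] at h2
      rw [mul_one] at h2
      rwa [mul_div_cancel₀ _ hw.ne'] at h2
    refine Set.mem_iUnion.mpr ⟨j, ?_⟩
    rw [hAdef]
    constructor
    · have h3 : w / ((j : ℝ) + 1) < (s + a * Rs) / a := lt_of_lt_of_le huj (min_le_left _ _)
      have h4 : a * (w / ((j : ℝ) + 1)) < s + a * Rs := by
        rw [← lt_div_iff₀' ha0]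
        exact h3
      have : a * (Rs - w / ((j : ℝ) + 1)) = a * Rs - a * (w / ((j : ℝ) + 1)) := by ring
      rw [this]
      linarith
    · have h3 : w / ((j : ℝ) + 1) < R - s := lt_of_lt_of_le huj (min_le_right _ _)
      linarith
  have hsup : 0 < ⨆ j, μ (A j) := by
    calc (0 : ℝ≥0∞) < μ (Set.Ioo (-(a * Rs)) R) := hm₀
      _ ≤ μ (⋃ j, A j) := measure_mono hAcover
      _ = ⨆ j, μ (A j) := hAmono.measure_iUnion
  obtain ⟨j₀, hj₀⟩ := lt_iSup_iff.mp hsup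
  set δ : ℝ := w / ((j₀ : ℝ) + 1) with hδdef
  have hδpos : 0 < δ := by positivity
  have hδw : δ ≤ w := by
    rw [hδdef]
    apply div_le_self hw.le
    have : (0 : ℝ) ≤ (j₀ : ℝ) := Nat.cast_nonneg j₀
    linarith
  have hδR2 : δ ≤ R / 2 := le_trans hδw (min_le_left _ _)
  have hδRs2 : δ ≤ Rs / 2 := le_trans hδw (min_le_right _ _)
  set L : ℝ := Rs - δ with hLdef
  have hLpos : 0 < L := by rw [hLdef]; linarith
  have hm' : 0 < μ (Set.Ioc (-(a * L)) (R - δ)) := by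
    have : A j₀ = Set.Ioc (-(a * L)) (R - δ) := by
      rw [hAdef, hLdef, hδdef]
    rwa [this] at hj₀
  set γ : ℝ := (1 - a) * δ / 2 with hγdef
  have hγpos : 0 < γ := by rw [hγdef]; positivity
  have hγR : γ < R := by
    have h2 : γ ≤ δ / 2 := by rw [hγdef]; nlinarith
    linarith
  have hδRpos : 0 < R - δ := by linarith
  have hγRpos : 0 < R - γ := by linarith
  -- choice of k
  obtain ⟨k₀, hk₀⟩ := exists_pow_lt_of_lt_one (div_pos hγpos hR) ha1
  set k : ℕ := k₀ + 1 with hkdef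
  have hk1 : 1 ≤ k := Nat.le_add_left 1 k₀
  have hak : a ^ k * R ≤ γ := by
    have h1 : a ^ k ≤ a ^ k₀ :=
      pow_le_pow_of_le_one ha0.le ha1.le (Nat.le_succ k₀)
    have h2 : a ^ k₀ * R < γ := by
      rw [← lt_div_iff₀ hR]
      exact hk₀
    nlinarith [pow_nonneg ha0.le k]
  have hbL : L ≤ (R - γ) * (1 - a ^ k) / (1 - a) := by
    rw [le_div_iff₀ h1a]
    have hp : (0 : ℝ) ≤ a ^ k := pow_nonneg ha0.le k
    have hq : 0 ≤ γ * a ^ k := mul_nonneg hγpos.le hp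
    have hL1 : L * (1 - a) = R - (1 - a) * δ := by
      rw [hLdef]
      calc (Rs - δ) * (1 - a) = (1 - a) * Rs - (1 - a) * δ := by ring
        _ = R - (1 - a) * δ := by rw [hRR]
    have hak' : R * a ^ k ≤ γ := by rw [mul_comm]; exact hak
    have hexp : (R - γ) * (1 - a ^ k) = R - γ - R * a ^ k + γ * a ^ k := by ring
    have hγrel : (1 - a) * δ = 2 * γ := by rw [hγdef]; ring
    rw [hexp, hL1]
    linarith
  -- the constants
  set t : ℝ≥0∞ := μ (Set.Ioi (R - δ)) with htdef
  set t' : ℝ≥0∞ := μ (Set.Ioi (R - γ)) with ht'def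
  set m' : ℝ≥0∞ := μ (Set.Ioc (-(a * L)) (R - δ)) with hm'def
  have htpos : 0 < t := hμIoi δ hδpos
  have ht'pos : 0 < t' := hμIoi γ hγpos
  have ht1 : t ≤ 1 := prob_le_one
  have ht'1 : t' ≤ 1 := prob_le_one
  have hm'1 : m' ≤ 1 := prob_le_one
  set c₁ : ℝ≥0∞ := t' ^ k * m' with hc₁def
  have hc₁pos : 0 < c₁ := ENNReal.mul_pos (pow_ne_zero k ht'pos.ne') hm'.ne'
  have hc₁le : c₁ ≤ 1 := by
    calc c₁ ≤ 1 ^ k * 1 := mul_le_mul' (pow_le_pow_left' ht'1 k) hm'1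
      _ = 1 := by simp
  have hc₁top : c₁ ≠ ⊤ := ne_top_of_le_ne_top ENNReal.one_ne_top hc₁le
  -- the key comparison
  have hkey : ∀ n : ℕ, c₁ * Fn μ a Rs n ≤ Fn μ a (Rs - δ) n := by
    intro n
    rcases le_or_gt k n with hkn | hkn
    · obtain ⟨m, rfl⟩ : ∃ m, n = m + k := ⟨n - k, by omega⟩
      have hratio := Fn_ratio μ a ha0 ha1 Rs R δ γ L hRsp hδRpos hγRpos k hk1 hbL m
      have hdel := Fn_deletion μ a ha0 Rs δ R hRR hμIoiR (m + k)
      have hner : t * Fn μ a Rs (m + k) ≠ ⊤ := by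
        apply ne_top_of_le_ne_top ENNReal.one_ne_top
        calc t * Fn μ a Rs (m + k) ≤ 1 * 1 := mul_le_mul' ht1 (Fn_le_one μ a Rs (m + k))
          _ = 1 := by simp
      have hchain : t * Fn μ a Rs (m + k) + c₁ * Fn μ a Rs (m + k)
          ≤ t * Fn μ a Rs (m + k) + Fn μ a (Rs - δ) (m + k) := by
        calc t * Fn μ a Rs (m + k) + c₁ * Fn μ a Rs (m + k)
            ≤ Fn μ a Rs (m + k) * t + Fn μ a Rs m * (t' ^ k * m') := by
              rw [mul_comm t]
              apply add_le_add_right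
              rw [hc₁def, mul_comm]
              exact mul_le_mul_left (Fn_anti μ a Rs (Nat.le_add_right m k)) _
          _ ≤ Fn μ a Rs (m + k + 1) := hratio
          _ ≤ Fn μ a (Rs - δ) (m + k) + t * Fn μ a Rs (m + k) := hdel
          _ = t * Fn μ a Rs (m + k) + Fn μ a (Rs - δ) (m + k) := add_comm _ _
      exact (ENNReal.add_le_add_iff_left hner).mp hchain
    · have h2 : Rs - δ - a * (Rs - δ) = R - 2 * γ := by
        have h3 : Rs - δ - a * (Rs - δ) = (1 - a) * Rs - (1 - a) * δ := by ring
        have h4 : (1 - a) * δ = 2 * γ := by rw [hγdef]; ring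
        rw [h3, hRR]
        linarith
      have hinv2 : Rs - δ ≤ a * (Rs - δ) + (R - γ) := by linarith
      have hlow : t' ^ k ≤ Fn μ a (Rs - δ) k := by
        rw [ht'def]
        exact Fn_lower μ a ha0 (by linarith) hinv2 k
      calc c₁ * Fn μ a Rs n ≤ c₁ * 1 := mul_le_mul_right (Fn_le_one μ a Rs n) _
        _ = t' ^ k * m' := by rw [mul_one]
        _ ≤ t' ^ k * 1 := mul_le_mul_right hm'1 _
        _ = t' ^ k := by rw [mul_one]
        _ ≤ Fn μ a (Rs - δ) k := hlow
        _ ≤ Fn μ a (Rs - δ) n := Fn_anti μ a (Rs - δ) hkn.le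
  -- conclusion
  refine ⟨δ, hδpos, (c₁⁻¹).toNNReal, ?_, ?_, ?_⟩
  · exact ENNReal.toNNReal_pos (ENNReal.inv_ne_zero.mpr hc₁top)
      (ENNReal.inv_ne_top.mpr hc₁pos.ne')
  · intro x hx n _
    rw [hPF, hPF, ENNReal.coe_toNNReal (ENNReal.inv_ne_top.mpr hc₁pos.ne')]
    calc Fn μ a Rs n = c₁⁻¹ * (c₁ * Fn μ a Rs n) := by
          rw [← mul_assoc, ENNReal.inv_mul_cancel hc₁pos.ne' hc₁top, one_mul]
      _ ≤ c₁⁻¹ * Fn μ a (Rs - δ) n := mul_le_mul_right (hkey n) _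
      _ ≤ c₁⁻¹ * Fn μ a x n := mul_le_mul_right (Fn_mono μ a ha0 hx.1 n) _
  · intro ν hνprob hνsupp hνmass
    have hνtop : ν (Set.Icc (Rs - δ) Rs) * c₁ ≠ ⊤ :=
      ENNReal.mul_ne_top (measure_ne_top ν _) hc₁top
    refine ⟨(ν (Set.Icc (Rs - δ) Rs) * c₁).toNNReal, ?_, ?_⟩
    · exact ENNReal.toNNReal_pos
        (ENNReal.mul_pos hνmass.ne' hc₁pos.ne').ne' hνtop
    · intro n _ x hx
      rw [ENNReal.coe_toNNReal hνtop, hPF]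
      calc ν (Set.Icc (Rs - δ) Rs) * c₁ * Fn μ a x n
          ≤ ν (Set.Icc (Rs - δ) Rs) * c₁ * Fn μ a Rs n :=
            mul_le_mul_right (Fn_mono μ a ha0 hx.2 n) _
        _ = ν (Set.Icc (Rs - δ) Rs) * (c₁ * Fn μ a Rs n) := by rw [mul_assoc]
        _ ≤ ν (Set.Icc (Rs - δ) Rs) * Fn μ a (Rs - δ) n := mul_le_mul_right (hkey n) _
        _ = Fn μ a (Rs - δ) n * ν (Set.Icc (Rs - δ) Rs) := mul_comm _ _
        _ ≤ ∫⁻ y, P (stayAbove a ξ (fun _ => y) 0 n) ∂ν := by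
            rw [← lintegral_indicator_const measurableSet_Icc]
            apply lintegral_mono
            intro y
            by_cases hy : y ∈ Set.Icc (Rs - δ) Rs
            · rw [Set.indicator_of_mem hy]
              show Fn μ a (Rs - δ) n ≤ P (stayAbove a ξ (fun _ => y) 0 n)
              rw [hPF]
              exact Fn_mono μ a ha0 hy.1 n
            · rw [Set.indicator_of_notMem hy]
              exact zero_le

end AR1
end
end

section
/- Assume E[|ξ_1|^δ] < ∞ for some δ > 0 and P(ξ_1>0)·P(ξ_1<0) > 0, and let λ_a ∈ (0,∞) be the persistence exponent and π the stationary distribution (the law of Σ_{k≥1} a^{k−1}ξ_k). Then for every r > 0 with π([r,∞)) > 0 there exist ε_r > 0 and a constant C_r < ∞ such that sup_{x∈(0,r)} P_x(T_0 ∧ σ_r > n) ≤ C_r·e^{−(λ_a+ε_r)·n} for all n ≥ 0, where σ_r := inf{n ≥ 1 : X_n > r}. -/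
open MeasureTheory ProbabilityTheory Filter Set Real
open scoped ENNReal NNReal

noncomputable section

namespace AR1

variable {Ω : Type*} [MeasurableSpace Ω]

/-- The event `{T_0 ∧ σ_r > n}`: the chain stays in `(0, r]` at all times `1,…,n`. -/
def stayIn (a : ℝ) (ξ : ℕ → Ω → ℝ) (x₀ : Ω → ℝ) (r : ℝ) (n : ℕ) : Set Ω :=
  {ω | ∀ k, 1 ≤ k → k ≤ n → 0 < X a ξ x₀ k ω ∧ X a ξ x₀ k ω ≤ r}

set_option linter.unusedSectionVars false
set_option linter.unusedVariables false
set_option maxHeartbeats 2000000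

lemma measurable_X {a : ℝ} {ξ : ℕ → Ω → ℝ} {x₀ : Ω → ℝ}
    (hξ : ∀ n, Measurable (ξ n)) (hx : Measurable x₀) (n : ℕ) :
    Measurable (X a ξ x₀ n) := by
  induction n with
  | zero => exact hx
  | succ n ih => exact (measurable_const.mul ih).add (hξ n)

lemma X_shift (a : ℝ) (ξ : ℕ → Ω → ℝ) (x₀ : Ω → ℝ) (t k : ℕ) (ω : Ω) :
    X a ξ x₀ (t + k) ω = X a (fun j => ξ (t + j)) (fun _ => X a ξ x₀ t ω) k ω := by
  induction k with
  | zero => rfl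
  | succ k ih =>
      show a * X a ξ x₀ (t + k) ω + ξ (t + k) ω = _
      rw [ih]; rfl

lemma X_mono {a : ℝ} (ha : 0 < a) (ξ : ℕ → Ω → ℝ) {y z : ℝ} (hyz : y ≤ z) (k : ℕ) (ω : Ω) :
    X a ξ (fun _ => y) k ω ≤ X a ξ (fun _ => z) k ω := by
  induction k with
  | zero => exact hyz
  | succ k ih =>
      show a * X a ξ (fun _ => y) k ω + ξ k ω ≤ a * X a ξ (fun _ => z) k ω + ξ k ω
      exact add_le_add_left (mul_le_mul_of_nonneg_left ih ha.le) _

lemma X_ge_of_noise_ge {a : ℝ} (ha : 0 < a) {ξ : ℕ → Ω → ℝ} {y c : ℝ} (hy : 0 ≤ y) {m : ℕ}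
    (ω : Ω) (hc : ∀ j, j < m → c ≤ ξ j ω) :
    ∀ k, k ≤ m → (∑ j ∈ Finset.range k, a ^ j) * c ≤ X a ξ (fun _ => y) k ω := by
  intro k
  induction k with
  | zero => intro _; simpa [X] using hy
  | succ k ih =>
      intro hk1
      have hk : k ≤ m := le_of_lt (Nat.lt_of_succ_le hk1)
      have h1 : (∑ j ∈ Finset.range (k + 1), a ^ j) * c
          = a * ((∑ j ∈ Finset.range k, a ^ j) * c) + c := by
        rw [geom_sum_succ]; ring
      rw [h1]
      show _ ≤ a * X a ξ (fun _ => y) k ω + ξ k ω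
      exact add_le_add (mul_le_mul_of_nonneg_left (ih hk) ha.le)
        (hc k (Nat.lt_of_succ_le hk1))

lemma X_congr {Ω' : Type*} (a : ℝ) (ξ : ℕ → Ω → ℝ) (ξ' : ℕ → Ω' → ℝ) (y : ℝ)
    {k : ℕ} {ω : Ω} {ω' : Ω'} (h : ∀ j, j < k → ξ j ω = ξ' j ω') :
    X a ξ (fun _ => y) k ω = X a ξ' (fun _ => y) k ω' := by
  induction k with
  | zero => rfl
  | succ k ih =>
      show a * X a ξ (fun _ => y) k ω + ξ k ω = a * X a ξ' (fun _ => y) k ω' + ξ' k ω'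
      rw [ih fun j hj => h j (hj.trans (Nat.lt_succ_self k)), h k (Nat.lt_succ_self k)]

/-- canonical noise on `Fin l → ℝ` -/
def ζ (l : ℕ) : ℕ → (Fin l → ℝ) → ℝ := fun j z => if h : j < l then z ⟨j, h⟩ else 0

lemma measurable_ζ (l j : ℕ) : Measurable (ζ l j) := by
  unfold ζ; split_ifs with h
  · exact measurable_pi_apply _
  · exact measurable_const

def blk (ξ : ℕ → Ω → ℝ) (s l : ℕ) : Ω → Fin l → ℝ := fun ω j => ξ (s + j) ω

lemma measurable_blk {ξ : ℕ → Ω → ℝ} (hξ : ∀ n, Measurable (ξ n)) (s l : ℕ) :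
    Measurable (blk ξ s l) :=
  measurable_pi_lambda _ fun _ => hξ _

lemma blk_preimage_stayAbove (a : ℝ) (ξ : ℕ → Ω → ℝ) (s l : ℕ) (y : ℝ) :
    blk ξ s l ⁻¹' (stayAbove a (ζ l) (fun _ => y) 0 l)
      = {ω | ∀ k, 1 ≤ k → k ≤ l → 0 < X a (fun j => ξ (s + j)) (fun _ => y) k ω} := by
  ext ω
  simp only [Set.mem_preimage, stayAbove, Set.mem_setOf_eq]
  refine forall_congr' fun k => imp_congr_right fun _ => imp_congr_right fun hk => ?_
  rw [X_congr a (ζ l) (fun j => ξ (s + j)) y (ω := blk ξ s l ω) (ω' := ω)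
    (fun j hj => by simp [ζ, blk, dif_pos (lt_of_lt_of_le hj hk)])]

lemma blk_preimage_stayIn (a : ℝ) (ξ : ℕ → Ω → ℝ) (l : ℕ) (y r : ℝ) :
    blk ξ 0 l ⁻¹' (stayIn a (ζ l) (fun _ => y) r l) = stayIn a ξ (fun _ => y) r l := by
  ext ω
  simp only [Set.mem_preimage, stayIn, Set.mem_setOf_eq]
  refine forall_congr' fun k => imp_congr_right fun _ => imp_congr_right fun hk => ?_
  rw [X_congr a (ζ l) ξ y (ω := blk ξ 0 l ω) (ω' := ω)
    (fun j hj => by simp [ζ, blk, dif_pos (lt_of_lt_of_le hj hk)])]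

lemma measurableSet_stayAbove_canon (a : ℝ) (l : ℕ) (y M : ℝ) :
    MeasurableSet (stayAbove a (ζ l) (fun _ => y) M l) := by
  have : stayAbove a (ζ l) (fun _ => y) M l
      = ⋂ k, {z : Fin l → ℝ | 1 ≤ k → k ≤ l → M < X a (ζ l) (fun _ => y) k z} := by
    ext z; simp [stayAbove, Set.mem_iInter]
  rw [this]
  refine MeasurableSet.iInter fun k => ?_
  by_cases h1 : 1 ≤ k ∧ k ≤ l
  · have : {z : Fin l → ℝ | 1 ≤ k → k ≤ l → M < X a (ζ l) (fun _ => y) k z}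
        = {z | M < X a (ζ l) (fun _ => y) k z} := by
      ext z; simp [h1.1, h1.2]
    rw [this]
    exact measurableSet_lt measurable_const
      (measurable_X (fun j => measurable_ζ l j) measurable_const k)
  · have : {z : Fin l → ℝ | 1 ≤ k → k ≤ l → M < X a (ζ l) (fun _ => y) k z} = Set.univ := by
      ext z
      simp only [Set.mem_setOf_eq, Set.mem_univ, iff_true]
      intro hk1 hk2; exact absurd ⟨hk1, hk2⟩ h1
    rw [this]; exact MeasurableSet.univ

lemma measurableSet_stayIn_canon (a : ℝ) (l : ℕ) (y r : ℝ) :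
    MeasurableSet (stayIn a (ζ l) (fun _ => y) r l) := by
  have : stayIn a (ζ l) (fun _ => y) r l
      = ⋂ k, {z : Fin l → ℝ | 1 ≤ k → k ≤ l →
          (0 < X a (ζ l) (fun _ => y) k z ∧ X a (ζ l) (fun _ => y) k z ≤ r)} := by
    ext z; simp [stayIn, Set.mem_iInter]
  rw [this]
  refine MeasurableSet.iInter fun k => ?_
  by_cases h1 : 1 ≤ k ∧ k ≤ l
  · have he : {z : Fin l → ℝ | 1 ≤ k → k ≤ l →
        (0 < X a (ζ l) (fun _ => y) k z ∧ X a (ζ l) (fun _ => y) k z ≤ r)}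
        = {z | 0 < X a (ζ l) (fun _ => y) k z} ∩ {z | X a (ζ l) (fun _ => y) k z ≤ r} := by
      ext z; simp [h1.1, h1.2, Set.mem_inter_iff]
    rw [he]
    have hm := measurable_X (a := a) (fun j => measurable_ζ l j) (measurable_const (a := y)) k
    exact (measurableSet_lt measurable_const hm).inter (measurableSet_le hm measurable_const)
  · have : {z : Fin l → ℝ | 1 ≤ k → k ≤ l →
        (0 < X a (ζ l) (fun _ => y) k z ∧ X a (ζ l) (fun _ => y) k z ≤ r)} = Set.univ := by
      ext z
      simp only [Set.mem_setOf_eq, Set.mem_univ, iff_true]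
      intro hk1 hk2; exact absurd ⟨hk1, hk2⟩ h1
    rw [this]; exact MeasurableSet.univ


section Prob

variable (P : Measure Ω) [IsProbabilityMeasure P] (ξ : ℕ → Ω → ℝ)

lemma map_blk (hmeas : ∀ n, Measurable (ξ n))
    (hindep : iIndepFun ξ P)
    (hident : ∀ n, Measure.map (ξ n) P = Measure.map (ξ 0) P) (s l : ℕ) :
    Measure.map (blk ξ s l) P = Measure.pi (fun _ : Fin l => Measure.map (ξ 0) P) := by
  haveI : IsProbabilityMeasure (Measure.map (ξ 0) P) :=
    Measure.isProbabilityMeasure_map (hmeas 0).aemeasurable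
  refine (Measure.pi_eq fun sets hsets => ?_).symm
  rw [Measure.map_apply (measurable_blk hmeas s l) (MeasurableSet.univ_pi hsets)]
  classical
  set sets' : ℕ → Set ℝ := fun i =>
    if h : s ≤ i ∧ i < s + l then sets ⟨i - s, by omega⟩ else Set.univ with hsets'
  have hEq : blk ξ s l ⁻¹' (Set.pi Set.univ sets)
      = ⋂ i ∈ Finset.Ico s (s + l), ξ i ⁻¹' sets' i := by
    ext ω
    simp only [Set.mem_preimage, Set.mem_pi, Set.mem_univ, forall_true_left, Set.mem_iInter,
      Finset.mem_Ico]
    constructor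
    · intro hmem i hi
      have h2 : s ≤ i ∧ i < s + l := hi
      have hlt : i - s < l := by omega
      have h3 := hmem ⟨i - s, hlt⟩
      simp only [blk] at h3
      have h4 : s + (i - s) = i := by omega
      rw [h4] at h3
      rw [hsets']
      simp only [dif_pos h2]
      exact h3
    · intro hmem j
      have hj : (j : ℕ) < l := j.isLt
      have h2 : s ≤ s + (j : ℕ) ∧ s + (j : ℕ) < s + l :=
        ⟨Nat.le_add_right _ _, Nat.add_lt_add_left hj _⟩
      have h3 := hmem (s + (j : ℕ)) h2
      rw [hsets'] at h3
      simp only [dif_pos h2] at h3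
      have h4 : (⟨s + (j : ℕ) - s, by omega⟩ : Fin l) = j := Fin.ext (by simp)
      rw [h4] at h3
      exact h3
  rw [hEq, hindep.measure_inter_preimage_eq_mul (Finset.Ico s (s + l))
    (fun i hi => by
      simp only [hsets']
      split_ifs with h
      · exact hsets _
      · exact MeasurableSet.univ)]
  rw [Finset.prod_Ico_eq_prod_range]
  simp only [Nat.add_sub_cancel_left]
  rw [← Fin.prod_univ_eq_prod_range (fun i => P (ξ (s + i) ⁻¹' sets' (s + i))) l]
  refine Finset.prod_congr rfl fun j _ => ?_
  have hj : (j : ℕ) < l := j.isLt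
  have h2 : s ≤ s + (j : ℕ) ∧ s + (j : ℕ) < s + l :=
    ⟨Nat.le_add_right _ _, Nat.add_lt_add_left hj _⟩
  show P (ξ (s + (j : ℕ)) ⁻¹' sets' (s + (j : ℕ))) = _
  rw [hsets']
  simp only [dif_pos h2]
  have h4 : (⟨s + (j : ℕ) - s, by omega⟩ : Fin l) = j := Fin.ext (by simp)
  rw [h4, ← Measure.map_apply (hmeas (s + (j : ℕ))) (hsets j), hident (s + (j : ℕ))]

lemma indepBlk (hmeas : ∀ n, Measurable (ξ n))
    (hindep : iIndepFun ξ P)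
    {s₁ l₁ s₂ l₂ : ℕ} (h : s₁ + l₁ ≤ s₂) :
    IndepFun (blk ξ s₁ l₁) (blk ξ s₂ l₂) P := by
  have hdisj : Disjoint (Finset.Ico s₁ (s₁ + l₁)) (Finset.Ico s₂ (s₂ + l₂)) := by
    rw [Finset.disjoint_left]
    intro i hi1 hi2
    rw [Finset.mem_Ico] at hi1 hi2
    omega
  have h0 := hindep.indepFun_finset (Finset.Ico s₁ (s₁ + l₁)) (Finset.Ico s₂ (s₂ + l₂))
    hdisj hmeas
  have h1 := h0.comp
    (φ := fun (v : ((Finset.Ico s₁ (s₁ + l₁) : Finset ℕ) : Type) → ℝ) (j : Fin l₁) =>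
      v ⟨s₁ + (j : ℕ), Finset.mem_Ico.mpr ⟨Nat.le_add_right _ _, Nat.add_lt_add_left j.isLt _⟩⟩)
    (ψ := fun (v : ((Finset.Ico s₂ (s₂ + l₂) : Finset ℕ) : Type) → ℝ) (j : Fin l₂) =>
      v ⟨s₂ + (j : ℕ), Finset.mem_Ico.mpr ⟨Nat.le_add_right _ _, Nat.add_lt_add_left j.isLt _⟩⟩)
    (measurable_pi_lambda _ fun _ => measurable_pi_apply _)
    (measurable_pi_lambda _ fun _ => measurable_pi_apply _)
  exact h1

lemma exists_climb
    (hmeas : ∀ n, Measurable (ξ n))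
    (hindep : iIndepFun ξ P)
    (hident : ∀ n, Measure.map (ξ n) P = Measure.map (ξ 0) P)
    (hsign : 0 < P {ω | 0 < ξ 0 ω} * P {ω | ξ 0 ω < 0})
    {a : ℝ} (ha : a ∈ Set.Ioo (0 : ℝ) 1) {r : ℝ} (hr : 0 < r)
    (Xinf : Ω → ℝ) (hXinf : Measurable Xinf)
    (hconv : ∀ᵐ ω ∂P,
      Tendsto (fun N : ℕ => ∑ k ∈ Finset.range N, a ^ k * ξ k ω) atTop (nhds (Xinf ω)))
    (hmass : 0 < Measure.map Xinf P (Set.Ici r)) :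
    ∃ c : ℝ, (1 - a) * r < c ∧ 0 < P (ξ 0 ⁻¹' Set.Ici c) := by
  obtain ⟨ha0, ha1⟩ := ha
  by_contra hcon
  push_neg at hcon
  have hzero : ∀ c : ℝ, (1 - a) * r < c → P (ξ 0 ⁻¹' Set.Ici c) = 0 := by
    intro c hc
    have := hcon c hc
    simpa [le_zero_iff] using this
  -- step A
  have hIoi : P (ξ 0 ⁻¹' Set.Ioi ((1 - a) * r)) = 0 := by
    have hunion : ξ 0 ⁻¹' Set.Ioi ((1 - a) * r)
        = ⋃ n : ℕ, ξ 0 ⁻¹' Set.Ici ((1 - a) * r + 1 / (n + 1)) := by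
      ext ω
      simp only [Set.mem_preimage, Set.mem_Ioi, Set.mem_iUnion, Set.mem_Ici]
      constructor
      · intro hgt
        obtain ⟨n, hn⟩ := exists_nat_one_div_lt (sub_pos.mpr hgt)
        exact ⟨n, by linarith⟩
      · rintro ⟨n, hn⟩
        have : (0:ℝ) < 1 / ((n:ℝ) + 1) := by positivity
        linarith
    rw [hunion]
    exact measure_iUnion_null fun n =>
      hzero _ (lt_add_of_pos_right _ (by positivity))
  -- step B
  have hB : ∀ k, P (ξ k ⁻¹' Set.Ioi ((1 - a) * r)) = 0 := by
    intro k
    rw [← Measure.map_apply (hmeas k) measurableSet_Ioi, hident k,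
      Measure.map_apply (hmeas 0) measurableSet_Ioi]
    exact hIoi
  -- step C: a.e. all noises are ≤ (1-a)r
  have hC : ∀ᵐ ω ∂P, ∀ k, ξ k ω ≤ (1 - a) * r := by
    rw [ae_iff]
    have : {ω | ¬ ∀ k, ξ k ω ≤ (1 - a) * r} ⊆ ⋃ k, ξ k ⁻¹' Set.Ioi ((1 - a) * r) := by
      intro ω hω
      push_neg at hω
      obtain ⟨k, hk⟩ := hω
      exact Set.mem_iUnion.mpr ⟨k, hk⟩
    exact measure_mono_null this (measure_iUnion_null hB)
  -- step D: a.e. on {Xinf ≥ r}, all noises equal (1-a)r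
  have hD : ∀ᵐ ω ∂P, Xinf ω ∈ Set.Ici r → ∀ k, ξ k ω = (1 - a) * r := by
    filter_upwards [hC, hconv] with ω hle hten hXr
    intro k₀
    refine le_antisymm (hle k₀) ?_
    by_contra hlt
    push_neg at hlt
    have he0 : 0 < (1 - a) * r - ξ k₀ ω := by linarith
    have hbound : ∀ N, k₀ < N →
        (∑ k ∈ Finset.range N, a ^ k * ξ k ω)
          ≤ r - a ^ k₀ * ((1 - a) * r - ξ k₀ ω) := by
      intro N hN
      have hsum1 : ∑ k ∈ Finset.range N, (a ^ k * ((1 - a) * r) - a ^ k * ξ k ω)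
          ≥ a ^ k₀ * ((1 - a) * r) - a ^ k₀ * ξ k₀ ω := by
        refine Finset.single_le_sum (f := fun k => a ^ k * ((1 - a) * r) - a ^ k * ξ k ω)
          (fun k _ => ?_) (Finset.mem_range.mpr hN)
        show (0:ℝ) ≤ a ^ k * ((1 - a) * r) - a ^ k * ξ k ω
        have hak : (0:ℝ) ≤ a ^ k := by positivity
        have := mul_le_mul_of_nonneg_left (hle k) hak
        linarith
      have hsum2 : ∑ k ∈ Finset.range N, a ^ k * ((1 - a) * r) ≤ r := by
        rw [← Finset.sum_mul]
        have hgeom : ∑ k ∈ Finset.range N, a ^ k = (1 - a ^ N) / (1 - a) := by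
          rw [geom_sum_eq (ne_of_lt ha1) N,
            div_eq_div_iff (by linarith : a - 1 ≠ 0) (by linarith : 1 - a ≠ 0)]
          ring
        rw [hgeom]
        rw [div_mul_eq_mul_div, mul_comm]
        rw [div_le_iff₀ (by linarith)]
        have haN : (0:ℝ) ≤ a ^ N := by positivity
        nlinarith [mul_nonneg (mul_nonneg (by linarith : (0:ℝ) ≤ 1 - a) hr.le) haN]
      have hexp : ∑ k ∈ Finset.range N, (a ^ k * ((1 - a) * r) - a ^ k * ξ k ω)
          = (∑ k ∈ Finset.range N, a ^ k * ((1 - a) * r))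
            - ∑ k ∈ Finset.range N, a ^ k * ξ k ω := by
        rw [Finset.sum_sub_distrib]
      rw [hexp] at hsum1
      nlinarith
    have hlim : Xinf ω ≤ r - a ^ k₀ * ((1 - a) * r - ξ k₀ ω) :=
      le_of_tendsto hten (Filter.eventually_atTop.mpr ⟨k₀ + 1, fun N hN => hbound N hN⟩)
    have hpos : (0:ℝ) < a ^ k₀ * ((1 - a) * r - ξ k₀ ω) := by positivity
    have hXr' : r ≤ Xinf ω := hXr
    linarith
  -- step E : mass bound
  have hE : ∀ N : ℕ, P (Xinf ⁻¹' Set.Ici r)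
      ≤ P (⋂ i ∈ Finset.range N, ξ i ⁻¹' ({(1 - a) * r} : Set ℝ)) := by
    intro N
    set G := {ω | Xinf ω ∈ Set.Ici r → ∀ k, ξ k ω = (1 - a) * r} with hG
    have hGnull : P Gᶜ = 0 := by
      rw [ae_iff] at hD
      simpa [hG, Set.compl_setOf] using hD
    have hsub : Xinf ⁻¹' Set.Ici r ∩ G ⊆ ⋂ i ∈ Finset.range N, ξ i ⁻¹' ({(1 - a) * r} : Set ℝ) := by
      rintro ω ⟨hωX, hωG⟩
      simp only [Set.mem_iInter, Set.mem_preimage, Set.mem_singleton_iff]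
      intro i _
      exact hωG hωX i
    calc P (Xinf ⁻¹' Set.Ici r)
        ≤ P ((Xinf ⁻¹' Set.Ici r ∩ G) ∪ Gᶜ) := measure_mono (by
          intro ω hω
          by_cases hωG : ω ∈ G
          · exact Or.inl ⟨hω, hωG⟩
          · exact Or.inr hωG)
      _ ≤ P (Xinf ⁻¹' Set.Ici r ∩ G) + P Gᶜ := measure_union_le _ _
      _ = P (Xinf ⁻¹' Set.Ici r ∩ G) := by rw [hGnull, add_zero]
      _ ≤ _ := measure_mono hsub
  -- product formula
  set p := P (ξ 0 ⁻¹' ({(1 - a) * r} : Set ℝ)) with hp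
  have hprod : ∀ N : ℕ, P (⋂ i ∈ Finset.range N, ξ i ⁻¹' ({(1 - a) * r} : Set ℝ)) = p ^ N := by
    intro N
    rw [hindep.measure_inter_preimage_eq_mul (Finset.range N)
      (sets := fun _ => ({(1 - a) * r} : Set ℝ)) (fun i _ => measurableSet_singleton _)]
    have : ∀ i ∈ Finset.range N, P (ξ i ⁻¹' ({(1 - a) * r} : Set ℝ)) = p := by
      intro i _
      rw [← Measure.map_apply (hmeas i) (measurableSet_singleton _), hident i,
        Measure.map_apply (hmeas 0) (measurableSet_singleton _)]
    rw [Finset.prod_congr rfl this, Finset.prod_const, Finset.card_range]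
  -- p < 1
  have hq : 0 < P {ω | ξ 0 ω < 0} := by
    rcases eq_or_ne (P {ω | ξ 0 ω < 0}) 0 with h0 | h0
    · rw [h0, mul_zero] at hsign; exact absurd hsign (lt_irrefl _)
    · exact pos_iff_ne_zero.mpr h0
  have hdisj : Disjoint (ξ 0 ⁻¹' ({(1 - a) * r} : Set ℝ)) {ω | ξ 0 ω < 0} := by
    rw [Set.disjoint_left]
    intro ω hω1 hω2
    simp only [Set.mem_preimage, Set.mem_singleton_iff] at hω1
    simp only [Set.mem_setOf_eq] at hω2
    have : (0:ℝ) < (1 - a) * r := mul_pos (by linarith) hr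
    linarith [hω1 ▸ hω2]
  have hmeas0 : MeasurableSet {ω | ξ 0 ω < 0} := measurableSet_lt (hmeas 0) measurable_const
  have hple : p + P {ω | ξ 0 ω < 0} ≤ 1 := by
    rw [← measure_union hdisj hmeas0]
    exact (measure_mono (Set.subset_univ _)).trans_eq measure_univ
  have hp1 : p < 1 := by
    rcases lt_or_ge p 1 with h | h
    · exact h
    · exfalso
      have : (1:ℝ≥0∞) + P {ω | ξ 0 ω < 0} ≤ 1 := le_trans (add_le_add_left h _) hple
      have h2 : P {ω | ξ 0 ω < 0} = 0 := by
        by_contra hne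
        have := ENNReal.lt_add_right (ENNReal.one_ne_top) hne
        exact absurd (lt_of_lt_of_le this ‹(1:ℝ≥0∞) + P {ω | ξ 0 ω < 0} ≤ 1›) (lt_irrefl _)
      exact absurd h2 (pos_iff_ne_zero.mp hq)
  -- conclude
  have htend : Tendsto (fun N : ℕ => p ^ N) atTop (nhds 0) :=
    ENNReal.tendsto_pow_atTop_nhds_zero_of_lt_one hp1
  have hfin : P (Xinf ⁻¹' Set.Ici r) ≤ 0 :=
    ge_of_tendsto htend (Filter.Eventually.of_forall fun N => (hE N).trans (hprod N).le)
  rw [Measure.map_apply hXinf measurableSet_Ici] at hmass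
  exact absurd (le_antisymm hfin zero_le) (ne_of_gt hmass)

set_option maxHeartbeats 1000000 in
lemma confinement_bound
    (hmeas : ∀ n, Measurable (ξ n))
    (hindep : iIndepFun ξ P)
    (hident : ∀ n, Measure.map (ξ n) P = Measure.map (ξ 0) P)
    {a : ℝ} (ha0 : 0 < a) {r c₀ : ℝ} (hr : 0 < r) (hc₀ : 0 < c₀)
    {m₀ : ℕ} (hm₀ : 1 ≤ m₀) (hclimb : r < (∑ j ∈ Finset.range m₀, a ^ j) * c₀)
    {x : ℝ} (hx0 : 0 < x) (hxr : x ≤ r) (n : ℕ) :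
    P (stayIn a ξ (fun _ => x) r n)
      ≤ (1 - P (ξ 0 ⁻¹' Set.Ici c₀) ^ m₀) ^ (n / m₀)
        * P (stayAbove a ξ (fun _ => r) 0 n) := by
  set β := P (ξ 0 ⁻¹' Set.Ici c₀) with hβ
  set δ := β ^ m₀ with hδ
  set F : ℕ → ℝ≥0∞ := fun l => P (stayAbove a ξ (fun _ => (r:ℝ)) 0 l) with hF
  -- the shifted persistence-from-r events
  set RestS : ℕ → ℕ → Set Ω := fun s l =>
    {ω | ∀ k, 1 ≤ k → k ≤ l → 0 < X a (fun j => ξ (s + j)) (fun _ => (r:ℝ)) k ω} with hRestS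
  set Climb : ℕ → Set Ω := fun t => {ω | ∀ j, j < m₀ → c₀ ≤ ξ (t + j) ω} with hClimb
  set Θ : ℕ → Set Ω := fun i =>
    {ω | (∀ k, 1 ≤ k → k ≤ i * m₀ →
            0 < X a ξ (fun _ => x) k ω ∧ X a ξ (fun _ => x) k ω ≤ r)
      ∧ ∀ k, i * m₀ < k → k ≤ n → 0 < X a ξ (fun _ => x) k ω} with hΘ
  -- preimage representations
  have hRest_pre : ∀ s l, RestS s l = blk ξ s l ⁻¹' stayAbove a (ζ l) (fun _ => (r:ℝ)) 0 l :=
    fun s l => (blk_preimage_stayAbove a ξ s l r).symm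
  have hRest_P : ∀ s l, P (RestS s l) = F l := by
    intro s l
    rw [hRest_pre s l,
      ← Measure.map_apply (measurable_blk hmeas s l) (measurableSet_stayAbove_canon a l r 0),
      map_blk P ξ hmeas hindep hident s l, ← map_blk P ξ hmeas hindep hident 0 l,
      Measure.map_apply (measurable_blk hmeas 0 l) (measurableSet_stayAbove_canon a l r 0),
      ← hRest_pre 0 l]
    have h0 : RestS 0 l = stayAbove a ξ (fun _ => (r:ℝ)) 0 l := by
      ext ω
      simp only [hRestS, stayAbove, Set.mem_setOf_eq]
      refine forall_congr' fun k => imp_congr_right fun _ => imp_congr_right fun _ => ?_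
      rw [X_congr a (fun j => ξ (0 + j)) ξ r (ω := ω) (ω' := ω)
        (fun j _ => by simp)]
    rw [h0]
  have hClimb_pre : ∀ t, Climb t
      = blk ξ t m₀ ⁻¹' (Set.pi Set.univ fun _ : Fin m₀ => Set.Ici c₀) := by
    intro t
    ext ω
    simp only [hClimb, Set.mem_setOf_eq, Set.mem_preimage, Set.mem_pi, Set.mem_univ,
      forall_true_left, Set.mem_Ici, blk]
    constructor
    · intro h j; exact h j j.isLt
    · intro h j hj; exact h ⟨j, hj⟩
  have hClimb_P : ∀ t, P (Climb t) = δ := by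
    intro t
    rw [hClimb_pre t,
      ← Measure.map_apply (measurable_blk hmeas t m₀)
        (MeasurableSet.univ_pi fun _ => measurableSet_Ici),
      map_blk P ξ hmeas hindep hident t m₀]
    haveI : IsProbabilityMeasure (Measure.map (ξ 0) P) :=
      Measure.isProbabilityMeasure_map ((hmeas 0).aemeasurable)
    rw [Measure.pi_pi]
    have : ∀ _j : Fin m₀, Measure.map (ξ 0) P (Set.Ici c₀) = β := by
      intro _
      rw [Measure.map_apply (hmeas 0) measurableSet_Ici, hβ]
    rw [Finset.prod_congr rfl (fun j _ => this j), Finset.prod_const, Finset.card_univ,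
      Fintype.card_fin, hδ]
  have hPre_pre : ∀ t, stayIn a ξ (fun _ => x) r t
      = blk ξ 0 t ⁻¹' stayIn a (ζ t) (fun _ => x) r t :=
    fun t => (blk_preimage_stayIn a ξ t x r).symm
  have hδ1 : δ ≤ 1 := by
    rw [hδ]
    exact pow_le_one' (by rw [hβ]; exact prob_le_one) m₀
  have hδtop : δ * P (Θ 0) ≠ ⊤ :=
    ne_top_of_le_ne_top (by simp : (1 : ℝ≥0∞) * 1 ≠ ⊤)
      (mul_le_mul' hδ1 prob_le_one)
  -- positivity of partial geometric sums
  have hsum_pos : ∀ k', 1 ≤ k' → (0:ℝ) < (∑ j ∈ Finset.range k', a ^ j) * c₀ := by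
    intro k' hk'
    refine mul_pos (Finset.sum_pos (fun j _ => pow_pos ha0 j) ?_) hc₀
    exact ⟨0, Finset.mem_range.mpr hk'⟩
  have hsum_mono : ∀ k', k' ≤ m₀ →
      (∑ j ∈ Finset.range k', a ^ j) ≤ ∑ j ∈ Finset.range m₀, a ^ j := by
    intro k' hk'
    exact Finset.sum_le_sum_of_subset_of_nonneg
      (Finset.range_subset_range.mpr hk') (fun j _ _ => (pow_pos ha0 j).le)
  -- the key one-step estimate
  have hstep : ∀ i : ℕ, (i + 1) * m₀ ≤ n → P (Θ (i + 1)) ≤ (1 - δ) * P (Θ i) := by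
    intro i hin
    set t := i * m₀ with ht
    set l := n - (i + 1) * m₀ with hl
    have htm : t + m₀ = (i + 1) * m₀ := by rw [ht]; ring
    have htl : t + (m₀ + l) = n := by omega
    have hml : m₀ + l = n - t := by omega
    set D : Set Ω := stayIn a ξ (fun _ => x) r t ∩ (Climb t ∩ RestS (t + m₀) l) with hD
    -- pointwise facts on D
    have hy_of_pre : ∀ ω, ω ∈ stayIn a ξ (fun _ => x) r t →
        0 < X a ξ (fun _ => x) t ω ∧ X a ξ (fun _ => x) t ω ≤ r := by
      intro ω hω
      rcases Nat.eq_zero_or_pos t with h0 | h0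
      · rw [h0]; exact ⟨hx0, hxr⟩
      · exact hω t h0 le_rfl
    have hclimb_val : ∀ ω, ω ∈ stayIn a ξ (fun _ => x) r t → ω ∈ Climb t →
        ∀ k', 1 ≤ k' → k' ≤ m₀ →
          (∑ j ∈ Finset.range k', a ^ j) * c₀ ≤ X a ξ (fun _ => x) (t + k') ω := by
      intro ω hpre hcl k' hk'1 hk'm
      have hy := hy_of_pre ω hpre
      rw [X_shift a ξ (fun _ => x) t k' ω]
      exact X_ge_of_noise_ge ha0 hy.1.le ω (fun j hj => hcl j hj) k' hk'm
    have hD_sub : D ⊆ Θ i := by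
      rintro ω ⟨hpre, hcl, hrest⟩
      have hy := hy_of_pre ω hpre
      constructor
      · intro k hk1 hkt
        exact hpre k hk1 hkt
      · intro k hkt hkn
        rcases le_or_gt k (t + m₀) with hkm | hkm
        · -- in the climb block
          have hk' : k = t + (k - t) := by omega
          rw [hk']
          calc (0:ℝ) < (∑ j ∈ Finset.range (k - t), a ^ j) * c₀ :=
                hsum_pos _ (by omega)
            _ ≤ _ := hclimb_val ω hpre hcl (k - t) (by omega) (by omega)
        · -- after the climb block
          have hy2 : r ≤ X a ξ (fun _ => x) (t + m₀) ω := by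
            calc r ≤ (∑ j ∈ Finset.range m₀, a ^ j) * c₀ := hclimb.le
              _ ≤ _ := hclimb_val ω hpre hcl m₀ hm₀ le_rfl
          have hk' : k = (t + m₀) + (k - (t + m₀)) := by omega
          rw [hk', X_shift a ξ (fun _ => x) (t + m₀) (k - (t + m₀)) ω]
          have hrest' := hrest (k - (t + m₀)) (by omega) (by omega)
          calc (0:ℝ) < X a (fun j => ξ (t + m₀ + j)) (fun _ => (r:ℝ)) (k - (t + m₀)) ω :=
                hrest'
            _ ≤ X a (fun j => ξ (t + m₀ + j))
                  (fun _ => X a ξ (fun _ => x) (t + m₀) ω) (k - (t + m₀)) ω :=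
              X_mono ha0 _ hy2 _ ω
    have hD_disj : Disjoint (Θ (i + 1)) D := by
      rw [Set.disjoint_left]
      rintro ω hθ ⟨hpre, hcl, _⟩
      have hle := (hθ.1 ((i + 1) * m₀) (Nat.mul_pos (Nat.succ_pos i) hm₀) le_rfl).2
      have hge : r < X a ξ (fun _ => x) ((i + 1) * m₀) ω := by
        rw [← htm]
        calc r < (∑ j ∈ Finset.range m₀, a ^ j) * c₀ := hclimb
          _ ≤ _ := hclimb_val ω hpre hcl m₀ hm₀ le_rfl
      linarith
    have hθ_sub : Θ (i + 1) ⊆ Θ i := by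
      rintro ω ⟨h1, h2⟩
      constructor
      · intro k hk1 hkt
        exact h1 k hk1 (le_trans hkt (Nat.mul_le_mul_right m₀ (Nat.le_succ i)))
      · intro k hkt hkn
        rcases le_or_gt k ((i + 1) * m₀) with hkm | hkm
        · exact (h1 k (by omega) hkm).1
        · exact h2 k hkm hkn
    -- measurability of D
    have hS₂meas : MeasurableSet (stayAbove a (ζ l) (fun _ => (r:ℝ)) 0 l) :=
      measurableSet_stayAbove_canon a l r 0
    have hD_meas : MeasurableSet D := by
      rw [hD, hPre_pre t, hClimb_pre t, hRest_pre (t + m₀) l]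
      exact ((measurable_blk hmeas 0 t) (measurableSet_stayIn_canon a t x r)).inter
        (((measurable_blk hmeas t m₀)
            (MeasurableSet.univ_pi fun _ => measurableSet_Ici)).inter
          ((measurable_blk hmeas (t + m₀) l) hS₂meas))
    -- probability of D
    have hCR : P (Climb t ∩ RestS (t + m₀) l) = δ * F l := by
      rw [hClimb_pre t, hRest_pre (t + m₀) l,
        (indepBlk P ξ hmeas hindep (by omega : t + m₀ ≤ t + m₀)).measure_inter_preimage_eq_mul
          _ _ (MeasurableSet.univ_pi fun _ => measurableSet_Ici) hS₂meas,
        ← hClimb_pre t, ← hRest_pre (t + m₀) l, hClimb_P t, hRest_P (t + m₀) l]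
    -- combine Climb ∩ Rest into a single block preimage
    have hmlt : ∀ j : Fin m₀, (j : ℕ) < m₀ + l := fun j => by have := j.isLt; omega
    have hllt : ∀ j : Fin l, m₀ + (j : ℕ) < m₀ + l := fun j => by have := j.isLt; omega
    set π₁ : (Fin (m₀ + l) → ℝ) → (Fin m₀ → ℝ) := fun z j => z ⟨j, hmlt j⟩ with hπ₁
    set π₂ : (Fin (m₀ + l) → ℝ) → (Fin l → ℝ) := fun z j => z ⟨m₀ + (j : ℕ), hllt j⟩ with hπ₂
    have hπ₁m : Measurable π₁ := measurable_pi_lambda _ fun _ => measurable_pi_apply _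
    have hπ₂m : Measurable π₂ := measurable_pi_lambda _ fun _ => measurable_pi_apply _
    have hcomb : Climb t ∩ RestS (t + m₀) l
        = blk ξ t (m₀ + l) ⁻¹'
          (π₁ ⁻¹' (Set.pi Set.univ fun _ : Fin m₀ => Set.Ici c₀)
            ∩ π₂ ⁻¹' (stayAbove a (ζ l) (fun _ => (r:ℝ)) 0 l)) := by
      have hb1 : π₁ ∘ blk ξ t (m₀ + l) = blk ξ t m₀ := by
        funext ω j
        simp only [Function.comp_apply, hπ₁, blk]
      have hb2 : π₂ ∘ blk ξ t (m₀ + l) = blk ξ (t + m₀) l := by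
        funext ω j
        simp only [Function.comp_apply, hπ₂, blk, add_assoc]
      rw [Set.preimage_inter, ← Set.preimage_comp, ← Set.preimage_comp, hb1, hb2,
        ← hClimb_pre t, ← hRest_pre (t + m₀) l]
    have hD_P : P D = P (stayIn a ξ (fun _ => x) r t) * (δ * F l) := by
      rw [hD, hcomb, hPre_pre t,
        (indepBlk P ξ hmeas hindep (by omega : 0 + t ≤ t)).measure_inter_preimage_eq_mul
          _ _ (measurableSet_stayIn_canon a t x r)
          ((hπ₁m (MeasurableSet.univ_pi fun _ => measurableSet_Ici)).inter (hπ₂m hS₂meas)),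
        ← hPre_pre t, ← hcomb, hCR]
    -- upper bound for Θ i
    have hθi_sub : Θ i ⊆ stayIn a ξ (fun _ => x) r t ∩ RestS t (n - t) := by
      rintro ω ⟨h1, h2⟩
      refine ⟨fun k hk1 hkt => h1 k hk1 hkt, ?_⟩
      intro k hk1 hkl
      have hy := hy_of_pre ω (fun k hk1 hkt => h1 k hk1 hkt)
      have hpos : 0 < X a ξ (fun _ => x) (t + k) ω := h2 (t + k) (by omega) (by omega)
      rw [X_shift a ξ (fun _ => x) t k ω] at hpos
      calc (0:ℝ) < X a (fun j => ξ (t + j)) (fun _ => X a ξ (fun _ => x) t ω) k ω := hpos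
        _ ≤ X a (fun j => ξ (t + j)) (fun _ => (r:ℝ)) k ω := X_mono ha0 _ hy.2 _ ω
    have hθi_P : P (Θ i) ≤ P (stayIn a ξ (fun _ => x) r t) * F (n - t) := by
      calc P (Θ i) ≤ P (stayIn a ξ (fun _ => x) r t ∩ RestS t (n - t)) :=
            measure_mono hθi_sub
        _ = P (stayIn a ξ (fun _ => x) r t) * P (RestS t (n - t)) := by
            rw [hPre_pre t, hRest_pre t (n - t),
              (indepBlk P ξ hmeas hindep (by omega : 0 + t ≤ t)).measure_inter_preimage_eq_mul
                _ _ (measurableSet_stayIn_canon a t x r)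
                (measurableSet_stayAbove_canon a (n - t) r 0),
              ← hPre_pre t, ← hRest_pre t (n - t)]
        _ = P (stayIn a ξ (fun _ => x) r t) * F (n - t) := by rw [hRest_P t (n - t)]
    have hF_mono : F (n - t) ≤ F l := by
      rw [hF]
      refine measure_mono ?_
      intro ω hω
      intro k hk1 hkl
      exact hω k hk1 (by omega)
    -- the decisive comparison
    have hcompare : δ * P (Θ i) ≤ P D := by
      rw [hD_P]
      calc δ * P (Θ i) ≤ δ * (P (stayIn a ξ (fun _ => x) r t) * F (n - t)) :=
            mul_le_mul_right hθi_P δ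
        _ ≤ δ * (P (stayIn a ξ (fun _ => x) r t) * F l) :=
            mul_le_mul_right (mul_le_mul_right hF_mono _) δ
        _ = P (stayIn a ξ (fun _ => x) r t) * (δ * F l) := by ring
    have hkey : P (Θ (i + 1)) + P D ≤ P (Θ i) := by
      rw [← measure_union hD_disj hD_meas]
      exact measure_mono (Set.union_subset hθ_sub hD_sub)
    have hδPtop : δ * P (Θ i) ≠ ⊤ :=
      ne_top_of_le_ne_top (by simp : (1 : ℝ≥0∞) * 1 ≠ ⊤)
        (mul_le_mul' hδ1 prob_le_one)
    have hfinal : P (Θ (i + 1)) + δ * P (Θ i) ≤ (1 - δ) * P (Θ i) + δ * P (Θ i) := by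
      have hsplit : (1 - δ) * P (Θ i) + δ * P (Θ i) = P (Θ i) := by
        rw [← add_mul, tsub_add_cancel_of_le hδ1, one_mul]
      rw [hsplit]
      exact le_trans (add_le_add_right hcompare _) hkey
    exact (ENNReal.add_le_add_iff_right hδPtop).mp hfinal
  -- iterate
  have hiter : ∀ i : ℕ, i * m₀ ≤ n → P (Θ i) ≤ (1 - δ) ^ i * P (Θ 0) := by
    intro i
    induction i with
    | zero => intro _; simp
    | succ i ih =>
        intro hin
        have hin' : i * m₀ ≤ n := le_trans (Nat.mul_le_mul_right m₀ (Nat.le_succ i)) hin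
        calc P (Θ (i + 1)) ≤ (1 - δ) * P (Θ i) := hstep i hin
          _ ≤ (1 - δ) * ((1 - δ) ^ i * P (Θ 0)) := mul_le_mul_right (ih hin') _
          _ = (1 - δ) ^ (i + 1) * P (Θ 0) := by rw [pow_succ]; ring
  -- assemble
  have hsub1 : stayIn a ξ (fun _ => x) r n ⊆ Θ (n / m₀) := by
    intro ω hω
    constructor
    · intro k hk1 hkt
      exact hω k hk1 (le_trans hkt (Nat.div_mul_le_self n m₀))
    · intro k _ hkn
      exact (hω k (by omega) hkn).1
  have hsub2 : Θ 0 ⊆ stayAbove a ξ (fun _ => (r:ℝ)) 0 n := by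
    rintro ω ⟨_, h2⟩
    intro k hk1 hkn
    have hpos := h2 k (by omega) hkn
    calc (0:ℝ) < X a ξ (fun _ => x) k ω := hpos
      _ ≤ X a ξ (fun _ => (r:ℝ)) k ω := X_mono ha0 ξ hxr k ω
  calc P (stayIn a ξ (fun _ => x) r n) ≤ P (Θ (n / m₀)) := measure_mono hsub1
    _ ≤ (1 - δ) ^ (n / m₀) * P (Θ 0) := hiter (n / m₀) (Nat.div_mul_le_self n m₀)
    _ ≤ (1 - δ) ^ (n / m₀) * P (stayAbove a ξ (fun _ => (r:ℝ)) 0 n) :=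
        mul_le_mul_right (measure_mono hsub2) _

end Prob

/-- Lemma `lem:two-sided`: the confinement probabilities decay strictly
faster than the persistence probabilities: for every `r` with `π([r,∞)) > 0` there are
`ε_r > 0` and `C_r < ∞` with
`sup_{x ∈ (0,r)} P_x(T_0 ∧ σ_r > n) ≤ C_r e^{−(λ_a+ε_r) n}` for all `n ≥ 0`. -/
theorem ar1_confinement_decay
    (P : Measure Ω) [IsProbabilityMeasure P]
    (ξ : ℕ → Ω → ℝ) (hmeas : ∀ n, Measurable (ξ n))
    (hindep : iIndepFun ξ P)
    (hident : ∀ n, Measure.map (ξ n) P = Measure.map (ξ 0) P)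
    (hmomabs : ∃ δ : ℝ, 0 < δ ∧ Integrable (fun ω => |ξ 0 ω| ^ δ) P)
    (hsign : 0 < P {ω | 0 < ξ 0 ω} * P {ω | ξ 0 ω < 0})
    (a : ℝ) (ha : a ∈ Set.Ioo (0 : ℝ) 1)
    (lam : ℝ) (hlam : 0 < lam)
    (hexp : ∀ x : ℝ, 0 < x →
      Tendsto
        (fun n : ℕ => -(1 / (n : ℝ)) * Real.log (P (stayAbove a ξ (fun _ => x) 0 n)).toReal)
        atTop (nhds lam))
    (Xinf : Ω → ℝ) (hXinf : Measurable Xinf)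
    (hconv : ∀ᵐ ω ∂P,
      Tendsto (fun N : ℕ => ∑ k ∈ Finset.range N, a ^ k * ξ k ω) atTop (nhds (Xinf ω))) :
    ∀ r : ℝ, 0 < r → 0 < Measure.map Xinf P (Set.Ici r) →
      ∃ ε : ℝ, 0 < ε ∧ ∃ C : ℝ, ∀ n : ℕ, ∀ x ∈ Set.Ioo (0 : ℝ) r,
        (P (stayIn a ξ (fun _ => x) r n)).toReal ≤ C * Real.exp (-(lam + ε) * n) := by
  intro r hr hmass
  obtain ⟨ha0, ha1⟩ := ha
  -- Step 1: the climb threshold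
  obtain ⟨c₁, hc₁, hc₁pos⟩ :=
    exists_climb P ξ hmeas hindep hident hsign ⟨ha0, ha1⟩ hr Xinf hXinf hconv hmass
  have hc₁0 : 0 < c₁ := lt_trans (mul_pos (by linarith) hr) hc₁
  -- Step 2: choose the climb length m₀
  have hgeo : Tendsto (fun m : ℕ => (∑ j ∈ Finset.range m, a ^ j) * c₁) atTop
      (nhds ((1 - a)⁻¹ * c₁)) :=
    ((hasSum_geometric_of_lt_one ha0.le ha1).tendsto_sum_nat).mul_const c₁
  have hrlt : r < (1 - a)⁻¹ * c₁ := by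
    rw [inv_mul_eq_div, lt_div_iff₀ (by linarith : (0:ℝ) < 1 - a)]
    linarith [hc₁]
  obtain ⟨m₀, hm₀r, hm₀1⟩ :=
    ((hgeo.eventually (eventually_gt_nhds hrlt)).and (eventually_ge_atTop 1)).exists
  -- Step 3: apply the confinement bound
  set β := P (ξ 0 ⁻¹' Set.Ici c₁) with hβ
  set δ := β ^ m₀ with hδ
  have hbound : ∀ (n : ℕ), ∀ x ∈ Set.Ioo (0:ℝ) r,
      P (stayIn a ξ (fun _ => x) r n)
        ≤ (1 - δ) ^ (n / m₀) * P (stayAbove a ξ (fun _ => (r:ℝ)) 0 n) := by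
    intro n x hx
    exact confinement_bound P ξ hmeas hindep hident ha0 hr hc₁0 hm₀1 hm₀r hx.1 hx.2.le n
  -- Step 4: real-valued estimates
  have hδ1 : δ ≤ 1 := pow_le_one' prob_le_one m₀
  have hδpos : 0 < δ := ENNReal.pow_pos hc₁pos m₀
  have hone_sub_ne : (1 - δ : ℝ≥0∞) ≠ ⊤ := ne_top_of_le_ne_top ENNReal.one_ne_top tsub_le_self
  set d : ℝ := (1 - δ : ℝ≥0∞).toReal with hd
  have hd0 : 0 ≤ d := ENNReal.toReal_nonneg
  have hd1 : d < 1 := by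
    rw [hd, ← ENNReal.toReal_one]
    rw [ENNReal.toReal_lt_toReal hone_sub_ne ENNReal.one_ne_top]
    exact ENNReal.sub_lt_self ENNReal.one_ne_top one_ne_zero hδpos.ne'
  set g : ℕ → ℝ := fun n => (P (stayAbove a ξ (fun _ => (r:ℝ)) 0 n)).toReal with hg
  have hg0 : ∀ n, 0 ≤ g n := fun n => ENNReal.toReal_nonneg
  have hg1 : ∀ n, g n ≤ 1 := by
    intro n
    rw [hg, ← ENNReal.toReal_one]
    exact ENNReal.toReal_mono ENNReal.one_ne_top prob_le_one
  have hreal : ∀ (n : ℕ), ∀ x ∈ Set.Ioo (0:ℝ) r,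
      (P (stayIn a ξ (fun _ => x) r n)).toReal ≤ d ^ (n / m₀) * g n := by
    intro n x hx
    have hne : (1 - δ) ^ (n / m₀) * P (stayAbove a ξ (fun _ => (r:ℝ)) 0 n) ≠ ⊤ :=
      ne_top_of_le_ne_top ENNReal.one_ne_top
        (le_trans (mul_le_mul' (pow_le_one' tsub_le_self _) prob_le_one) (by simp))
    have := ENNReal.toReal_mono hne (hbound n x hx)
    rwa [ENNReal.toReal_mul, ENNReal.toReal_pow] at this
  -- Step 5: split on degeneracy of d
  rcases eq_or_lt_of_le hd0 with hd0' | hd0'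
  · -- d = 0 : super-fast decay
    refine ⟨1, one_pos, Real.exp ((lam + 1) * m₀), fun n x hx => ?_⟩
    rcases lt_or_ge n m₀ with hn | hn
    · have hdiv : n / m₀ = 0 := Nat.div_eq_of_lt hn
      have h1 : (P (stayIn a ξ (fun _ => x) r n)).toReal ≤ 1 :=
        le_trans (hreal n x hx) (by simpa [hdiv] using hg1 n)
      have h2 : (1:ℝ) ≤ Real.exp ((lam + 1) * m₀) * Real.exp (-(lam + 1) * n) := by
        rw [← Real.exp_add]
        apply Real.one_le_exp
        have hcast : (n:ℝ) ≤ (m₀:ℝ) := by exact_mod_cast hn.le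
        nlinarith
      linarith
    · have hdiv : 1 ≤ n / m₀ := (Nat.one_le_div_iff (by omega)).mpr hn
      have hzero : d ^ (n / m₀) = 0 := by
        rw [← hd0']
        exact zero_pow (by omega)
      have h1 := hreal n x hx
      rw [hzero, zero_mul] at h1
      have : (0:ℝ) ≤ Real.exp ((lam + 1) * m₀) * Real.exp (-(lam + 1) * n) := by positivity
      linarith
  · -- 0 < d < 1 : main case
    set κ : ℝ := -Real.log d / m₀ with hκ
    have hlogd : Real.log d < 0 := Real.log_neg hd0' hd1
    have hκpos : 0 < κ := div_pos (by linarith) (by exact_mod_cast hm₀1)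
    refine ⟨κ / 2, by positivity, ?_⟩
    -- eventually bound on g
    have hev : ∀ᶠ n : ℕ in atTop,
        lam - κ / 4 < -(1 / (n : ℝ)) * Real.log (g n) :=
      (hexp r hr).eventually (eventually_gt_nhds (by linarith))
    obtain ⟨N, hN⟩ := Filter.eventually_atTop.mp hev
    set N' : ℕ := max N 1 with hN'
    refine ⟨(1 / d + 1) * Real.exp ((lam + κ / 2) * N'), fun n x hx => ?_⟩
    have hCpos1 : (1:ℝ) ≤ 1 / d + 1 := by
      have : 0 < 1 / d := by positivity
      linarith
    rcases lt_or_ge n N' with hn | hn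
    · -- small n : trivial bound
      have h1 : (P (stayIn a ξ (fun _ => x) r n)).toReal ≤ 1 := by
        refine le_trans (hreal n x hx) ?_
        calc d ^ (n / m₀) * g n ≤ 1 * 1 := by
              apply mul_le_mul _ (hg1 n) (hg0 n) zero_le_one
              exact pow_le_one₀ hd0 hd1.le
          _ = 1 := by ring
      have h2 : (1:ℝ) ≤ (1 / d + 1) * Real.exp ((lam + κ / 2) * N')
          * Real.exp (-(lam + κ / 2) * n) := by
        rw [mul_assoc, ← Real.exp_add]
        have h3 : (1:ℝ) ≤ Real.exp ((lam + κ / 2) * N' + -(lam + κ / 2) * n) := by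
          apply Real.one_le_exp
          have hcast : (n:ℝ) ≤ (N':ℝ) := by exact_mod_cast hn.le
          nlinarith
        nlinarith [Real.exp_pos ((lam + κ / 2) * N' + -(lam + κ / 2) * n)]
      calc (P (stayIn a ξ (fun _ => x) r n)).toReal ≤ 1 := h1
        _ ≤ _ := h2
    · -- large n : genuine decay
      have hn1 : 1 ≤ n := le_trans (le_max_right N 1) hn
      have hnN : N ≤ n := le_trans (le_max_left N 1) hn
      have hnpos : (0:ℝ) < n := by exact_mod_cast hn1
      -- bound on g n
      have hgbound : g n ≤ Real.exp (-(lam - κ / 4) * n) := by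
        rcases eq_or_lt_of_le (hg0 n) with h0 | h0
        · rw [← h0]; positivity
        · have := hN n hnN
          have hlog : Real.log (g n) < -(lam - κ / 4) * n := by
            have h2 : (lam - κ / 4) * n < -Real.log (g n) := by
              have := mul_lt_mul_of_pos_right this hnpos
              calc (lam - κ / 4) * n < -(1 / (n:ℝ)) * Real.log (g n) * n := this
                _ = -Real.log (g n) := by field_simp
            linarith
          calc g n = Real.exp (Real.log (g n)) := (Real.exp_log h0).symm
            _ ≤ Real.exp (-(lam - κ / 4) * n) := Real.exp_le_exp.mpr hlog.le
      -- bound on the geometric factor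
      have hdpow : d ^ (n / m₀) ≤ (1 / d) * Real.exp (-κ * n) := by
        have hkd : (n:ℝ) / (m₀:ℝ) - 1 ≤ (n / m₀ : ℕ) := by
          have hmod := Nat.div_add_mod n m₀
          have hlt : n % m₀ < m₀ := Nat.mod_lt _ (by omega)
          have hm₀pos : (0:ℝ) < (m₀:ℝ) := by exact_mod_cast hm₀1
          have hc1 : (m₀:ℝ) * ((n / m₀ : ℕ):ℝ) + ((n % m₀ : ℕ):ℝ) = (n:ℝ) := by
            exact_mod_cast hmod
          have hc2 : ((n % m₀ : ℕ):ℝ) < (m₀:ℝ) := by exact_mod_cast hlt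
          rw [sub_le_iff_le_add, div_le_iff₀ hm₀pos]
          nlinarith
        have hexp_eq : d ^ (n / m₀ : ℕ) = Real.exp ((n / m₀ : ℕ) * Real.log d) := by
          rw [← Real.log_pow, Real.exp_log (pow_pos hd0' _)]
        rw [hexp_eq]
        have harg : ((n / m₀ : ℕ):ℝ) * Real.log d ≤ -κ * n + (-Real.log d) := by
          have h1 : ((n:ℝ) / (m₀:ℝ) - 1) * Real.log d ≥ ((n / m₀ : ℕ):ℝ) * Real.log d :=
            mul_le_mul_of_nonpos_right hkd hlogd.le
          have h2 : ((n:ℝ) / (m₀:ℝ) - 1) * Real.log d = -κ * n + (-Real.log d) := by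
            rw [hκ]
            have hm₀pos : (0:ℝ) < (m₀:ℝ) := by exact_mod_cast hm₀1
            field_simp
            ring
          linarith
        calc Real.exp (((n / m₀ : ℕ):ℝ) * Real.log d)
            ≤ Real.exp (-κ * n + (-Real.log d)) := Real.exp_le_exp.mpr harg
          _ = (1 / d) * Real.exp (-κ * n) := by
              rw [Real.exp_add, Real.exp_neg, Real.exp_log hd0']
              ring
      -- combine
      have hcomb : d ^ (n / m₀) * g n
          ≤ (1 / d) * Real.exp (-κ * n) * Real.exp (-(lam - κ / 4) * n) := by
        apply mul_le_mul hdpow hgbound (hg0 n) (by positivity)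
      have hfin : (1 / d) * Real.exp (-κ * n) * Real.exp (-(lam - κ / 4) * n)
          ≤ (1 / d + 1) * Real.exp ((lam + κ / 2) * N') * Real.exp (-(lam + κ / 2) * n) := by
        have e1 : (1 / d) * Real.exp (-κ * n) * Real.exp (-(lam - κ / 4) * n)
            = (1 / d) * Real.exp (-κ * n + -(lam - κ / 4) * n) := by
          rw [mul_assoc, ← Real.exp_add]
        have e2 : (1 / d + 1) * Real.exp ((lam + κ / 2) * N') * Real.exp (-(lam + κ / 2) * n)
            = (1 / d + 1) * Real.exp ((lam + κ / 2) * N' + -(lam + κ / 2) * n) := by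
          rw [mul_assoc, ← Real.exp_add]
        rw [e1, e2]
        have hN'0 : (0:ℝ) ≤ (N':ℝ) := Nat.cast_nonneg _
        have hexps : Real.exp (-κ * n + -(lam - κ / 4) * n)
            ≤ Real.exp ((lam + κ / 2) * N' + -(lam + κ / 2) * n) := by
          apply Real.exp_le_exp.mpr
          nlinarith [mul_nonneg (by linarith : (0:ℝ) ≤ lam + κ / 2) hN'0,
            mul_nonneg (by linarith : (0:ℝ) ≤ κ / 4) hnpos.le]
        have h1d : (0:ℝ) < 1 / d := by positivity
        exact mul_le_mul (by linarith) hexps (Real.exp_pos _).le (by linarith)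
      calc (P (stayIn a ξ (fun _ => x) r n)).toReal ≤ d ^ (n / m₀) * g n := hreal n x hx
        _ ≤ _ := le_trans hcomb hfin

end AR1
end
end

section
/- Assume the right tail of the innovations satisfies P(ξ_1 > x) = x^{−r}·L(x) for some r > 0 with a slowly varying function L satisfying L(x) = O((log x)^{−2r−2}) as x → ∞. Then there exists M_0 such that for all M ≥ M_0: Σ_{n=0}^{∞} a^{−r·n}·P_M(T_M > n) < ∞; in particular a^{−r·n}·P_M(T_M > n) → 0 as n → ∞, where T_M := min{k ≥ 1 : X_k ≤ M} and P_M denotes the chain started at X_0 = M. -/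
set_option linter.unusedSectionVars false
set_option linter.unusedVariables false
set_option linter.dupNamespace false


open MeasureTheory ProbabilityTheory Filter Set Real
open scoped ENNReal NNReal

noncomputable section

namespace AR1

variable {Ω : Type*} [MeasurableSpace Ω]

/-- Telescoping weights. -/
def wgt (i : ℕ) : ℝ := (((i : ℝ) + 1) * ((i : ℝ) + 2))⁻¹

/-- Thresholds. -/
def thr (a M : ℝ) (i : ℕ) : ℝ := (1 - a) * M * wgt i * (a ^ i)⁻¹

lemma wgt_pos (i : ℕ) : 0 < wgt i := by
  have : (0:ℝ) < ((i:ℝ) + 1) * ((i:ℝ) + 2) := by positivity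
  exact inv_pos.mpr this

lemma thr_pos {a M : ℝ} (ha0 : 0 < a) (ha1 : a < 1) (hM : 0 < M) (i : ℕ) : 0 < thr a M i := by
  have h1 : (0:ℝ) < 1 - a := by linarith
  have := wgt_pos i
  have : (0:ℝ) < (a ^ i)⁻¹ := by positivity
  unfold thr
  positivity

lemma sum_wgt_eq (N : ℕ) : ∑ i ∈ Finset.range N, wgt i = 1 - ((N : ℝ) + 1)⁻¹ := by
  induction N with
  | zero => simp
  | succ n ih =>
    rw [Finset.sum_range_succ, ih, wgt]
    have h1 : ((n:ℝ) + 1) ≠ 0 := by positivity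
    have h2 : ((n:ℝ) + 2) ≠ 0 := by positivity
    push_cast
    field_simp
    ring

lemma sum_wgt_le (N : ℕ) : ∑ i ∈ Finset.range N, wgt i ≤ 1 := by
  rw [sum_wgt_eq]
  have : (0:ℝ) < (N:ℝ) + 1 := by positivity
  have := inv_pos.mpr this
  linarith

lemma X_const_eq (a : ℝ) (ξ : ℕ → Ω → ℝ) (M : ℝ) (n : ℕ) (ω : Ω) :
    X a ξ (fun _ => M) n ω = a ^ n * M + ∑ j ∈ Finset.range n, a ^ (n - 1 - j) * ξ j ω := by
  induction n with
  | zero => simp [X]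
  | succ n ih =>
    have hstep : X a ξ (fun _ => M) (n + 1) ω = a * X a ξ (fun _ => M) n ω + ξ n ω := rfl
    rw [hstep, ih, Finset.sum_range_succ, mul_add, Finset.mul_sum]
    have h1 : ∀ j ∈ Finset.range n, a * (a ^ (n - 1 - j) * ξ j ω) = a ^ (n + 1 - 1 - j) * ξ j ω := by
      intro j hj
      have hj' : j < n := Finset.mem_range.mp hj
      have h2 : n + 1 - 1 - j = (n - 1 - j) + 1 := by omega
      rw [h2, pow_succ]
      ring
    rw [Finset.sum_congr rfl h1]
    have h3 : n + 1 - 1 - n = 0 := by omega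
    rw [h3, pow_zero, pow_succ]
    ring

lemma X_measurable (a : ℝ) (ξ : ℕ → Ω → ℝ) (hm : ∀ n, Measurable (ξ n)) (M : ℝ) (n : ℕ) :
    Measurable (X a ξ (fun _ => M) n) := by
  induction n with
  | zero => exact measurable_const
  | succ n ih =>
    have : X a ξ (fun _ => M) (n + 1) = fun ω => a * X a ξ (fun _ => M) n ω + ξ n ω := rfl
    rw [this]
    exact (ih.const_mul a).add (hm n)

lemma stayAbove_measurable (a : ℝ) (ξ : ℕ → Ω → ℝ) (hm : ∀ n, Measurable (ξ n)) (M : ℝ)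
    (n : ℕ) : MeasurableSet (stayAbove a ξ (fun _ => M) M n) := by
  have h : stayAbove a ξ (fun _ => M) M n =
      ⋂ (k : ℕ), ⋂ (_ : 1 ≤ k), ⋂ (_ : k ≤ n), {ω | M < X a ξ (fun _ => M) k ω} := by
    ext ω; simp [stayAbove]
  rw [h]
  exact MeasurableSet.iInter fun k => MeasurableSet.iInter fun _ => MeasurableSet.iInter fun _ =>
    measurableSet_lt measurable_const (X_measurable a ξ hm M k)

lemma stayAbove_zero (a : ℝ) (ξ : ℕ → Ω → ℝ) (x₀ : Ω → ℝ) (M : ℝ) :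
    stayAbove a ξ x₀ M 0 = Set.univ := by
  ext ω
  simp only [stayAbove, Set.mem_setOf_eq, Set.mem_univ, iff_true]
  intro k h1 h2
  omega

lemma stayAbove_anti (a : ℝ) (ξ : ℕ → Ω → ℝ) (x₀ : Ω → ℝ) (M : ℝ) {j n : ℕ} (h : j ≤ n) :
    stayAbove a ξ x₀ M n ⊆ stayAbove a ξ x₀ M j :=
  fun ω hω k h1 h2 => hω k h1 (h2.trans h)

lemma stayAbove_subset_union (a : ℝ) (ha0 : 0 < a) (ha1 : a < 1) (ξ : ℕ → Ω → ℝ) (M : ℝ)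
    (hM : 0 ≤ M) (n : ℕ) (hn : 1 ≤ n) :
    stayAbove a ξ (fun _ => M) M n ⊆
      ⋃ j ∈ Finset.range n,
        ({ω | thr a M (n - 1 - j) < ξ j ω} ∩ stayAbove a ξ (fun _ => M) M j) := by
  intro ω hω
  by_contra hcon
  simp only [Set.mem_iUnion, Set.mem_inter_iff, not_exists, not_and] at hcon
  have hle : ∀ j ∈ Finset.range n, ξ j ω ≤ thr a M (n - 1 - j) := by
    intro j hj
    by_contra hgt
    push_neg at hgt
    exact hcon j hj hgt (stayAbove_anti a ξ _ M (le_of_lt (Finset.mem_range.mp hj)) hω)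
  have hXn : M < X a ξ (fun _ => M) n ω := hω n hn le_rfl
  have hbound : X a ξ (fun _ => M) n ω ≤ M := by
    rw [X_const_eq]
    have h1 : ∑ j ∈ Finset.range n, a ^ (n - 1 - j) * ξ j ω
        ≤ ∑ j ∈ Finset.range n, a ^ (n - 1 - j) * thr a M (n - 1 - j) :=
      Finset.sum_le_sum fun j hj => mul_le_mul_of_nonneg_left (hle j hj) (by positivity)
    have h2 : ∑ j ∈ Finset.range n, a ^ (n - 1 - j) * thr a M (n - 1 - j)
        = ∑ i ∈ Finset.range n, a ^ i * thr a M i :=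
      Finset.sum_range_reflect (fun i => a ^ i * thr a M i) n
    have h3 : ∀ i : ℕ, a ^ i * thr a M i = (1 - a) * M * wgt i := by
      intro i
      have hai : (a : ℝ) ^ i ≠ 0 := by positivity
      rw [thr]
      field_simp
    have h4 : ∑ i ∈ Finset.range n, a ^ i * thr a M i ≤ (1 - a) * M := by
      rw [Finset.sum_congr rfl fun i _ => h3 i, ← Finset.mul_sum]
      have hnn : (0:ℝ) ≤ (1 - a) * M := mul_nonneg (by linarith) hM
      exact mul_le_of_le_one_right hnn (sum_wgt_le n)
    have h5 : a ^ n * M ≤ a * M := by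
      have : a ^ n ≤ a ^ 1 := pow_le_pow_of_le_one (le_of_lt ha0) (le_of_lt ha1) hn
      rw [pow_one] at this
      exact mul_le_mul_of_nonneg_right this hM
    calc a ^ n * M + ∑ j ∈ Finset.range n, a ^ (n - 1 - j) * ξ j ω
        ≤ a * M + ∑ i ∈ Finset.range n, a ^ i * thr a M i := by rw [← h2]; linarith
      _ ≤ a * M + (1 - a) * M := by linarith
      _ = M := by ring
  linarith


lemma indep_step (P : Measure Ω) [IsProbabilityMeasure P] (ξ : ℕ → Ω → ℝ)
    (hm : ∀ n, Measurable (ξ n))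
    (hind : iIndepFun ξ P)
    (a M θv : ℝ) (j : ℕ) :
    P ({ω | θv < ξ j ω} ∩ stayAbove a ξ (fun _ => M) M j)
      = P {ω | θv < ξ j ω} * P (stayAbove a ξ (fun _ => M) M j) := by
  classical
  set S : Finset ℕ := Finset.range j with hS
  have hST : Disjoint ({j} : Finset ℕ) S := by
    simp only [Finset.disjoint_left, Finset.mem_singleton, hS, Finset.mem_range]
    rintro x rfl
    omega
  have hIF := hind.indepFun_finset ({j} : Finset ℕ) S hST hm
  have hIF2 : IndepFun (ξ j) (fun ω (i : S) => ξ (i : ℕ) ω) P :=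
    hIF.comp (measurable_pi_apply (⟨j, Finset.mem_singleton_self j⟩ :
      {x // x ∈ ({j} : Finset ℕ)})) measurable_id
  set G : ℕ → ({x // x ∈ S} → ℝ) → ℝ := fun k v =>
    a ^ k * M + ∑ i ∈ Finset.range k,
      a ^ (k - 1 - i) * (if h : i < j then v ⟨i, by simp [hS, h]⟩ else 0) with hG
  have hGmeas : ∀ k, Measurable (G k) := by
    intro k
    apply Measurable.add measurable_const
    apply Finset.measurable_sum
    intro i _
    by_cases h : i < j
    · simp only [dif_pos h]
      exact (measurable_pi_apply _).const_mul _
    · simp only [dif_neg h]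
      exact measurable_const
  set t : Set ({x // x ∈ S} → ℝ) := {v | ∀ k, 1 ≤ k → k ≤ j → M < G k v} with ht_def
  have ht : MeasurableSet t := by
    have h : t = ⋂ (k : ℕ), ⋂ (_ : 1 ≤ k), ⋂ (_ : k ≤ j), {v | M < G k v} := by
      ext v; simp [ht_def]
    rw [h]
    exact MeasurableSet.iInter fun k => MeasurableSet.iInter fun _ =>
      MeasurableSet.iInter fun _ => measurableSet_lt measurable_const (hGmeas k)
  have hGX : ∀ (k : ℕ), k ≤ j → ∀ ω : Ω, G k (fun i : S => ξ (i : ℕ) ω)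
      = X a ξ (fun _ => M) k ω := by
    intro k hk ω
    rw [X_const_eq, hG]
    simp only
    congr 1
    refine Finset.sum_congr rfl fun i hi => ?_
    have h : i < j := lt_of_lt_of_le (Finset.mem_range.mp hi) hk
    rw [dif_pos h]
  have hpre : (fun ω (i : S) => ξ (i : ℕ) ω) ⁻¹' t = stayAbove a ξ (fun _ => M) M j := by
    ext ω
    simp only [Set.mem_preimage, ht_def, Set.mem_setOf_eq, stayAbove]
    constructor
    · intro h k h1 h2
      rw [← hGX k h2 ω]
      exact h k h1 h2
    · intro h k h1 h2
      rw [hGX k h2 ω]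
      exact h k h1 h2
  have hmain := hIF2.measure_inter_preimage_eq_mul (Set.Ioi θv) t measurableSet_Ioi ht
  rw [hpre] at hmain
  exact hmain

lemma sum_swap_aux (v h : ℕ → ℝ) :
    ∀ N : ℕ, ∑ m ∈ Finset.range N, ∑ j ∈ Finset.range (m + 1), h (m - j) * v j
      = ∑ j ∈ Finset.range N, v j * ∑ i ∈ Finset.range (N - j), h i := by
  intro N
  induction N with
  | zero => simp
  | succ N ih =>
    rw [Finset.sum_range_succ, ih, Finset.sum_range_succ (f := fun j => v j * ∑ i ∈ Finset.range (N + 1 - j), h i)]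
    have e1 : ∀ j ∈ Finset.range N,
        v j * ∑ i ∈ Finset.range (N + 1 - j), h i
          = v j * ∑ i ∈ Finset.range (N - j), h i + v j * h (N - j) := by
      intro j hj
      have hj' : j < N := Finset.mem_range.mp hj
      have h2 : N + 1 - j = (N - j) + 1 := by omega
      rw [h2, Finset.sum_range_succ]
      ring
    rw [Finset.sum_congr rfl e1, Finset.sum_add_distrib]
    rw [Finset.sum_range_succ (f := fun j => h (N - j) * v j)]
    simp only [Nat.sub_self, Nat.add_sub_cancel_left]
    rw [Finset.sum_range_one]
    have e2 : ∑ j ∈ Finset.range N, h (N - j) * v j = ∑ j ∈ Finset.range N, v j * h (N - j) := by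
      refine Finset.sum_congr rfl fun j _ => by ring
    rw [e2]
    ring

lemma renewal_bound (v h : ℕ → ℝ) (hv0 : v 0 ≤ 1) (hv : ∀ n, 0 ≤ v n)
    (hq : ∀ N : ℕ, ∑ i ∈ Finset.range N, h i ≤ 1 / 2) (hh : ∀ i, 0 ≤ h i)
    (hrec : ∀ n : ℕ, 1 ≤ n → v n ≤ ∑ j ∈ Finset.range n, h (n - 1 - j) * v j) :
    ∀ N : ℕ, ∑ n ∈ Finset.range N, v n ≤ 2 := by
  intro N
  induction N with
  | zero => simp
  | succ N ih =>
    rw [Finset.sum_range_succ']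
    have h1 : ∀ m ∈ Finset.range N, v (m + 1) ≤ ∑ j ∈ Finset.range (m + 1), h (m - j) * v j := by
      intro m _
      have := hrec (m + 1) (by omega)
      simpa using this
    have h2 : ∑ m ∈ Finset.range N, v (m + 1)
        ≤ ∑ m ∈ Finset.range N, ∑ j ∈ Finset.range (m + 1), h (m - j) * v j :=
      Finset.sum_le_sum h1
    rw [sum_swap_aux] at h2
    have h3 : ∑ j ∈ Finset.range N, v j * ∑ i ∈ Finset.range (N - j), h i
        ≤ ∑ j ∈ Finset.range N, v j * (1 / 2) :=
      Finset.sum_le_sum fun j _ => mul_le_mul_of_nonneg_left (hq _) (hv j)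
    have h4 : ∑ j ∈ Finset.range N, v j * (1 / 2) = (1 / 2) * ∑ j ∈ Finset.range N, v j := by
      rw [Finset.mul_sum]
      exact Finset.sum_congr rfl fun j _ => by ring
    have h5 : ∑ m ∈ Finset.range N, v (m + 1) ≤ 1 := by
      rw [h4] at h3
      linarith [h2.trans h3]
    linarith


set_option maxHeartbeats 1000000 in
lemma tail_est (a r c x₁ : ℝ) (ha0 : 0 < a) (ha1 : a < 1) (hr : 0 < r) (hc : 0 < c)
    (L : ℝ → ℝ)
    (hLb : ∀ x : ℝ, x₁ ≤ x → |L x| ≤ c * Real.log x ^ (-(2 * r + 2))) :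
    ∃ M₀ : ℝ, 1 ≤ M₀ ∧ ∀ M : ℝ, M₀ ≤ M → ∀ i : ℕ,
      a ^ (-(r * ((i : ℝ) + 1))) * (thr a M i ^ (-r) * L (thr a M i)) ≤ (1 / 2) * wgt i := by
  have h1a : (0:ℝ) < 1 - a := by linarith
  set la : ℝ := -Real.log a / 4 with hla_def
  have hla : 0 < la := by
    have := Real.log_neg ha0 ha1
    rw [hla_def]; linarith
  -- eventual bound on logs
  have hev : ∀ᶠ (i : ℕ) in atTop, 2 * Real.log ((i:ℝ) + 2) ≤ 3 * la * (i:ℝ) + 6 * la := by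
    have h1 : ∀ᶠ x : ℝ in atTop, ‖Real.log x‖ ≤ 3 * la / 2 * ‖x‖ :=
      Real.isLittleO_log_id_atTop.def (by positivity)
    have h2 : Tendsto (fun i : ℕ => (i:ℝ) + 2) atTop atTop :=
      tendsto_atTop_add_const_right _ 2 tendsto_natCast_atTop_atTop
    filter_upwards [h2.eventually h1] with i hi
    have hx : (0:ℝ) ≤ (i:ℝ) + 2 := by positivity
    have h3 : Real.log ((i:ℝ) + 2) ≤ 3 * la / 2 * ((i:ℝ) + 2) := by
      calc Real.log ((i:ℝ) + 2) ≤ |Real.log ((i:ℝ) + 2)| := le_abs_self _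
        _ = ‖Real.log ((i:ℝ) + 2)‖ := (Real.norm_eq_abs _).symm
        _ ≤ 3 * la / 2 * ‖(i:ℝ) + 2‖ := hi
        _ = 3 * la / 2 * ((i:ℝ) + 2) := by rw [Real.norm_eq_abs, abs_of_nonneg hx]
    nlinarith [Nat.cast_nonneg (α := ℝ) i]
  obtain ⟨N, hN⟩ := Filter.eventually_atTop.mp hev
  set K : ℝ := max (6 * la) (2 * Real.log ((N:ℝ) + 2)) with hK_def
  have hK : ∀ i : ℕ, 2 * Real.log ((i:ℝ) + 2) ≤ 3 * la * (i:ℝ) + K := by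
    intro i
    rcases le_or_gt N i with h | h
    · have := hN i h
      have h6 : 6 * la ≤ K := le_max_left _ _
      linarith
    · have h1 : Real.log ((i:ℝ) + 2) ≤ Real.log ((N:ℝ) + 2) := by
        have hi2 : (0:ℝ) < (i:ℝ) + 2 := by positivity
        have : ((i:ℝ) + 2) ≤ ((N:ℝ) + 2) := by
          have : (i:ℝ) ≤ (N:ℝ) := by exact_mod_cast h.le
          linarith
        exact (Real.log_le_log_iff hi2 (by positivity)).mpr this
      have h6 : 2 * Real.log ((N:ℝ) + 2) ≤ K := le_max_right _ _
      have h7 : 0 ≤ 3 * la * (i:ℝ) := by positivity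
      linarith
  set X₀ : ℝ := max x₁ (Real.exp 1) with hX₀_def
  have hX₀pos : 0 < X₀ := lt_of_lt_of_le (Real.exp_pos 1) (le_max_right _ _)
  have hX₀log : 1 ≤ Real.log X₀ := by
    calc (1:ℝ) = Real.log (Real.exp 1) := (Real.log_exp 1).symm
      _ ≤ Real.log X₀ := (Real.log_le_log_iff (Real.exp_pos 1) hX₀pos).mpr (le_max_right _ _)
  set C : ℝ := a ^ (-r) * (1 - a) ^ (-r) * 2 ^ r * c * la ^ (-(2 * r + 2)) with hC_def
  have hC : 0 < C := by
    have := Real.rpow_pos_of_pos ha0 (-r)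
    have := Real.rpow_pos_of_pos h1a (-r)
    have := Real.rpow_pos_of_pos (by norm_num : (0:ℝ) < 2) r
    have := Real.rpow_pos_of_pos hla (-(2 * r + 2))
    rw [hC_def]; positivity
  refine ⟨max 1 (max (Real.exp (K + la + Real.log X₀) / (1 - a)) ((4 * C) ^ (1 / r))),
    le_max_left _ _, ?_⟩
  intro M hM i
  have hM1 : (1:ℝ) ≤ M := le_trans (le_max_left _ _) hM
  have hMpos : 0 < M := by linarith
  set θ := thr a M i with hθdef
  have hθpos : 0 < θ := thr_pos ha0 ha1 hMpos i
  have hipos : (0:ℝ) < (i:ℝ) + 1 := by positivity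
  have hi2pos : (0:ℝ) < (i:ℝ) + 2 := by positivity
  -- log lower bound
  have hlogθ : la * ((i:ℝ) + 1) + Real.log X₀ ≤ Real.log θ := by
    have e1 : Real.log θ
        = Real.log ((1 - a) * M) + Real.log (wgt i) + Real.log ((a ^ i)⁻¹) := by
      have hw := wgt_pos i
      have hne1 : (1 - a) * M * wgt i ≠ 0 := ne_of_gt (by positivity)
      have hne2 : ((a : ℝ) ^ i)⁻¹ ≠ 0 := by positivity
      have hne3 : (1 - a) * M ≠ 0 := ne_of_gt (by positivity)
      rw [hθdef, thr]
      rw [Real.log_mul hne1 hne2, Real.log_mul hne3 (ne_of_gt hw)]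
    have e2 : Real.log (wgt i) = -(Real.log ((i:ℝ) + 1) + Real.log ((i:ℝ) + 2)) := by
      rw [wgt, Real.log_inv, Real.log_mul (ne_of_gt hipos) (ne_of_gt hi2pos)]
    have e3 : Real.log ((a ^ i)⁻¹) = 4 * la * (i:ℝ) := by
      rw [Real.log_inv, Real.log_pow]
      rw [hla_def]; ring
    have e4 : Real.log ((i:ℝ) + 1) + Real.log ((i:ℝ) + 2) ≤ 2 * Real.log ((i:ℝ) + 2) := by
      have : Real.log ((i:ℝ) + 1) ≤ Real.log ((i:ℝ) + 2) :=
        (Real.log_le_log_iff hipos hi2pos).mpr (by linarith)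
      linarith
    have e5 : K + la + Real.log X₀ ≤ Real.log ((1 - a) * M) := by
      have h2 : Real.exp (K + la + Real.log X₀) / (1 - a) ≤ M :=
        le_trans (le_trans (le_max_left _ _) (le_max_right 1 _)) hM
      have h3 : Real.exp (K + la + Real.log X₀) ≤ (1 - a) * M := by
        rw [div_le_iff₀ h1a] at h2
        linarith [h2]
      calc K + la + Real.log X₀ = Real.log (Real.exp (K + la + Real.log X₀)) :=
            (Real.log_exp _).symm
        _ ≤ Real.log ((1 - a) * M) :=
            (Real.log_le_log_iff (Real.exp_pos _) (by positivity)).mpr h3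
    have e6 := hK i
    rw [e1, e2, e3]
    linarith
  have hθX₀ : X₀ ≤ θ := by
    have h1 : Real.log X₀ ≤ Real.log θ := by nlinarith
    exact (Real.log_le_log_iff hX₀pos hθpos).mp h1
  have hlogθ' : la * ((i:ℝ) + 1) ≤ Real.log θ := by linarith
  have hlaBpos : (0:ℝ) < la * ((i:ℝ) + 1) := by positivity
  -- tail bound on L
  have hLθ : |L θ| ≤ c * (la * ((i:ℝ) + 1)) ^ (-(2 * r + 2)) := by
    have h1 := hLb θ (le_trans (le_max_left x₁ _) hθX₀)
    have h2 : Real.log θ ^ (-(2 * r + 2)) ≤ (la * ((i:ℝ) + 1)) ^ (-(2 * r + 2)) :=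
      Real.rpow_le_rpow_of_nonpos hlaBpos hlogθ' (by linarith)
    calc |L θ| ≤ c * Real.log θ ^ (-(2 * r + 2)) := h1
      _ ≤ c * (la * ((i:ℝ) + 1)) ^ (-(2 * r + 2)) :=
          mul_le_mul_of_nonneg_left h2 hc.le
  -- rpow decomposition of θ ^ (-r)
  have hθr : θ ^ (-r) = (1 - a) ^ (-r) * M ^ (-r)
      * (((i:ℝ) + 1) * ((i:ℝ) + 2)) ^ r * a ^ ((i:ℝ) * r) := by
    have e1 : ∀ x : ℝ, 0 < x → (x⁻¹ : ℝ) ^ (-r) = x ^ r := fun x hx => by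
      rw [Real.inv_rpow hx.le, Real.rpow_neg hx.le, inv_inv]
    rw [hθdef, thr, wgt]
    rw [Real.mul_rpow (by positivity) (by positivity),
      Real.mul_rpow (by positivity) (le_of_lt (by positivity : (0:ℝ) < ((((i:ℝ)+1) * ((i:ℝ)+2))⁻¹))),
      Real.mul_rpow h1a.le hMpos.le]
    rw [e1 _ (by positivity), e1 _ (by positivity)]
    rw [← Real.rpow_natCast a i, ← Real.rpow_mul ha0.le]
  -- main chain
  have hA : (0:ℝ) < a ^ (-(r * ((i:ℝ) + 1))) := Real.rpow_pos_of_pos ha0 _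
  have hT : (0:ℝ) < θ ^ (-r) := Real.rpow_pos_of_pos hθpos _
  have step0 : a ^ (-(r * ((i:ℝ) + 1))) * (θ ^ (-r) * L θ)
      ≤ a ^ (-(r * ((i:ℝ) + 1))) * θ ^ (-r) * |L θ| := by
    have : L θ ≤ |L θ| := le_abs_self _
    rw [mul_assoc]
    exact mul_le_mul_of_nonneg_left (mul_le_mul_of_nonneg_left this hT.le) hA.le
  have step1 : a ^ (-(r * ((i:ℝ) + 1))) * θ ^ (-r) * |L θ|
      ≤ a ^ (-(r * ((i:ℝ) + 1))) * θ ^ (-r) * (c * (la * ((i:ℝ) + 1)) ^ (-(2 * r + 2))) :=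
    mul_le_mul_of_nonneg_left hLθ (by positivity)
  -- now the purely algebraic bound
  have hP2 : a ^ (-(r * ((i:ℝ) + 1))) * a ^ ((i:ℝ) * r) = a ^ (-r) := by
    rw [← Real.rpow_add ha0]
    congr 1
    ring
  have hP3 : (((i:ℝ) + 1) * ((i:ℝ) + 2)) ^ r ≤ 2 ^ r * ((i:ℝ) + 1) ^ (2 * r) := by
    have h1 : ((i:ℝ) + 1) * ((i:ℝ) + 2) ≤ 2 * (((i:ℝ) + 1) * ((i:ℝ) + 1)) := by nlinarith
    calc (((i:ℝ) + 1) * ((i:ℝ) + 2)) ^ r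
        ≤ (2 * (((i:ℝ) + 1) * ((i:ℝ) + 1))) ^ r :=
          Real.rpow_le_rpow (by positivity) h1 hr.le
      _ = 2 ^ r * ((i:ℝ) + 1) ^ (2 * r) := by
          rw [Real.mul_rpow (by norm_num) (by positivity)]
          congr 1
          have e : ((i:ℝ) + 1) * ((i:ℝ) + 1) = ((i:ℝ) + 1) ^ (2:ℝ) := by
            rw [show (2:ℝ) = ((2:ℕ):ℝ) by norm_num, Real.rpow_natCast]
            ring
          rw [e, ← Real.rpow_mul hipos.le]
  have hP4 : ((i:ℝ) + 1) ^ (2 * r) * ((i:ℝ) + 1) ^ (-(2 * r + 2)) = ((i:ℝ) + 1) ^ (-(2:ℝ)) := by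
    rw [← Real.rpow_add hipos]
    congr 1
    ring
  have hP5 : (la * ((i:ℝ) + 1)) ^ (-(2 * r + 2))
      = la ^ (-(2 * r + 2)) * ((i:ℝ) + 1) ^ (-(2 * r + 2)) :=
    Real.mul_rpow hla.le hipos.le
  have key : a ^ (-(r * ((i:ℝ) + 1))) * θ ^ (-r) * (c * (la * ((i:ℝ) + 1)) ^ (-(2 * r + 2)))
      ≤ C * M ^ (-r) * ((i:ℝ) + 1) ^ (-(2:ℝ)) := by
    rw [hθr, hP5]
    have hMr : (0:ℝ) < M ^ (-r) := Real.rpow_pos_of_pos hMpos _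
    have h1ar : (0:ℝ) < (1 - a) ^ (-r) := Real.rpow_pos_of_pos h1a _
    have hlar : (0:ℝ) < la ^ (-(2 * r + 2)) := Real.rpow_pos_of_pos hla _
    have hir : (0:ℝ) < ((i:ℝ) + 1) ^ (-(2 * r + 2)) := Real.rpow_pos_of_pos hipos _
    have hair : (0:ℝ) < a ^ ((i:ℝ) * r) := Real.rpow_pos_of_pos ha0 _
    set E : ℝ := -(2 * r + 2) with hE_def
    set Z : ℝ := a ^ (-(r * ((i:ℝ) + 1))) * ((1 - a) ^ (-r) * M ^ (-r) * a ^ ((i:ℝ) * r))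
      * (c * (la ^ E * ((i:ℝ) + 1) ^ E)) with hZ_def
    have hZ : 0 ≤ Z := by
      rw [hZ_def]
      positivity
    calc a ^ (-(r * ((i:ℝ) + 1)))
          * ((1 - a) ^ (-r) * M ^ (-r) * (((i:ℝ) + 1) * ((i:ℝ) + 2)) ^ r * a ^ ((i:ℝ) * r))
          * (c * (la ^ E * ((i:ℝ) + 1) ^ E))
        = Z * ((((i:ℝ) + 1) * ((i:ℝ) + 2)) ^ r) := by rw [hZ_def]; ring
      _ ≤ Z * (2 ^ r * ((i:ℝ) + 1) ^ (2 * r)) := mul_le_mul_of_nonneg_left hP3 hZ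
      _ = (a ^ (-(r * ((i:ℝ) + 1))) * a ^ ((i:ℝ) * r))
            * ((1 - a) ^ (-r) * 2 ^ r * c * la ^ E
              * (M ^ (-r) * (((i:ℝ) + 1) ^ (2 * r) * ((i:ℝ) + 1) ^ E))) := by
          rw [hZ_def]; ring
      _ = C * M ^ (-r) * ((i:ℝ) + 1) ^ (-(2:ℝ)) := by
          rw [hP2, hE_def, hP4, hC_def]; ring
  -- numeric smallness of C * M ^ (-r)
  have hCM : C * M ^ (-r) ≤ 1 / 4 := by
    have hM2 : (4 * C) ^ (1 / r) ≤ M :=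
      le_trans (le_trans (le_max_right _ _) (le_max_right 1 _)) hM
    have h4C : (0:ℝ) < 4 * C := by linarith
    have h1 : 4 * C ≤ M ^ r := by
      calc 4 * C = ((4 * C) ^ (1 / r)) ^ r := by
            rw [← Real.rpow_mul h4C.le, one_div, inv_mul_cancel₀ hr.ne', Real.rpow_one]
        _ ≤ M ^ r := Real.rpow_le_rpow (by positivity) hM2 hr.le
    have hMr : (0:ℝ) < M ^ r := Real.rpow_pos_of_pos hMpos r
    have h2 : M ^ (-r) = (M ^ r)⁻¹ := Real.rpow_neg hMpos.le r
    rw [h2]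
    have h3 : (M ^ r)⁻¹ * (M ^ r) = 1 := inv_mul_cancel₀ hMr.ne'
    have h4 : (0:ℝ) < (M ^ r)⁻¹ := by positivity
    nlinarith
  -- conclude
  have hfin : C * M ^ (-r) * ((i:ℝ) + 1) ^ (-(2:ℝ)) ≤ (1 / 2) * wgt i := by
    have e : ((i:ℝ) + 1) ^ (-(2:ℝ)) = (((i:ℝ) + 1) * ((i:ℝ) + 1))⁻¹ := by
      rw [Real.rpow_neg hipos.le]
      congr 1
      rw [show (2:ℝ) = ((2:ℕ):ℝ) by norm_num, Real.rpow_natCast]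
      ring
    rw [e, wgt]
    have h1 : (0:ℝ) < (((i:ℝ) + 1) * ((i:ℝ) + 1)) := by positivity
    have h2 : (0:ℝ) < (((i:ℝ) + 1) * ((i:ℝ) + 2)) := by positivity
    have h3 : ((i:ℝ) + 1) * ((i:ℝ) + 2) ≤ 2 * (((i:ℝ) + 1) * ((i:ℝ) + 1)) := by nlinarith
    have h4 : (((i:ℝ) + 1) * ((i:ℝ) + 2))⁻¹ ≥ (2 * (((i:ℝ) + 1) * ((i:ℝ) + 1)))⁻¹ :=
      inv_anti₀ h2 h3
    have h5 : (2 * (((i:ℝ) + 1) * ((i:ℝ) + 1)))⁻¹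
        = (1 / 2) * ((((i:ℝ) + 1) * ((i:ℝ) + 1)))⁻¹ := by
      rw [mul_inv]
      ring
    have h6 : (0:ℝ) ≤ ((((i:ℝ) + 1) * ((i:ℝ) + 1)))⁻¹ := by positivity
    have h7 : C * M ^ (-r) * (((i:ℝ) + 1) * ((i:ℝ) + 1))⁻¹
        ≤ (1 / 4) * (((i:ℝ) + 1) * ((i:ℝ) + 1))⁻¹ :=
      mul_le_mul_of_nonneg_right hCM h6
    calc C * M ^ (-r) * (((i:ℝ) + 1) * ((i:ℝ) + 1))⁻¹
        ≤ (1 / 4) * (((i:ℝ) + 1) * ((i:ℝ) + 1))⁻¹ := h7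
      _ ≤ (1 / 2) * (((i:ℝ) + 1) * ((i:ℝ) + 2))⁻¹ := by
          nlinarith [h4, h5, h6]
  linarith [step0, step1, key, hfin]


set_option maxHeartbeats 1000000 in
/-- second part of Proposition `prop:reg.tails`: if
`P(ξ_1 > x) = x^{−r} L(x)` with `L(x) = O((log x)^{−2r−2})`, then for all sufficiently
large `M`, `Σ_n a^{−rn} P_M(T_M > n) < ∞`; in particular `a^{−rn} P_M(T_M > n) → 0`. -/
theorem ar1_regular_tail_summability
    (P : Measure Ω) [IsProbabilityMeasure P]
    (ξ : ℕ → Ω → ℝ) (hmeas : ∀ n, Measurable (ξ n))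
    (hindep : iIndepFun ξ P)
    (hident : ∀ n, Measure.map (ξ n) P = Measure.map (ξ 0) P)
    (a : ℝ) (ha : a ∈ Set.Ioo (0 : ℝ) 1)
    (r : ℝ) (hr : 0 < r)
    (L : ℝ → ℝ)
    (hslow : ∀ t : ℝ, 0 < t →
      Tendsto (fun x : ℝ => L (t * x) / L x) atTop (nhds 1))
    (htail : ∀ x : ℝ, 0 < x → (P {ω | x < ξ 0 ω}).toReal = x ^ (-r) * L x)
    (hL : ∃ c : ℝ, ∀ᶠ x : ℝ in atTop, |L x| ≤ c * Real.log x ^ (-(2 * r + 2))) :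
    ∃ M₀ : ℝ, ∀ M : ℝ, M₀ ≤ M →
      (∑' n : ℕ,
        ENNReal.ofReal (a ^ (-(r * (n : ℝ)))) * P (stayAbove a ξ (fun _ => M) M n)) < ⊤ ∧
      Tendsto
        (fun n : ℕ => a ^ (-(r * (n : ℝ))) * (P (stayAbove a ξ (fun _ => M) M n)).toReal)
        atTop (nhds 0) := by
  obtain ⟨ha0, ha1⟩ := ha
  obtain ⟨c, hcev⟩ := hL
  obtain ⟨x₁', hx₁'⟩ := Filter.eventually_atTop.mp hcev
  set c' : ℝ := max c 1 with hc'_def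
  have hc' : (0:ℝ) < c' := lt_of_lt_of_le one_pos (le_max_right c 1)
  set x₁ : ℝ := max x₁' (Real.exp 1) with hx₁_def
  have hLb : ∀ x : ℝ, x₁ ≤ x → |L x| ≤ c' * Real.log x ^ (-(2 * r + 2)) := by
    intro x hx
    have h1 := hx₁' x (le_trans (le_max_left _ _) hx)
    have hex : Real.exp 1 ≤ x := le_trans (le_max_right _ _) hx
    have hxpos : (0:ℝ) < x := lt_of_lt_of_le (Real.exp_pos 1) hex
    have h2 : (1:ℝ) ≤ Real.log x := by
      calc (1:ℝ) = Real.log (Real.exp 1) := (Real.log_exp 1).symm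
        _ ≤ Real.log x := (Real.log_le_log_iff (Real.exp_pos 1) hxpos).mpr hex
    have h3 : (0:ℝ) ≤ Real.log x ^ (-(2 * r + 2)) := Real.rpow_nonneg (by linarith) _
    calc |L x| ≤ c * Real.log x ^ (-(2 * r + 2)) := h1
      _ ≤ c' * Real.log x ^ (-(2 * r + 2)) :=
          mul_le_mul_of_nonneg_right (le_max_left c 1) h3
  obtain ⟨M₀, hM₀1, hM₀⟩ := tail_est a r c' x₁ ha0 ha1 hr hc' L hLb
  refine ⟨M₀, fun M hM => ?_⟩
  have hM1 : (1:ℝ) ≤ M := hM₀1.trans hM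
  have hMpos : (0:ℝ) < M := by linarith
  set v : ℕ → ℝ :=
    fun n => a ^ (-(r * (n : ℝ))) * (P (stayAbove a ξ (fun _ => M) M n)).toReal with hv_def
  set p : ℕ → ℝ := fun i => (P {ω | thr a M i < ξ 0 ω}).toReal with hp_def
  set hf : ℕ → ℝ := fun i => a ^ (-(r * ((i : ℝ) + 1))) * p i with hhf_def
  have hp_eq : ∀ i : ℕ, p i = thr a M i ^ (-r) * L (thr a M i) := fun i =>
    htail _ (thr_pos ha0 ha1 hMpos i)
  have hp_nonneg : ∀ i, 0 ≤ p i := fun i => ENNReal.toReal_nonneg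
  have hmap : ∀ (j : ℕ) (θv : ℝ), P {ω | θv < ξ j ω} = P {ω | θv < ξ 0 ω} := by
    intro j θv
    have h1 : {ω | θv < ξ j ω} = ξ j ⁻¹' (Set.Ioi θv) := rfl
    have h2 : {ω | θv < ξ 0 ω} = ξ 0 ⁻¹' (Set.Ioi θv) := rfl
    rw [h1, h2, ← Measure.map_apply (hmeas j) measurableSet_Ioi,
      ← Measure.map_apply (hmeas 0) measurableSet_Ioi, hident j]
  -- the renewal-type recursion
  have hurec : ∀ n : ℕ, 1 ≤ n →
      (P (stayAbove a ξ (fun _ => M) M n)).toReal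
        ≤ ∑ j ∈ Finset.range n, p (n - 1 - j) * (P (stayAbove a ξ (fun _ => M) M j)).toReal := by
    intro n hn
    have h1 : P (stayAbove a ξ (fun _ => M) M n)
        ≤ ∑ j ∈ Finset.range n,
            P {ω | thr a M (n - 1 - j) < ξ 0 ω} * P (stayAbove a ξ (fun _ => M) M j) := by
      calc P (stayAbove a ξ (fun _ => M) M n)
          ≤ P (⋃ j ∈ Finset.range n,
              ({ω | thr a M (n - 1 - j) < ξ j ω} ∩ stayAbove a ξ (fun _ => M) M j)) :=
            measure_mono (stayAbove_subset_union a ha0 ha1 ξ M (by linarith) n hn)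
        _ ≤ ∑ j ∈ Finset.range n,
              P ({ω | thr a M (n - 1 - j) < ξ j ω} ∩ stayAbove a ξ (fun _ => M) M j) :=
            measure_biUnion_finset_le _ _
        _ = ∑ j ∈ Finset.range n,
              P {ω | thr a M (n - 1 - j) < ξ j ω} * P (stayAbove a ξ (fun _ => M) M j) :=
            Finset.sum_congr rfl fun j _ => indep_step P ξ hmeas hindep a M _ j
        _ = ∑ j ∈ Finset.range n,
              P {ω | thr a M (n - 1 - j) < ξ 0 ω} * P (stayAbove a ξ (fun _ => M) M j) :=
            Finset.sum_congr rfl fun j _ => by rw [hmap j]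
    have hfin : ∀ j ∈ Finset.range n,
        P {ω | thr a M (n - 1 - j) < ξ 0 ω} * P (stayAbove a ξ (fun _ => M) M j) ≠ ⊤ :=
      fun j _ => ENNReal.mul_ne_top (measure_ne_top P _) (measure_ne_top P _)
    have hfin2 : (∑ j ∈ Finset.range n,
        P {ω | thr a M (n - 1 - j) < ξ 0 ω} * P (stayAbove a ξ (fun _ => M) M j)) ≠ ⊤ :=
      (ENNReal.sum_lt_top.mpr fun j hj => lt_top_iff_ne_top.mpr (hfin j hj)).ne
    have h2 := ENNReal.toReal_mono hfin2 h1
    rw [ENNReal.toReal_sum hfin] at h2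
    refine h2.trans_eq (Finset.sum_congr rfl fun j _ => ?_)
    rw [ENNReal.toReal_mul, hp_def]
  have hh_nonneg : ∀ i, 0 ≤ hf i := fun i =>
    mul_nonneg (Real.rpow_nonneg ha0.le _) (hp_nonneg i)
  have hv_nonneg : ∀ n, 0 ≤ v n := fun n =>
    mul_nonneg (Real.rpow_nonneg ha0.le _) ENNReal.toReal_nonneg
  have hq : ∀ N : ℕ, ∑ i ∈ Finset.range N, hf i ≤ 1 / 2 := by
    intro N
    have h1 : ∀ i ∈ Finset.range N, hf i ≤ (1 / 2) * wgt i := by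
      intro i _
      have := hM₀ M hM i
      simp only [hhf_def]
      rw [hp_eq i]
      exact this
    have h2 : (0:ℝ) ≤ ∑ i ∈ Finset.range N, wgt i :=
      Finset.sum_nonneg fun i _ => (wgt_pos i).le
    calc ∑ i ∈ Finset.range N, hf i ≤ ∑ i ∈ Finset.range N, (1 / 2) * wgt i :=
          Finset.sum_le_sum h1
      _ = (1 / 2) * ∑ i ∈ Finset.range N, wgt i := by rw [Finset.mul_sum]
      _ ≤ 1 / 2 := by have := sum_wgt_le N; linarith
  have hv0 : v 0 ≤ 1 := by
    have e : (P (stayAbove a ξ (fun _ => M) M 0)).toReal = 1 := by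
      rw [stayAbove_zero, measure_univ, ENNReal.toReal_one]
    rw [hv_def]
    simp only
    rw [e]
    norm_num
  have hvrec : ∀ n : ℕ, 1 ≤ n → v n ≤ ∑ j ∈ Finset.range n, hf (n - 1 - j) * v j := by
    intro n hn
    have h1 := hurec n hn
    have h2 : v n ≤ a ^ (-(r * (n:ℝ)))
        * ∑ j ∈ Finset.range n, p (n - 1 - j) * (P (stayAbove a ξ (fun _ => M) M j)).toReal :=
      mul_le_mul_of_nonneg_left h1 (Real.rpow_nonneg ha0.le _)
    rw [Finset.mul_sum] at h2
    refine h2.trans_eq (Finset.sum_congr rfl fun j hj => ?_)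
    have hjn : j < n := Finset.mem_range.mp hj
    have hcast : ((n - 1 - j : ℕ) : ℝ) + 1 + (j:ℝ) = (n:ℝ) := by
      have h : (n - 1 - j) + 1 + j = n := by omega
      exact_mod_cast congrArg (Nat.cast : ℕ → ℝ) h
    have e3 : a ^ (-(r * (((n - 1 - j : ℕ) : ℝ) + 1))) * a ^ (-(r * (j:ℝ)))
        = a ^ (-(r * (n:ℝ))) := by
      rw [← Real.rpow_add ha0]
      congr 1
      rw [← hcast]
      ring
    show a ^ (-(r * (n:ℝ))) * (p (n - 1 - j) * (P (stayAbove a ξ (fun _ => M) M j)).toReal)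
        = (a ^ (-(r * (((n - 1 - j : ℕ) : ℝ) + 1))) * p (n - 1 - j))
          * (a ^ (-(r * (j:ℝ))) * (P (stayAbove a ξ (fun _ => M) M j)).toReal)
    rw [← e3]
    ring
  have hsumv := renewal_bound v hf hv0 hv_nonneg hq hh_nonneg hvrec
  have hsummable : Summable v := summable_of_sum_range_le hv_nonneg hsumv
  constructor
  · have hterm : ∀ n : ℕ,
        ENNReal.ofReal (a ^ (-(r * (n:ℝ)))) * P (stayAbove a ξ (fun _ => M) M n)
          = ENNReal.ofReal (v n) := by
      intro n
      rw [hv_def]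
      simp only
      rw [ENNReal.ofReal_mul (Real.rpow_nonneg ha0.le _)]
      congr 1
      exact (ENNReal.ofReal_toReal (measure_ne_top P _)).symm
    calc ∑' n : ℕ, ENNReal.ofReal (a ^ (-(r * (n:ℝ)))) * P (stayAbove a ξ (fun _ => M) M n)
        = ∑' n : ℕ, ENNReal.ofReal (v n) := tsum_congr hterm
      _ = ENNReal.ofReal (∑' n, v n) :=
          (ENNReal.ofReal_tsum_of_nonneg hv_nonneg hsummable).symm
      _ < ⊤ := ENNReal.ofReal_lt_top
  · exact hsummable.tendsto_atTop_zero


end AR1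
end
end

section
/- Assume the innovations are almost surely bounded above with essential supremum R > 0, P(ξ_1 < 0) > 0, and P(ξ_1 ≤ −a·R_*) + P(ξ_1 = R) < 1, where R_* := R/(1−a); let λ_a ∈ (0,∞) be the persistence exponent of the chain. Then P(ξ_1 = R) < e^{−λ_a}. -/
open MeasureTheory ProbabilityTheory Filter Set Real
open scoped ENNReal NNReal

noncomputable section

namespace AR1

variable {Ω : Type*} [MeasurableSpace Ω]

/-- recovery lower-bound sequence after a "bad" step -/
noncomputable def bseq (a R δ η : ℝ) (n : ℕ) : ℝ :=
  Nat.rec (δ / 2) (fun _ b => a * b + (R - η)) n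

lemma bseq_zero (a R δ η : ℝ) : bseq a R δ η 0 = δ / 2 := rfl

lemma bseq_succ (a R δ η : ℝ) (i : ℕ) :
    bseq a R δ η (i + 1) = a * bseq a R δ η i + (R - η) := rfl

lemma traj {a R δ : ℝ} {m : ℕ} (ha : 0 < a) (ha1 : a < 1) (hR : 0 < R)
    (hδ : 0 < δ) (hδa : δ ≤ a * (R / (1 - a)))
    (hma : a ^ m * (R / (1 - a)) ≤ δ / (4 * a)) (hm : 1 ≤ m)
    (x : ℕ → ℝ) (hx0 : R / (1 - a) - δ / (2 * a) ≤ x 0)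
    (ξ : ℕ → ℝ) (n : ℕ)
    (hstep : ∀ k, x (k + 1) = a * x k + ξ k)
    (hξ1 : ∀ k, k < n → (m + 1) ∣ k → -(a * (R / (1 - a))) + δ ≤ ξ k)
    (hξ2 : ∀ k, k < n → ¬ (m + 1) ∣ k → R - (1 - a) * δ / (8 * a) ≤ ξ k) :
    ∀ k, 1 ≤ k → k ≤ n → 0 < x k := by
  have h1a : 0 < 1 - a := by linarith
  set Rs : ℝ := R / (1 - a) with hRsdef
  have hRsp : 0 < Rs := by rw [hRsdef]; positivity
  set η : ℝ := (1 - a) * δ / (8 * a) with hηdef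
  have hηpos : 0 < η := by rw [hηdef]; positivity
  have hδa' : δ * (1 - a) ≤ a * R := by
    have h := mul_le_mul_of_nonneg_right hδa h1a.le
    have h2 : a * Rs * (1 - a) = a * R := by
      rw [hRsdef]; field_simp
    linarith [h2 ▸ h]
  have hηR : η < R := by
    have h : η * (8 * a) = (1 - a) * δ := by
      rw [hηdef]; field_simp
    nlinarith
  set L : ℝ := Rs - δ / (2 * a) with hLdef
  have hL2a : L * (2 * a) = 2 * a * Rs - δ := by
    rw [hLdef, hRsdef]; field_simp
  have hLpos : 0 < L := by nlinarith
  set K : ℝ := (R - η) / (1 - a) with hKdef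
  have hK0 : 0 ≤ K := by
    rw [hKdef]
    apply div_nonneg (by linarith) h1a.le
  have hKRs : K ≤ Rs := by
    rw [hKdef, hRsdef]; gcongr; linarith
  have hKe : K * (1 - a) = R - η := by
    rw [hKdef]; exact div_mul_cancel₀ _ h1a.ne'
  have hbpos : ∀ i, 0 < bseq a R δ η i := by
    intro i
    induction i with
    | zero => rw [bseq_zero]; positivity
    | succ i ih => rw [bseq_succ]; nlinarith
  have hbK : ∀ i, K * (1 - a ^ i) ≤ bseq a R δ η i := by
    intro i
    induction i with
    | zero =>
      rw [bseq_zero, pow_zero, sub_self, mul_zero]; positivity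
    | succ i ih =>
      rw [bseq_succ]
      have h1 : a * (K * (1 - a ^ i)) ≤ a * bseq a R δ η i :=
        mul_le_mul_of_nonneg_left ih ha.le
      have h2 : K * (1 - a ^ (i + 1)) = a * (K * (1 - a ^ i)) + K * (1 - a) := by
        rw [pow_succ]; ring
      linarith [hKe ▸ h2]
  have hK_ge : Rs - δ / (8 * a) ≤ K := by
    rw [hKdef, le_div_iff₀ h1a]
    have h1 : Rs * (1 - a) = R := by rw [hRsdef]; field_simp
    have h2 : (Rs - δ / (8 * a)) * (1 - a) = R - (1 - a) * δ / (8 * a) := by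
      rw [← h1]; ring
    rw [hηdef]
    exact h2.le
  have hbmL : L ≤ bseq a R δ η m := by
    have h1 : K * a ^ m ≤ Rs * a ^ m :=
      mul_le_mul_of_nonneg_right hKRs (pow_nonneg ha.le m)
    have h2 : Rs * a ^ m ≤ δ / (4 * a) := by
      rw [mul_comm]; rw [hRsdef]; exact hma
    have h3 := hbK m
    have h4 : δ / (8 * a) + δ / (4 * a) ≤ δ / (2 * a) := by
      rw [div_add_div _ _ (by positivity : (8 : ℝ) * a ≠ 0) (by positivity : (4 : ℝ) * a ≠ 0),
        div_le_div_iff₀ (by positivity) (by positivity)]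
      nlinarith [mul_pos ha hδ, sq_nonneg a]
    have h5 : K * (1 - a ^ m) = K - K * a ^ m := by ring
    rw [hLdef]
    linarith
  have key : ∀ k, k ≤ n →
      (if k % (m + 1) = 0 then L else bseq a R δ η (k % (m + 1) - 1)) ≤ x k := by
    intro k
    induction k with
    | zero =>
      intro _
      simpa [Nat.zero_mod] using hx0
    | succ k ih =>
      intro hk1
      have hkn : k < n := Nat.lt_of_succ_le hk1
      have ihk := ih hkn.le
      have hr : k % (m + 1) < m + 1 := Nat.mod_lt _ (Nat.succ_pos m)
      have hdm : (m + 1) * (k / (m + 1)) + k % (m + 1) = k := Nat.div_add_mod k (m + 1)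
      by_cases hr0 : k % (m + 1) = 0
      · have hdvd : (m + 1) ∣ k := Nat.dvd_of_mod_eq_zero hr0
        have hξk := hξ1 k hkn hdvd
        have hxk : L ≤ x k := by simpa [hr0] using ihk
        obtain ⟨q, hq⟩ := hdvd
        have hmod : (k + 1) % (m + 1) = 1 := by
          rw [hq, Nat.mul_add_mod]
          exact Nat.mod_eq_of_lt (by omega)
        rw [hmod]
        simp only [Nat.one_ne_zero, if_false]
        have hb0 : bseq a R δ η (1 - 1) = δ / 2 := rfl
        rw [hb0]
        have haL : a * L = a * Rs - δ / 2 := by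
          rw [hLdef]; field_simp
        have h1 : a * L ≤ a * x k := mul_le_mul_of_nonneg_left hxk ha.le
        rw [hstep k]
        linarith
      · have hrpos : 1 ≤ k % (m + 1) := Nat.one_le_iff_ne_zero.mpr hr0
        have hndvd : ¬ (m + 1) ∣ k := fun hd => hr0 (Nat.eq_zero_of_dvd_of_lt hd |> fun _ => by
          omega)
        have hξk := hξ2 k hkn hndvd
        have hxk : bseq a R δ η (k % (m + 1) - 1) ≤ x k := by
          simpa [hr0] using ihk
        have hstepb : bseq a R δ η (k % (m + 1)) ≤ x (k + 1) := by
          have hsucc : k % (m + 1) - 1 + 1 = k % (m + 1) := Nat.succ_pred_eq_of_pos hrpos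
          have hbs : bseq a R δ η (k % (m + 1)) =
              a * bseq a R δ η (k % (m + 1) - 1) + (R - η) := by
            conv_lhs => rw [← hsucc]
            exact bseq_succ a R δ η _
          have h1 := mul_le_mul_of_nonneg_left hxk ha.le
          rw [hstep k, hbs]
          linarith
        by_cases hrm : k % (m + 1) = m
        · have hk' : k + 1 = (m + 1) * (k / (m + 1)) + (m + 1) := by
            conv_lhs => rw [← hdm]
            rw [hrm]
            exact Nat.add_assoc _ m 1
          have hmod : (k + 1) % (m + 1) = 0 := by
            rw [hk', Nat.mul_add_mod, Nat.mod_self]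
          rw [hmod, if_pos rfl]
          rw [hrm] at hstepb
          linarith
        · have hk' : k + 1 = (m + 1) * (k / (m + 1)) + (k % (m + 1) + 1) := by
            conv_lhs => rw [← hdm]
            exact Nat.add_assoc _ _ 1
          have hmod : (k + 1) % (m + 1) = k % (m + 1) + 1 := by
            rw [hk', Nat.mul_add_mod]
            refine Nat.mod_eq_of_lt (Nat.succ_lt_succ ?_)
            exact lt_of_le_of_ne (Nat.le_of_lt_succ hr) hrm
          rw [hmod]
          have hne : ¬ (k % (m + 1) + 1 = 0) := Nat.succ_ne_zero _
          rw [if_neg hne]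
          simpa using hstepb
  intro k hk1 hkn
  have h := key k hkn
  by_cases h0 : k % (m + 1) = 0
  · rw [if_pos h0] at h; linarith
  · rw [if_neg h0] at h; linarith [hbpos (k % (m + 1) - 1)]

/-- for innovations bounded above with essential supremum `R > 0`,
if `P(ξ_1 ≤ −a R_*) + P(ξ_1 = R) < 1` (with `R_* = R/(1−a)`), then the atom at the
essential supremum satisfies `P(ξ_1 = R) < e^{−λ_a}`. -/
theorem ar1_atom_below_decay_rate
    (P : Measure Ω) [IsProbabilityMeasure P]
    (ξ : ℕ → Ω → ℝ) (hmeas : ∀ n, Measurable (ξ n))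
    (hindep : iIndepFun ξ P)
    (hident : ∀ n, Measure.map (ξ n) P = Measure.map (ξ 0) P)
    (a : ℝ) (ha : a ∈ Set.Ioo (0 : ℝ) 1)
    (R : ℝ) (hR : 0 < R)
    (hbd : ∀ᵐ ω ∂P, ξ 0 ω ≤ R)
    (hess : ∀ ε : ℝ, 0 < ε → 0 < P {ω | R - ε < ξ 0 ω})
    (hneg : 0 < P {ω | ξ 0 ω < 0})
    (hcond : P {ω | ξ 0 ω ≤ -(a * (R / (1 - a)))} + P {ω | ξ 0 ω = R} < 1)
    (lam : ℝ) (hlam : 0 < lam)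
    (hexp : ∀ x ∈ Set.Ioc (0 : ℝ) (R / (1 - a)),
      Tendsto
        (fun n : ℕ => -(1 / (n : ℝ)) * Real.log (P (stayAbove a ξ (fun _ => x) 0 n)).toReal)
        atTop (nhds lam)) :
    (P {ω | ξ 0 ω = R}).toReal < Real.exp (-lam) := by
  obtain ⟨ha0, ha1⟩ := ha
  have h1a : 0 < 1 - a := by linarith
  rcases eq_or_lt_of_le (ENNReal.toReal_nonneg : 0 ≤ (P {ω | ξ 0 ω = R}).toReal) with hp0 | hp
  · rw [← hp0]; exact Real.exp_pos _
  set Rs : ℝ := R / (1 - a) with hRsdef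
  have hRsp : 0 < Rs := by rw [hRsdef]; positivity
  -- Step 1: find δ
  have hUpos : 0 < P (ξ 0 ⁻¹' (Ioi (-(a * Rs)) \ {R})) := by
    rcases (eq_zero_or_pos (P (ξ 0 ⁻¹' (Ioi (-(a * Rs)) \ {R})))).symm with h | h
    · exact h
    have hcover : (univ : Set Ω) ⊆ (ξ 0 ⁻¹' (Ioi (-(a * Rs)) \ {R})) ∪
        ({ω | ξ 0 ω ≤ -(a * Rs)} ∪ {ω | ξ 0 ω = R}) := by
      intro ω _
      by_cases h1 : ξ 0 ω = R
      · exact Or.inr (Or.inr h1)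
      by_cases h2 : ξ 0 ω ≤ -(a * Rs)
      · exact Or.inr (Or.inl h2)
      · exact Or.inl ⟨not_le.mp h2, h1⟩
    have h1 : (1 : ℝ≥0∞) ≤ P (ξ 0 ⁻¹' (Ioi (-(a * Rs)) \ {R})) +
        (P {ω | ξ 0 ω ≤ -(a * Rs)} + P {ω | ξ 0 ω = R}) := by
      calc (1 : ℝ≥0∞) = P univ := (measure_univ (μ := P)).symm
        _ ≤ P ((ξ 0 ⁻¹' (Ioi (-(a * Rs)) \ {R})) ∪
            ({ω | ξ 0 ω ≤ -(a * Rs)} ∪ {ω | ξ 0 ω = R})) := measure_mono hcover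
        _ ≤ _ := le_trans (measure_union_le _ _)
            (by gcongr; exact measure_union_le _ _)
    rw [h, zero_add] at h1
    exact absurd (lt_of_le_of_lt h1 hcond) (lt_irrefl _)
  obtain ⟨j, hj⟩ : ∃ j : ℕ, 0 < P (ξ 0 ⁻¹' (Ici (-(a * Rs) + 1 / ((j : ℝ) + 1)) \ {R})) := by
    apply exists_measure_pos_of_not_measure_iUnion_null
    intro h
    refine absurd (le_antisymm ?_ (zero_le)) (ne_of_gt hUpos)
    rw [← h]
    apply measure_mono
    intro ω hω
    obtain ⟨h1, h2⟩ := hω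
    obtain ⟨j, hj⟩ := exists_nat_one_div_lt (show (0:ℝ) < ξ 0 ω - (-(a * Rs)) by
      simp only [mem_Ioi] at h1; linarith)
    exact mem_iUnion.mpr ⟨j, ⟨by simp only [mem_Ici]; linarith, h2⟩⟩
  set δ : ℝ := min (1 / ((j : ℝ) + 1)) (a * Rs) with hδdef
  have hδpos : 0 < δ := lt_min (by positivity) (by positivity)
  have hδa : δ ≤ a * Rs := min_le_right _ _
  have hPE : 0 < P (ξ 0 ⁻¹' (Ici (-(a * Rs) + δ) \ {R})) := by
    refine lt_of_lt_of_le hj (measure_mono (preimage_mono (diff_subset_diff_left ?_)))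
    exact Ici_subset_Ici.mpr (by linarith [min_le_left (1 / ((j : ℝ) + 1)) (a * Rs)])
  -- Step 2: choose η and m
  set η : ℝ := (1 - a) * δ / (8 * a) with hηdef
  have hηpos : 0 < η := by rw [hηdef]; positivity
  obtain ⟨m₀, hm₀⟩ := exists_pow_lt_of_lt_one
    (show (0:ℝ) < δ / (4 * a * Rs) by positivity) ha1
  set m : ℕ := m₀ + 1 with hmdef
  have hm : 1 ≤ m := by rw [hmdef]; omega
  have hma : a ^ m * Rs ≤ δ / (4 * a) := by
    have h1 : a ^ m ≤ a ^ m₀ := by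
      rw [hmdef, pow_succ]
      exact mul_le_of_le_one_right (pow_pos ha0 m₀).le ha1.le
    have h2 : a ^ m * Rs ≤ a ^ m₀ * Rs := mul_le_mul_of_nonneg_right h1 hRsp.le
    have h3 : a ^ m₀ * Rs < (δ / (4 * a * Rs)) * Rs := mul_lt_mul_of_pos_right hm₀ hRsp
    have h4 : (δ / (4 * a * Rs)) * Rs = δ / (4 * a) := by
      field_simp
    linarith
  -- Step 3: per-coordinate sets
  set F : Set ℝ := {R} ∪ (Ici (-(a * Rs) + δ) \ {R}) with hFdef
  set G : Set ℝ := Ioi (R - η) with hGdef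
  have hFmeas : MeasurableSet F := ((measurableSet_singleton R)).union
    (measurableSet_Ici.diff (measurableSet_singleton R))
  have hGmeas : MeasurableSet G := measurableSet_Ioi
  set Cs : ℕ → Set ℝ := fun k => if (m + 1) ∣ k then F else G with hCsdef
  have hCsmeas : ∀ k, MeasurableSet (Cs k) := by
    intro k
    rw [hCsdef]
    by_cases h : (m + 1) ∣ k
    · simp only [if_pos h]; exact hFmeas
    · simp only [if_neg h]; exact hGmeas
  have hmap : ∀ (k : ℕ) (s : Set ℝ), MeasurableSet s → P (ξ k ⁻¹' s) = P (ξ 0 ⁻¹' s) := by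
    intro k s hs
    rw [← Measure.map_apply (hmeas k) hs, hident k, Measure.map_apply (hmeas 0) hs]
  -- Step 4: probability of the good event
  have hevent : ∀ N : ℕ,
      P (⋂ k ∈ Finset.range (N * (m + 1)), ξ k ⁻¹' Cs k) =
        (P (ξ 0 ⁻¹' F) * P (ξ 0 ⁻¹' G) ^ m) ^ N := by
    intro N
    rw [hindep.measure_inter_preimage_eq_mul (Finset.range (N * (m + 1)))
      (fun k _ => hCsmeas k)]
    rw [Finset.prod_congr rfl (fun k _ => hmap k (Cs k) (hCsmeas k))]
    induction N with
    | zero => simp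
    | succ N ih =>
      have hd : (m + 1) ∣ N * (m + 1) := Dvd.intro_left N rfl
      have hinner : ∏ i ∈ Finset.range (m + 1), P (ξ 0 ⁻¹' Cs (N * (m + 1) + i)) =
          P (ξ 0 ⁻¹' F) * P (ξ 0 ⁻¹' G) ^ m := by
        rw [Finset.prod_range_succ']
        have hC0 : Cs (N * (m + 1) + 0) = F := by
          rw [hCsdef]; simp only [Nat.add_zero]; exact if_pos hd
        have hi : ∀ i ∈ Finset.range m,
            P (ξ 0 ⁻¹' Cs (N * (m + 1) + (i + 1))) = P (ξ 0 ⁻¹' G) := by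
          intro i hi
          have hnd : ¬ (m + 1) ∣ (N * (m + 1) + (i + 1)) := by
            intro hdd
            have h5 := (Nat.dvd_add_right hd).mp hdd
            have h6 := Nat.le_of_dvd (Nat.succ_pos i) h5
            have h7 := Finset.mem_range.mp hi
            omega
          have hCi : Cs (N * (m + 1) + (i + 1)) = G := by
            rw [hCsdef]; exact if_neg hnd
          rw [hCi]
        rw [Finset.prod_congr rfl hi, Finset.prod_const, Finset.card_range, hC0]
        exact mul_comm _ _
      rw [show (N + 1) * (m + 1) = N * (m + 1) + (m + 1) by ring,
        Finset.prod_range_add, ih, hinner,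
        pow_succ (P (ξ 0 ⁻¹' F) * P (ξ 0 ⁻¹' G) ^ m) N]
  -- Step 5: inclusion into stayAbove
  have hincl : ∀ N : ℕ,
      (⋂ k ∈ Finset.range (N * (m + 1)), ξ k ⁻¹' Cs k) ⊆
        stayAbove a ξ (fun _ => Rs) 0 (N * (m + 1)) := by
    intro N ω hω k hk1 hk2
    have hmem : ∀ k, k < N * (m + 1) → ξ k ω ∈ Cs k := by
      intro k hk
      exact Set.mem_iInter₂.mp hω k (Finset.mem_range.mpr hk)
    refine traj ha0 ha1 hR hδpos (by rw [← hRsdef]; exact hδa)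
      (by rw [← hRsdef]; exact hma) hm
      (fun k => X a ξ (fun _ => Rs) k ω) ?_ (fun k => ξ k ω) (N * (m + 1)) ?_ ?_ ?_ k hk1 hk2
    · show R / (1 - a) - δ / (2 * a) ≤ Rs
      rw [← hRsdef]
      have : 0 < δ / (2 * a) := by positivity
      linarith
    · intro k; rfl
    · intro k hk hdvd
      show -(a * (R / (1 - a))) + δ ≤ ξ k ω
      have h := hmem k hk
      rw [hCsdef] at h
      simp only [if_pos hdvd] at h
      rw [hFdef] at h
      rw [← hRsdef]
      rcases h with h | h
      · have hRR : ξ k ω = R := h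
        rw [hRR]
        have : -(a * Rs) + δ ≤ 0 := by linarith
        linarith
      · exact h.1
    · intro k hk hndvd
      show R - (1 - a) * δ / (8 * a) ≤ ξ k ω
      have h := hmem k hk
      rw [hCsdef] at h
      simp only [if_neg hndvd] at h
      rw [hGdef] at h
      rw [← hηdef]
      exact le_of_lt h
  -- Step 6: real-valued bound
  set p : ℝ := (P {ω | ξ 0 ω = R}).toReal with hpdef
  set q : ℝ := (P (ξ 0 ⁻¹' (Ici (-(a * Rs) + δ) \ {R}))).toReal with hqdef
  set ρ : ℝ := (P (ξ 0 ⁻¹' G)).toReal with hρdef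
  have hq : 0 < q := by
    rw [hqdef]
    exact ENNReal.toReal_pos (ne_of_gt hPE) (measure_ne_top P _)
  have hPFsplit : P (ξ 0 ⁻¹' F) =
      P {ω | ξ 0 ω = R} + P (ξ 0 ⁻¹' (Ici (-(a * Rs) + δ) \ {R})) := by
    rw [hFdef, preimage_union]
    rw [measure_union ?_ ((hmeas 0) (measurableSet_Ici.diff (measurableSet_singleton R)))]
    · rfl
    · rw [Set.disjoint_left]
      intro ω h1 h2
      exact h2.2 h1
  have hPFr : (P (ξ 0 ⁻¹' F)).toReal = p + q := by
    rw [hPFsplit, ENNReal.toReal_add (measure_ne_top P _) (measure_ne_top P _),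
      hpdef, hqdef]
  have hρp : p ≤ ρ := by
    rw [hρdef, hpdef]
    apply ENNReal.toReal_mono (measure_ne_top P _)
    apply measure_mono
    intro ω h
    have hh : ξ 0 ω = R := h
    rw [hGdef]
    simp only [mem_preimage, mem_Ioi]
    linarith [hh.ge]
  have hρpos : 0 < ρ := lt_of_lt_of_le hp hρp
  set s : ℝ := (p + q) * ρ ^ m with hsdef
  have hspos : 0 < s := by
    rw [hsdef]
    have := pow_pos hρpos m
    nlinarith
  have hsbound : ∀ N : ℕ,
      s ^ N ≤ (P (stayAbove a ξ (fun _ => Rs) 0 (N * (m + 1)))).toReal := by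
    intro N
    have h1 : P (⋂ k ∈ Finset.range (N * (m + 1)), ξ k ⁻¹' Cs k) ≤
        P (stayAbove a ξ (fun _ => Rs) 0 (N * (m + 1))) := measure_mono (hincl N)
    have h2 := ENNReal.toReal_mono (measure_ne_top P _) h1
    rw [hevent N, ENNReal.toReal_pow, ENNReal.toReal_mul, ENNReal.toReal_pow, hPFr] at h2
    rw [hsdef, hρdef]
    exact h2
  -- Step 7: pass to the limit
  have hf := hexp Rs ⟨hRsp, le_rfl⟩
  have hcomp : Tendsto (fun N : ℕ => (N + 1) * (m + 1)) atTop atTop := by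
    apply tendsto_atTop_atTop.mpr
    intro b
    refine ⟨b, fun n hn => ?_⟩
    calc b ≤ n := hn
      _ ≤ n + 1 := Nat.le_succ n
      _ ≤ (n + 1) * (m + 1) := Nat.le_mul_of_pos_right _ (Nat.succ_pos m)
  have hsub : Tendsto (fun N : ℕ =>
      -(1 / (((N + 1) * (m + 1) : ℕ) : ℝ)) *
        Real.log (P (stayAbove a ξ (fun _ => Rs) 0 ((N + 1) * (m + 1)))).toReal)
      atTop (nhds lam) := hf.comp hcomp
  have hbound : ∀ N : ℕ,
      -(1 / (((N + 1) * (m + 1) : ℕ) : ℝ)) *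
        Real.log (P (stayAbove a ξ (fun _ => Rs) 0 ((N + 1) * (m + 1)))).toReal ≤
      -(1 / ((m : ℝ) + 1)) * Real.log s := by
    intro N
    have hsn := hsbound (N + 1)
    have hlog : ((N : ℝ) + 1) * Real.log s ≤
        Real.log (P (stayAbove a ξ (fun _ => Rs) 0 ((N + 1) * (m + 1)))).toReal := by
      have h := Real.log_le_log (pow_pos hspos (N + 1)) hsn
      rw [Real.log_pow] at h
      push_cast at h
      linarith
    have hcast : (((N + 1) * (m + 1) : ℕ) : ℝ) = ((N : ℝ) + 1) * ((m : ℝ) + 1) := by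
      push_cast; ring
    have hnonpos : -(1 / (((N + 1) * (m + 1) : ℕ) : ℝ)) ≤ 0 := by
      rw [hcast]
      have h : (0:ℝ) < ((N : ℝ) + 1) * ((m : ℝ) + 1) := by positivity
      have := le_of_lt (one_div_pos.mpr h)
      linarith
    have h1 := mul_le_mul_of_nonpos_left hlog hnonpos
    have h2 : -(1 / (((N + 1) * (m + 1) : ℕ) : ℝ)) * (((N : ℝ) + 1) * Real.log s) =
        -(1 / ((m : ℝ) + 1)) * Real.log s := by
      rw [hcast]
      have hN : ((N : ℝ) + 1) ≠ 0 := by positivity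
      have hM : ((m : ℝ) + 1) ≠ 0 := by positivity
      field_simp
    linarith
  have hlamle : lam ≤ -(1 / ((m : ℝ) + 1)) * Real.log s :=
    le_of_tendsto hsub (Eventually.of_forall hbound)
  have hm1 : (0:ℝ) < (m : ℝ) + 1 := by positivity
  have hlogle : Real.log s ≤ -(lam * ((m : ℝ) + 1)) := by
    have h2 : -(1 / ((m : ℝ) + 1)) * Real.log s = (- Real.log s) / ((m : ℝ) + 1) := by ring
    rw [h2] at hlamle
    have h3 := (le_div_iff₀ hm1).mp hlamle
    linarith
  have hsle : s ≤ Real.exp (-(lam * ((m : ℝ) + 1))) := by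
    rw [← Real.exp_log hspos]
    exact Real.exp_le_exp.mpr hlogle
  have hpows : p ^ (m + 1) < s := by
    have h1 : p ^ m ≤ ρ ^ m := pow_le_pow_left₀ hp.le hρp m
    have h2 : (p + q) * p ^ m ≤ (p + q) * ρ ^ m :=
      mul_le_mul_of_nonneg_left h1 (by linarith)
    have h3 : p * p ^ m < (p + q) * p ^ m :=
      mul_lt_mul_of_pos_right (by linarith) (pow_pos hp m)
    have h4 : p ^ (m + 1) = p * p ^ m := by ring
    rw [hsdef]
    linarith
  have hexpand : Real.exp (-(lam * ((m : ℝ) + 1))) = (Real.exp (-lam)) ^ (m + 1) := by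
    rw [← Real.exp_nat_mul]
    congr 1
    push_cast
    ring
  by_contra hcon
  push_neg at hcon
  have hfin := pow_le_pow_left₀ (Real.exp_nonneg (-lam)) hcon (m + 1)
  rw [← hexpand] at hfin
  linarith


end AR1
end
end
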